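/- arXiv:math/0407205 — 6 statements merged into one kernel-verified Lean document; each statement's English description precedes it below -/
import Mathlib

section
/- For every 0 ≤ i < n and every m ≥ 1, the elementary symmetric polynomial e_m(x_{i+1},…,x_n) in the last n−i variables lies in the ideal of P_n generated by {x_1,…,x_i} ∪ 𝔫_n. Consequently x_{i+1}^{n−i} lies in the ideal of P_n generated by {x_1,…,x_i} ∪ 𝔫_n. -/
open MvPolynomial

lemma stmt5_prod_neg {R ι : Type*} [CommRing R] (A : Finset ι) (f : ι → R) :
    ∏ l ∈ A, -f l = (-1) ^ A.card * ∏ l ∈ A, f l := by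
  rw [← Finset.prod_const, ← Finset.prod_mul_distrib]
  simp [neg_one_mul]

/-- Key lemma: each elementary symmetric polynomial in the shifted variables with
indices `≥ i` lies in the ideal. -/
lemma stmt5_key (k : Type*) [Field k] (n : ℕ) (i : ℕ) (a : k) (m : ℕ) (hm : 1 ≤ m) :
    (∑ s ∈ Finset.powersetCard m (Finset.univ.filter fun l : Fin n => i ≤ (l : ℕ)),
        ∏ l ∈ s, (X l - C a)) ∈
      Ideal.span ({q | ∃ l : Fin n, (l : ℕ) < i ∧ q = X l - C a} ∪
        {p : MvPolynomial (Fin n) k |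
          p.IsSymmetric ∧ p ∈ Ideal.span (Set.range fun l : Fin n => X l - C a)}) := by
  classical
  set N : Ideal (MvPolynomial (Fin n) k) :=
    Ideal.span ({q | ∃ l : Fin n, (l : ℕ) < i ∧ q = X l - C a} ∪
      {p : MvPolynomial (Fin n) k |
        p.IsSymmetric ∧ p ∈ Ideal.span (Set.range fun l : Fin n => X l - C a)}) with hN
  set S : Finset (Fin n) := Finset.univ.filter fun l : Fin n => i ≤ (l : ℕ) with hS
  -- the full elementary symmetric polynomial in the shifted variables
  set p : MvPolynomial (Fin n) k :=
    ∑ A ∈ Finset.powersetCard m (Finset.univ : Finset (Fin n)), ∏ l ∈ A, (X l - C a) with hp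
  -- a product over a set containing an index in an ideal lies in the ideal
  have hprod : ∀ (J : Ideal (MvPolynomial (Fin n) k)) (A : Finset (Fin n)) (j : Fin n),
      j ∈ A → (X j - C a : MvPolynomial (Fin n) k) ∈ J → (∏ l ∈ A, (X l - C a)) ∈ J := by
    intro J A j hj hjJ
    rw [← Finset.mul_prod_erase A _ hj]
    exact J.mul_mem_right _ hjJ
  -- `p` is `aeval` of the elementary symmetric polynomial
  have hpe : p = aeval (fun l : Fin n => (X l - C a : MvPolynomial (Fin n) k))
      (esymm (Fin n) k m) := by
    simp [hp, esymm, map_sum, map_prod]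
  -- `p` is symmetric
  have hpsym : p.IsSymmetric := by
    intro σ
    rw [hpe, ← AlgHom.comp_apply, comp_aeval]
    have h1 : (fun l : Fin n =>
        rename σ ((X l - C a : MvPolynomial (Fin n) k)))
        = (fun l : Fin n => (X l - C a : MvPolynomial (Fin n) k)) ∘ σ := by
      funext l
      simp [map_sub, rename_X]
    rw [h1, ← aeval_rename, esymm_isSymmetric (Fin n) k m σ]
  -- `p` lies in the ideal generated by the shifted variables
  have hpmem : p ∈ Ideal.span (Set.range fun l : Fin n => (X l - C a : MvPolynomial (Fin n) k)) := by
    rw [hp]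
    refine Ideal.sum_mem _ fun A hA => ?_
    rw [Finset.mem_powersetCard] at hA
    have hne : A.Nonempty := by
      rw [← Finset.card_pos, hA.2]; omega
    obtain ⟨j, hj⟩ := hne
    exact hprod _ A j hj (Ideal.subset_span ⟨j, rfl⟩)
  have hpN : p ∈ N := Ideal.subset_span (Or.inr ⟨hpsym, hpmem⟩)
  -- split `p` into the sum over subsets of `S` and the rest
  have hfil : (Finset.powersetCard m (Finset.univ : Finset (Fin n))).filter (· ⊆ S)
      = Finset.powersetCard m S := by
    ext A
    simp only [Finset.mem_filter, Finset.mem_powersetCard, Finset.subset_univ, true_and]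
    tauto
  have hbad : (∑ A ∈ (Finset.powersetCard m (Finset.univ : Finset (Fin n))).filter
      (fun A => ¬ A ⊆ S), ∏ l ∈ A, (X l - C a : MvPolynomial (Fin n) k)) ∈ N := by
    refine Ideal.sum_mem _ fun A hA => ?_
    rw [Finset.mem_filter] at hA
    obtain ⟨j, hjA, hjS⟩ := Finset.not_subset.mp hA.2
    have hji : (j : ℕ) < i := by
      by_contra h
      exact hjS (by simp [hS, Nat.le_of_not_lt h])
    exact hprod _ A j hjA (Ideal.subset_span (Or.inl ⟨j, hji, rfl⟩))
  have hsplit : (∑ A ∈ Finset.powersetCard m S, ∏ l ∈ A, (X l - C a : MvPolynomial (Fin n) k))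
      = p - ∑ A ∈ (Finset.powersetCard m (Finset.univ : Finset (Fin n))).filter
          (fun A => ¬ A ⊆ S), ∏ l ∈ A, (X l - C a) := by
    rw [hp, ← Finset.sum_filter_add_sum_filter_not
      (Finset.powersetCard m (Finset.univ : Finset (Fin n))) (· ⊆ S), hfil]
    ring
  rw [hsplit]
  exact Ideal.sub_mem _ hpN hbad

/-- For `0 ≤ i < n` and `m ≥ 1`, the elementary symmetric polynomial
`e_m(x_{i+1},…,x_n)` in the last `n - i` shifted variables `x_l = X_l - a` lies in the
ideal of `P_n` generated by `{x_1,…,x_i} ∪ 𝔫_n`, where `𝔫_n` is the set of symmetric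
polynomials lying in the ideal generated by `x_1,…,x_n`.  Consequently `x_{i+1}^{n-i}`
lies in that ideal. -/
theorem stmt5 (k : Type*) [Field k] (n : ℕ) (hn : 1 ≤ n) (i : ℕ) (hi : i < n) (a : k) :
    (∀ m : ℕ, 1 ≤ m →
      (∑ s ∈ Finset.powersetCard m (Finset.univ.filter fun l : Fin n => i ≤ (l : ℕ)),
          ∏ l ∈ s, (X l - C a)) ∈
        Ideal.span ({q | ∃ l : Fin n, (l : ℕ) < i ∧ q = X l - C a} ∪
          {p : MvPolynomial (Fin n) k |
            p.IsSymmetric ∧ p ∈ Ideal.span (Set.range fun l : Fin n => X l - C a)})) ∧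
    (X (⟨i, hi⟩ : Fin n) - C a) ^ (n - i) ∈
      Ideal.span ({q | ∃ l : Fin n, (l : ℕ) < i ∧ q = X l - C a} ∪
        {p : MvPolynomial (Fin n) k |
          p.IsSymmetric ∧ p ∈ Ideal.span (Set.range fun l : Fin n => X l - C a)}) := by
  classical
  refine ⟨fun m hm => stmt5_key k n i a m hm, ?_⟩
  set N : Ideal (MvPolynomial (Fin n) k) :=
    Ideal.span ({q | ∃ l : Fin n, (l : ℕ) < i ∧ q = X l - C a} ∪
      {p : MvPolynomial (Fin n) k |
        p.IsSymmetric ∧ p ∈ Ideal.span (Set.range fun l : Fin n => X l - C a)}) with hN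
  set S : Finset (Fin n) := Finset.univ.filter fun l : Fin n => i ≤ (l : ℕ) with hS
  set i0 : Fin n := ⟨i, hi⟩ with hi0
  have hi0S : i0 ∈ S := by simp [hS, hi0]
  have hScard : S.card = n - i := by
    have : S = Finset.Ici i0 := by
      ext l
      simp [hS, Finset.mem_Ici, hi0, Fin.le_def]
    rw [this, Fin.card_Ici]
  set x : Fin n → MvPolynomial (Fin n) k := fun l => X l - C a with hx
  -- the vanishing product
  have hzero : (0 : MvPolynomial (Fin n) k) = ∏ l ∈ S, (-(x l) + x i0) := by
    rw [Finset.prod_eq_zero hi0S (by ring)]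
  rw [Finset.prod_add] at hzero
  -- rewrite each summand
  have hterm : ∀ A ∈ S.powerset,
      (∏ l ∈ A, (-(x l))) * (∏ _l ∈ S \ A, x i0)
        = (-1) ^ A.card * (∏ l ∈ A, x l) * x i0 ^ (S.card - A.card) := by
    intro A hA
    rw [Finset.mem_powerset] at hA
    rw [Finset.prod_const, Finset.card_sdiff_of_subset hA, stmt5_prod_neg]
  rw [Finset.sum_congr rfl hterm] at hzero
  -- split the sum over powerset by cardinality
  rw [Finset.powerset_card_disjiUnion] at hzero
  erw [Finset.sum_disjiUnion] at hzero
  rw [Finset.sum_range_succ'] at hzero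
  -- the `j = 0` term is `x i0 ^ S.card`
  have h0term : (∑ A ∈ Finset.powersetCard 0 S,
      (-1 : MvPolynomial (Fin n) k) ^ A.card * (∏ l ∈ A, x l) * x i0 ^ (S.card - A.card))
      = x i0 ^ S.card := by
    simp [Finset.powersetCard_zero]
  rw [h0term] at hzero
  have hmain : x i0 ^ S.card
      = -∑ j ∈ Finset.range S.card, ∑ A ∈ Finset.powersetCard (j + 1) S,
          (-1 : MvPolynomial (Fin n) k) ^ A.card * (∏ l ∈ A, x l) * x i0 ^ (S.card - A.card) := by
    linear_combination -hzero
  have : x i0 ^ S.card ∈ N := by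
    rw [hmain]
    refine neg_mem (Ideal.sum_mem _ fun j _ => ?_)
    have hcards : ∀ A ∈ Finset.powersetCard (j + 1) S, A.card = j + 1 := fun A hA =>
      (Finset.mem_powersetCard.mp hA).2
    have heq : (∑ A ∈ Finset.powersetCard (j + 1) S,
        (-1 : MvPolynomial (Fin n) k) ^ A.card * (∏ l ∈ A, x l) * x i0 ^ (S.card - A.card))
        = ((-1) ^ (j + 1) * x i0 ^ (S.card - (j + 1))) *
            ∑ A ∈ Finset.powersetCard (j + 1) S, ∏ l ∈ A, x l := by
      rw [Finset.mul_sum]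
      refine Finset.sum_congr rfl fun A hA => ?_
      rw [hcards A hA]; ring
    rw [heq]
    exact Ideal.mul_mem_left _ _ (stmt5_key k n i a (j + 1) (Nat.le_add_left 1 j))
  rwa [hScard] at this
end

section
/- Assume V is a direct sum of subspaces, each stable under e and f, each of dimension d over ℚ, and each simple (i.e. having no subspace stable under both e and f other than 0 and itself). Let v ∈ V be nonzero with h v = λ v for some scalar λ. Then: (i) λ ∈ ℤ and d(v) = d; (ii) d = 1 + 2h_+(v) + λ and d = 1 + 2h_−(v) − λ; (iii) for every 0 ≤ j ≤ h_+(v), f^j e^j v = (j!)² · C(h_−(v)+j, j) · C(h_+(v), j) · v; and (iv) for every 0 ≤ j ≤ h_−(v), e^j f^j v = (j!)² · C(h_+(v)+j, j) · C(h_−(v), j) · v, where C(·,·) denotes binomial coefficients. -/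
/-- `h_+(v)` (resp. `h_-(v)` when applied to `f`): the largest `i` with `e^i v ≠ 0`. -/
noncomputable def hPlus {V : Type*} [AddCommGroup V] [Module ℚ V]
    (e : Module.End ℚ V) (v : V) : ℕ :=
  sSup {i : ℕ | (e ^ i) v ≠ 0}

open scoped DirectSum

section core
variable {V : Type*} [AddCommGroup V] [Module ℚ V] (e f : Module.End ℚ V)

lemma swap_rel (hrel2 : (e * f - f * e) * f - f * (e * f - f * e) = (-2 : ℚ) • f) :
    (f * e - e * f) * f - f * (f * e - e * f) = (2 : ℚ) • f := by
  have h : (f * e - e * f) * f - f * (f * e - e * f)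
      = -((e * f - f * e) * f - f * (e * f - f * e)) := by noncomm_ring
  rw [h, hrel2]; module

lemma h_neg_apply (x : V) : (f * e - e * f) x = -((e * f - f * e) x) := by
  simp [LinearMap.sub_apply, Module.End.mul_apply]

lemma h_e_apply (hrel1 : (e * f - f * e) * e - e * (e * f - f * e) = (2 : ℚ) • e) (x : V) :
    (e * f - f * e) (e x) = e ((e * f - f * e) x) + (2 : ℚ) • e x := by
  have h2 := congrArg (fun g : Module.End ℚ V => g x) hrel1
  simp only [LinearMap.sub_apply, Module.End.mul_apply, LinearMap.smul_apply] at h2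
  have h3 : e (f (e x)) - f (e (e x)) = e (e (f x) - f (e x)) + (2 : ℚ) • e x := by
    rw [← h2]; abel
  simpa [LinearMap.sub_apply, Module.End.mul_apply, map_sub] using h3

lemma h_string (hrel1 : (e * f - f * e) * e - e * (e * f - f * e) = (2 : ℚ) • e)
    {u : V} {μ : ℚ} (hu : (e * f - f * e) u = μ • u) (k : ℕ) :
    (e * f - f * e) ((e ^ k) u) = (μ + 2 * k) • (e ^ k) u := by
  induction k with
  | zero => simpa using hu
  | succ k ih =>
    rw [pow_succ', Module.End.mul_apply, h_e_apply e f hrel1, ih, map_smul, ← add_smul]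
    congr 1
    push_cast
    ring

lemma f_string (hrel2 : (e * f - f * e) * f - f * (e * f - f * e) = (-2 : ℚ) • f)
    {u : V} {μ : ℚ} (hu : (e * f - f * e) u = μ • u) (k : ℕ) :
    (e * f - f * e) ((f ^ k) u) = (μ - 2 * k) • (f ^ k) u := by
  have hu' : (f * e - e * f) u = (-μ) • u := by rw [h_neg_apply, hu, neg_smul]
  have := h_string f e (swap_rel e f hrel2) hu' k
  rw [h_neg_apply, neg_eq_iff_eq_neg] at this
  rw [this, ← neg_smul]
  congr 1
  ring

lemma lowering (hrel2 : (e * f - f * e) * f - f * (e * f - f * e) = (-2 : ℚ) • f)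
    {w : V} {μ : ℚ} (hw0 : e w = 0) (hw : (e * f - f * e) w = μ • w) (m : ℕ) :
    e ((f ^ (m + 1)) w) = ((m + 1) * (μ - m)) • (f ^ m) w := by
  induction m with
  | zero =>
    have : e (f w) = f (e w) + (e * f - f * e) w := by
      simp [LinearMap.sub_apply, Module.End.mul_apply]
    simp [this, hw0, hw]
  | succ m ih =>
    have step : e (f ((f ^ (m + 1)) w)) = f (e ((f ^ (m + 1)) w))
        + (e * f - f * e) ((f ^ (m + 1)) w) := by
      simp [LinearMap.sub_apply, Module.End.mul_apply]
    rw [pow_succ', Module.End.mul_apply, step, ih, map_smul,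
      f_string e f hrel2 hw (m + 1), ← Module.End.mul_apply f (f ^ m), ← pow_succ',
      ← add_smul]
    congr 1
    push_cast
    ring

lemma pow_split (g : Module.End ℚ V) (a b : ℕ) (x : V) :
    (g ^ (a + b)) x = (g ^ a) ((g ^ b) x) := by
  rw [pow_add, Module.End.mul_apply]

lemma swap_rel2 (hrel1 : (e * f - f * e) * e - e * (e * f - f * e) = (2 : ℚ) • e) :
    (f * e - e * f) * e - e * (f * e - e * f) = (-2 : ℚ) • e := by
  have h : (f * e - e * f) * e - e * (f * e - e * f)
      = -((e * f - f * e) * e - e * (e * f - f * e)) := by noncomm_ring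
  rw [h, hrel1]; module

end core

section core
variable {V : Type*} [AddCommGroup V] [Module ℚ V] (e f : Module.End ℚ V)

lemma string_pow (hrel2 : (e * f - f * e) * f - f * (e * f - f * e) = (-2 : ℚ) • f)
    {w : V} {n : ℕ} (hw0 : e w = 0) (hw : (e * f - f * e) w = (n : ℚ) • w) :
    ∀ j m : ℕ, j ≤ m → m ≤ n → (e ^ j) ((f ^ m) w) =
      ((m.descFactorial j * (n - m + j).descFactorial j : ℕ) : ℚ) • (f ^ (m - j)) w := by
  intro j
  induction j with
  | zero => intro m _ _; simp
  | succ j ih =>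
    intro m hjm hmn
    obtain ⟨m', rfl⟩ : ∃ m', m = m' + 1 := ⟨m - 1, by omega⟩
    obtain ⟨r, hr⟩ : ∃ r, n = m' + 1 + r := ⟨n - (m' + 1), by omega⟩
    rw [pow_succ, Module.End.mul_apply, lowering e f hrel2 hw0 hw m', map_smul,
      ih m' (by omega) (by omega), smul_smul]
    have h1 : m' + 1 - (j + 1) = m' - j := by omega
    have h2 : m' + 1 + r - (m' + 1) + (j + 1) = r + 1 + j := by omega
    have h3 : m' + 1 + r - m' + j = r + 1 + j := by omega
    rw [h1, hr, h2, h3]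
    congr 1
    have h4 : (m' + 1).descFactorial (j + 1) = (m' + 1) * m'.descFactorial j :=
      Nat.succ_descFactorial_succ m' j
    have h5 : (r + 1 + j).descFactorial (j + 1) = (r + 1) * (r + 1 + j).descFactorial j := by
      rw [Nat.descFactorial_succ]
      congr 1
      omega
    rw [h4, h5]
    push_cast
    ring

lemma stab_pow {W : Submodule ℚ V} (hW : ∀ x ∈ W, e x ∈ W) (k : ℕ) :
    ∀ x ∈ W, (e ^ k) x ∈ W := by
  induction k with
  | zero => simp
  | succ k ih =>
    intro x hx
    rw [pow_succ', Module.End.mul_apply]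
    exact hW _ (ih x hx)

lemma bdd (hrel1 : (e * f - f * e) * e - e * (e * f - f * e) = (2 : ℚ) • e)
    {W : Submodule ℚ V} (hW : ∀ x ∈ W, e x ∈ W) (d : ℕ) (hdim : Module.rank ℚ W = d)
    {u : V} (hu : u ∈ W) {μ : ℚ} (hμ : (e * f - f * e) u = μ • u)
    (N : ℕ) (hN : ∀ k, k ≤ N → (e ^ k) u ≠ 0) : N < d := by
  set H := e * f - f * e with hH
  have heig : ∀ k : Fin (N + 1), H.HasEigenvector (μ + 2 * (k : ℕ)) ((e ^ (k : ℕ)) u) := by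
    intro k
    rw [Module.End.hasEigenvector_iff, Module.End.mem_eigenspace_iff]
    exact ⟨h_string e f hrel1 hμ k, hN k (by omega)⟩
  have hinj : Function.Injective (fun k : Fin (N + 1) => μ + 2 * ((k : ℕ) : ℚ)) := by
    intro a b hab
    simp only at hab
    have : ((a : ℕ) : ℚ) = (b : ℕ) := by linarith
    exact Fin.ext (by exact_mod_cast this)
  have hli : LinearIndependent ℚ (fun k : Fin (N + 1) => (e ^ (k : ℕ)) u) :=
    Module.End.eigenvectors_linearIndependent' H _ hinj _ heig
  have hliW : LinearIndependent ℚ (fun k : Fin (N + 1) =>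
      (⟨(e ^ (k : ℕ)) u, stab_pow e hW _ u hu⟩ : W)) :=
    LinearIndependent.of_comp W.subtype (by exact hli)
  have := hliW.cardinal_lift_le_rank
  rw [hdim, Cardinal.mk_fin, Cardinal.lift_natCast, Cardinal.lift_natCast,
    Nat.cast_le] at this
  omega

lemma key
    (hrel1 : (e * f - f * e) * e - e * (e * f - f * e) = (2 : ℚ) • e)
    (hrel2 : (e * f - f * e) * f - f * (e * f - f * e) = (-2 : ℚ) • f)
    (W : Submodule ℚ V) (d : ℕ)
    (hE : ∀ x ∈ W, e x ∈ W) (hF : ∀ x ∈ W, f x ∈ W)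
    (hdim : Module.rank ℚ W = d)
    (hsimple : ∀ U : Submodule ℚ V, U ≤ W → (∀ x ∈ U, e x ∈ U) → (∀ x ∈ U, f x ∈ U) →
      U = ⊥ ∨ U = W)
    {u : V} (hu : u ∈ W) (hu0 : u ≠ 0) {lam : ℚ} (hlam : (e * f - f * e) u = lam • u) :
    ∃ p q : ℕ, d = p + q + 1 ∧ lam = (q : ℚ) - (p : ℚ) ∧ (e ^ p) u ≠ 0 ∧ (e ^ (p + 1)) u = 0 ∧
      ∀ j ≤ p, (f ^ j * e ^ j) u =
        ((j.factorial ^ 2 * (q + j).choose j * p.choose j : ℕ) : ℚ) • u := by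
  classical
  have hex : ∃ k, (e ^ k) u = 0 := by
    by_contra hc
    push_neg at hc
    exact absurd (bdd e f hrel1 hE d hdim hu hlam d (fun k _ => hc k)) (lt_irrefl d)
  have hN0 : Nat.find hex ≠ 0 := by
    intro h
    apply hu0
    simpa [h] using Nat.find_spec hex
  obtain ⟨p, hp⟩ : ∃ p, Nat.find hex = p + 1 := ⟨Nat.find hex - 1, by omega⟩
  have hp1 : (e ^ p) u ≠ 0 := Nat.find_min hex (by omega)
  have hp2 : (e ^ (p + 1)) u = 0 := hp ▸ Nat.find_spec hex
  have hek : ∀ k ≤ p, (e ^ k) u ≠ 0 := by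
    intro k hk hkz
    apply hp1
    have h5 := pow_split e (p - k) k u
    rw [hkz, map_zero] at h5
    have h6 : p - k + k = p := by omega
    rw [h6] at h5
    exact h5
  set w := (e ^ p) u with hwdef
  have hwW : w ∈ W := stab_pow e hE p u hu
  have hw0 : e w = 0 := by
    have h5 := pow_split e 1 p u
    rw [add_comm] at h5
    rw [hwdef]
    simpa using h5.symm.trans hp2
  have hwμ : (e * f - f * e) w = (lam + 2 * p) • w := h_string e f hrel1 hlam p
  have hwμ' : (f * e - e * f) w = (-(lam + 2 * p)) • w := by
    rw [h_neg_apply, hwμ, neg_smul]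
  clear_value w
  have hexf : ∃ k, (f ^ k) w = 0 := by
    by_contra hc
    push_neg at hc
    exact absurd (bdd f e (swap_rel e f hrel2) hF d hdim hwW hwμ' d (fun k _ => hc k))
      (lt_irrefl d)
  have hM0 : Nat.find hexf ≠ 0 := by
    intro h
    apply hp1
    simpa [h] using Nat.find_spec hexf
  obtain ⟨m, hm⟩ : ∃ m, Nat.find hexf = m + 1 := ⟨Nat.find hexf - 1, by omega⟩
  have hm1 : (f ^ m) w ≠ 0 := Nat.find_min hexf (by omega)
  have hm2 : (f ^ (m + 1)) w = 0 := hm ▸ Nat.find_spec hexf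
  have hfk : ∀ k ≤ m, (f ^ k) w ≠ 0 := by
    intro k hk hkz
    apply hm1
    have h5 := pow_split f (m - k) k w
    rw [hkz, map_zero] at h5
    have h6 : m - k + k = m := by omega
    rw [h6] at h5
    exact h5
  have hμm : lam + 2 * p = (m : ℚ) := by
    have h0 := lowering e f hrel2 hw0 hwμ m
    simp only [hm2, map_zero] at h0
    have h1 := (smul_eq_zero.mp h0.symm).resolve_right hm1
    rcases mul_eq_zero.mp h1 with h | h
    · have : ((m : ℚ) + 1) ≠ 0 := by positivity
      exact absurd h this
    · linarith [sub_eq_zero.mp h]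
  have hwm : (e * f - f * e) w = (m : ℚ) • w := by rw [hwμ, hμm]
  have heig : ∀ k : Fin (m + 1),
      (e * f - f * e).HasEigenvector ((m : ℚ) - 2 * (k : ℕ)) ((f ^ (k : ℕ)) w) := by
    intro k
    rw [Module.End.hasEigenvector_iff, Module.End.mem_eigenspace_iff]
    exact ⟨f_string e f hrel2 hwm k, hfk k (by omega)⟩
  have hinj : Function.Injective (fun k : Fin (m + 1) => (m : ℚ) - 2 * ((k : ℕ) : ℚ)) := by
    intro a b hab
    simp only at hab
    have : ((a : ℕ) : ℚ) = (b : ℕ) := by linarith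
    exact Fin.ext (by exact_mod_cast this)
  have hli : LinearIndependent ℚ (fun k : Fin (m + 1) => (f ^ (k : ℕ)) w) :=
    Module.End.eigenvectors_linearIndependent' _ _ hinj _ heig
  set U := Submodule.span ℚ (Set.range (fun k : Fin (m + 1) => (f ^ (k : ℕ)) w)) with hUdef
  have hUW : U ≤ W := Submodule.span_le.mpr (by
    rintro x ⟨k, rfl⟩
    exact stab_pow f hF _ w hwW)
  have hwU : w ∈ U := by
    have := Submodule.subset_span (R := ℚ) (s := Set.range (fun k : Fin (m + 1) => (f ^ (k : ℕ)) w))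
      ⟨⟨0, by omega⟩, rfl⟩
    simpa using this
  have hUe : ∀ x ∈ U, e x ∈ U := by
    have hgen : ∀ kv : ℕ, kv ≤ m → e ((f ^ kv) w) ∈ U := by
      intro kv hkv
      cases kv with
      | zero => simpa [hw0] using Submodule.zero_mem U
      | succ k' =>
        rw [lowering e f hrel2 hw0 hwμ k']
        refine Submodule.smul_mem _ _ (Submodule.subset_span ⟨⟨k', by omega⟩, rfl⟩)
    have hmap : Submodule.map e U ≤ U := by
      rw [hUdef, Submodule.map_span_le]
      rintro x ⟨k, rfl⟩
      exact hgen k (by omega)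
    intro x hx
    exact hmap ⟨x, hx, rfl⟩
  have hUf : ∀ x ∈ U, f x ∈ U := by
    have hgen : ∀ kv : ℕ, kv ≤ m → f ((f ^ kv) w) ∈ U := by
      intro kv hkv
      have hstep : f ((f ^ kv) w) = (f ^ (kv + 1)) w := by
        have h5 := pow_split f 1 kv w
        rw [add_comm] at h5
        simpa using h5.symm
      rw [hstep]
      by_cases hk : kv = m
      · rw [hk, hm2]; exact Submodule.zero_mem U
      · exact Submodule.subset_span ⟨⟨kv + 1, by omega⟩, rfl⟩
    have hmap : Submodule.map f U ≤ U := by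
      rw [hUdef, Submodule.map_span_le]
      rintro x ⟨k, rfl⟩
      exact hgen k (by omega)
    intro x hx
    exact hmap ⟨x, hx, rfl⟩
  have hUne : U ≠ ⊥ := by
    intro hbot
    exact hp1 (by simpa [hbot] using hwU)
  have hUeq : U = W := (hsimple U hUW hUe hUf).resolve_left hUne
  have hdm : d = m + 1 := by
    have h1 : Module.rank ℚ U = ((m + 1 : ℕ) : Cardinal) := by
      rw [hUdef, rank_span hli]
      have h0 := Cardinal.mk_range_eq_of_injective hli.injective
      rw [Cardinal.mk_fin] at h0
      simpa using h0
    have h2 : Module.rank ℚ U = (d : Cardinal) := by rw [hUeq, hdim]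
    have := h2.symm.trans h1
    exact_mod_cast this
  have hpd : p < d := bdd e f hrel1 hE d hdim hu hlam p hek
  have hpm : p ≤ m := by omega
  refine ⟨p, m - p, by omega, ?_, by rw [← hwdef]; exact hp1, hp2, ?_⟩
  · have hq : ((m - p : ℕ) : ℚ) = (m : ℚ) - p := by
      push_cast [hpm]
      ring
    rw [hq]
    linarith [hμm]
  · intro j hj
    obtain ⟨c, hc⟩ := (Submodule.mem_span_range_iff_exists_fun ℚ).mp (hUeq ▸ hu : u ∈ U)
    have hker : ∀ k : Fin (m + 1), c k * ((m : ℚ) - 2 * (k : ℕ) - lam) = 0 := by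
      apply Fintype.linearIndependent_iff.mp hli (fun k => c k * ((m : ℚ) - 2 * (k : ℕ) - lam))
      have h2 : ∑ k : Fin (m + 1), (c k * ((m : ℚ) - 2 * (k : ℕ))) • ((f ^ (k : ℕ)) w)
          = lam • u := by
        rw [← hlam, ← hc, map_sum]
        refine Finset.sum_congr rfl fun k _ => ?_
        rw [map_smul, Module.End.mem_eigenspace_iff.mp (heig k).1, smul_smul]
      have h3 : ∑ k : Fin (m + 1), (c k * lam) • ((f ^ (k : ℕ)) w) = lam • u := by
        rw [← hc, Finset.smul_sum]
        refine Finset.sum_congr rfl fun k _ => ?_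
        rw [smul_smul, mul_comm]
      calc ∑ k : Fin (m + 1), (c k * ((m : ℚ) - 2 * (k : ℕ) - lam)) • ((f ^ (k : ℕ)) w)
          = ∑ k : Fin (m + 1), ((c k * ((m : ℚ) - 2 * (k : ℕ))) • ((f ^ (k : ℕ)) w)
            - (c k * lam) • ((f ^ (k : ℕ)) w)) := by
            refine Finset.sum_congr rfl fun k _ => ?_
            rw [← sub_smul]
            congr 1
            ring
        _ = 0 := by rw [Finset.sum_sub_distrib, h2, h3, sub_self]
    have hplt : p < m + 1 := by omega
    have hcp : ∀ k : Fin (m + 1), k ≠ ⟨p, hplt⟩ → c k = 0 := by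
      intro k hk
      have h3 := hker k
      have h4 : (m : ℚ) - 2 * (k : ℕ) - lam ≠ 0 := by
        have hl : lam = (m : ℚ) - 2 * p := by linarith [hμm]
        rw [hl]
        intro hcontra
        apply hk
        have : ((k : ℕ) : ℚ) = (p : ℚ) := by linarith
        exact Fin.ext (by exact_mod_cast this)
      exact (mul_eq_zero.mp h3).resolve_right h4
    have hsum : ∑ i : Fin (m + 1), c i • (f ^ (i : ℕ)) w = c ⟨p, hplt⟩ • (f ^ p) w :=
      Finset.sum_eq_single _ (fun b _ hb => by rw [hcp b hb, zero_smul])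
        (fun h => absurd (Finset.mem_univ _) h)
    have huc : u = c ⟨p, hplt⟩ • (f ^ p) w := by rw [← hc, hsum]
    have hsp := string_pow e f hrel2 hw0 hwm j p hj hpm
    have hff : (f ^ j) ((f ^ (p - j)) w) = (f ^ p) w := by
      have h5 := pow_split f j (p - j) w
      have h6 : j + (p - j) = p := by omega
      rw [h6] at h5
      exact h5.symm
    have hnat : p.descFactorial j * (m - p + j).descFactorial j
        = j.factorial ^ 2 * (m - p + j).choose j * p.choose j := by
      rw [Nat.descFactorial_eq_factorial_mul_choose, Nat.descFactorial_eq_factorial_mul_choose]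
      ring
    have hsc : ((p.descFactorial j * (m - p + j).descFactorial j : ℕ) : ℚ)
        = ((j.factorial ^ 2 * (m - p + j).choose j * p.choose j : ℕ) : ℚ) :=
      Nat.cast_inj.mpr hnat
    rw [Module.End.mul_apply, huc, map_smul, map_smul, hsp, map_smul, hff, smul_smul, smul_smul,
      hsc, mul_comm]
lemma hPlus_eq (g : Module.End ℚ V) (v : V) (p : ℕ)
    (h1 : (g ^ p) v ≠ 0) (h2 : (g ^ (p + 1)) v = 0) : hPlus g v = p := by
  have hzero : ∀ k, p + 1 ≤ k → (g ^ k) v = 0 := by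
    intro k hk
    have h5 := pow_split g (k - (p + 1)) (p + 1) v
    rw [h2, map_zero] at h5
    have h6 : k - (p + 1) + (p + 1) = k := by omega
    rw [h6] at h5
    exact h5
  have hub : ∀ k ∈ {i : ℕ | (g ^ i) v ≠ 0}, k ≤ p := by
    intro k hk
    by_contra hc
    exact hk (hzero k (by omega))
  apply le_antisymm
  · exact csSup_le ⟨p, h1⟩ hub
  · exact le_csSup ⟨p, hub⟩ h1

lemma lift_comm {ι : Type*} [DecidableEq ι] (W : ι → Submodule ℚ V) (g : Module.End ℚ V)
    (hg : ∀ i, ∀ x ∈ W i, g x ∈ W i) (y : ⨁ i, (W i)) :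
    g (DirectSum.coeLinearMap W y)
      = DirectSum.coeLinearMap W
        (DFinsupp.mapRange.linearMap (fun i => (g.restrict (fun x hx => hg i x hx))) y) := by
  induction y using DirectSum.induction_on with
  | zero => simp
  | of i w =>
    rw [DirectSum.coeLinearMap_of]
    have : (DFinsupp.mapRange.linearMap (fun i => (g.restrict (fun x hx => hg i x hx)))
        (DirectSum.of (fun i => ↥(W i)) i w))
        = DirectSum.of (fun i => ↥(W i)) i (g.restrict (fun x hx => hg i x hx) w) := by
      exact DFinsupp.mapRange_single (hf := fun i => map_zero _)
    rw [this, DirectSum.coeLinearMap_of, LinearMap.restrict_coe_apply]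
  | add a b ha hb => simp [map_add, ha, hb]

end core

/-- Let `V` be a `ℚ`-vector space with endomorphisms `e`, `f`
satisfying the `sl₂`-relations for `h = ef - fe`.  Assume `V` is an internal direct sum
of subspaces `W i`, each stable under `e` and `f`, of dimension `d`, and simple.  If
`v ≠ 0` and `h v = λ v`, then `λ ∈ ℤ`, `d(v) = d = 1 + 2h_±(v) ± λ`, and the divided
power identities `f^j e^j v = (j!)² C(h_-+j, j) C(h_+, j) v` (for `j ≤ h_+`) and
`e^j f^j v = (j!)² C(h_++j, j) C(h_-, j) v` (for `j ≤ h_-`) hold. -/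
theorem stmt6 (V : Type*) [AddCommGroup V] [Module ℚ V]
    (e f : Module.End ℚ V)
    (hrel1 : (e * f - f * e) * e - e * (e * f - f * e) = (2 : ℚ) • e)
    (hrel2 : (e * f - f * e) * f - f * (e * f - f * e) = (-2 : ℚ) • f)
    (ι : Type*) [DecidableEq ι] (W : ι → Submodule ℚ V) (d : ℕ)
    (hdirect : DirectSum.IsInternal W)
    (hstabE : ∀ i, ∀ x ∈ W i, e x ∈ W i)
    (hstabF : ∀ i, ∀ x ∈ W i, f x ∈ W i)
    (hdim : ∀ i, Module.rank ℚ (W i) = d)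
    (hsimple : ∀ i, ∀ U : Submodule ℚ V, U ≤ W i → (∀ x ∈ U, e x ∈ U) →
      (∀ x ∈ U, f x ∈ U) → U = ⊥ ∨ U = W i)
    (v : V) (hv : v ≠ 0) (lam : ℚ) (hlam : (e * f - f * e) v = lam • v) :
    (∃ m : ℤ, lam = m) ∧
    hPlus e v + hPlus f v + 1 = d ∧
    (d : ℚ) = 1 + 2 * hPlus e v + lam ∧
    (d : ℚ) = 1 + 2 * hPlus f v - lam ∧
    (∀ j ≤ hPlus e v, (f ^ j * e ^ j) v =
      ((j.factorial ^ 2 * (hPlus f v + j).choose j * (hPlus e v).choose j : ℕ) : ℚ) • v) ∧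
    (∀ j ≤ hPlus f v, (e ^ j * f ^ j) v =
      ((j.factorial ^ 2 * (hPlus e v + j).choose j * (hPlus f v).choose j : ℕ) : ℚ) • v) := by
    classical
  have hbij : Function.Bijective (DirectSum.coeLinearMap W) := hdirect
  obtain ⟨x, hx⟩ := hbij.surjective v
  -- transport lemmas between v and its components
  have hmapc : ∀ (g : Module.End ℚ V) (hg : ∀ i, ∀ z ∈ W i, g z ∈ W i) (i : ι),
      ((DFinsupp.mapRange.linearMap
        (fun i => g.restrict (fun z hz => hg i z hz)) x) i : V) = g ((x i : V)) := by
    intro g hg i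
    have h1 : (DFinsupp.mapRange.linearMap
        (fun i => g.restrict (fun z hz => hg i z hz)) x) i
        = (g.restrict (fun z hz => hg i z hz)) (x i) :=
      DFinsupp.mapRange_apply _ (fun i => map_zero _) x i
    rw [h1, LinearMap.restrict_coe_apply]
  have hsmulT : ∀ (g : Module.End ℚ V) (hg : ∀ i, ∀ z ∈ W i, g z ∈ W i) (c : ℚ),
      (∀ i, g ((x i : V)) = c • (x i : V)) → g v = c • v := by
    intro g hg c hcomp
    rw [← hx, lift_comm W g hg x]
    have h2 : (DFinsupp.mapRange.linearMap
        (fun i => g.restrict (fun z hz => hg i z hz)) x) = c • x := by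
      apply DFinsupp.ext
      intro i
      apply Subtype.ext
      rw [hmapc g hg i, hcomp i]
      rw [DirectSum.smul_apply]
      simp
    rw [h2, map_smul]
  have hzeroT : ∀ (g : Module.End ℚ V) (hg : ∀ i, ∀ z ∈ W i, g z ∈ W i),
      (∀ i, g ((x i : V)) = 0) → g v = 0 := by
    intro g hg hcomp
    rw [← hx, lift_comm W g hg x]
    have h2 : (DFinsupp.mapRange.linearMap
        (fun i => g.restrict (fun z hz => hg i z hz)) x) = 0 := by
      apply DFinsupp.ext
      intro i
      apply Subtype.ext
      rw [hmapc g hg i, hcomp i]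
      simp
    rw [h2, map_zero]
  have hneT : ∀ (g : Module.End ℚ V) (hg : ∀ i, ∀ z ∈ W i, g z ∈ W i) (i : ι),
      g ((x i : V)) ≠ 0 → g v ≠ 0 := by
    intro g hg i hgi hgv
    rw [← hx, lift_comm W g hg x] at hgv
    have h2 := hbij.injective (hgv.trans (map_zero (DirectSum.coeLinearMap W)).symm)
    apply hgi
    rw [← hmapc g hg i, h2]
    simp
  -- stability of h
  have hstabH : ∀ i, ∀ z ∈ W i, (e * f - f * e) z ∈ W i := by
    intro i z hz
    have h1 : (e * f - f * e) z = e (f z) - f (e z) := by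
      simp [LinearMap.sub_apply, Module.End.mul_apply]
    rw [h1]
    exact Submodule.sub_mem _ (hstabE i _ (hstabF i z hz)) (hstabF i _ (hstabE i z hz))
  -- components are eigenvectors
  have hcomp : ∀ i, (e * f - f * e) ((x i : V)) = lam • (x i : V) := by
    intro i
    have h1 := lift_comm W (e * f - f * e) hstabH x
    rw [hx, hlam] at h1
    have h2 : (DirectSum.coeLinearMap W) (lam • x) = lam • v := by rw [map_smul, hx]
    have h3 := hbij.injective (h2.trans h1)
    calc (e * f - f * e) ((x i : V))
        = ((DFinsupp.mapRange.linearMap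
            (fun i => (e * f - f * e).restrict (fun z hz => hstabH i z hz)) x) i : V) :=
          (hmapc _ _ i).symm
      _ = ((lam • x) i : V) := by rw [← h3]
      _ = lam • (x i : V) := by rw [DirectSum.smul_apply]; simp
  -- nonzero component exists
  obtain ⟨i₀, hi₀⟩ : ∃ i, x i ≠ 0 := by
    by_contra hc
    push_neg at hc
    apply hv
    rw [← hx, show x = 0 from DFinsupp.ext hc, map_zero]
  -- apply key on components
  have hkeyE : ∀ i, x i ≠ 0 → ∃ p q : ℕ, d = p + q + 1 ∧ lam = (q : ℚ) - (p : ℚ) ∧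
      (e ^ p) ((x i : V)) ≠ 0 ∧ (e ^ (p + 1)) ((x i : V)) = 0 ∧
      ∀ j ≤ p, (f ^ j * e ^ j) ((x i : V)) =
        ((j.factorial ^ 2 * (q + j).choose j * p.choose j : ℕ) : ℚ) • (x i : V) := by
    intro i hi
    exact key e f hrel1 hrel2 (W i) d (hstabE i) (hstabF i) (hdim i) (hsimple i) (x i).2
      (fun h => hi ((Submodule.coe_eq_zero).mp h)) (hcomp i)
  have hkeyF : ∀ i, x i ≠ 0 → ∃ p q : ℕ, d = p + q + 1 ∧ -lam = (q : ℚ) - (p : ℚ) ∧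
      (f ^ p) ((x i : V)) ≠ 0 ∧ (f ^ (p + 1)) ((x i : V)) = 0 ∧
      ∀ j ≤ p, (e ^ j * f ^ j) ((x i : V)) =
        ((j.factorial ^ 2 * (q + j).choose j * p.choose j : ℕ) : ℚ) • (x i : V) := by
    intro i hi
    have hlam' : (f * e - e * f) ((x i : V)) = (-lam) • (x i : V) := by
      rw [h_neg_apply, hcomp i, neg_smul]
    exact key f e (swap_rel e f hrel2) (swap_rel2 e f hrel1) (W i) d (hstabF i) (hstabE i)
      (hdim i) (fun U hU h1 h2 => hsimple i U hU h2 h1) (x i).2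
      (fun h => hi ((Submodule.coe_eq_zero).mp h)) hlam'
  obtain ⟨p, q, hd, hlq, hep, hep1, hdivE⟩ := hkeyE i₀ hi₀
  -- uniqueness of (p, q) across components
  have huniq : ∀ p' q' : ℕ, d = p' + q' + 1 → lam = (q' : ℚ) - (p' : ℚ) →
      p' = p ∧ q' = q := by
    intro p' q' hd' hlq'
    have h1 : p' + q' = p + q := by omega
    have h2 : (p' : ℚ) + q' = (p : ℚ) + q := by exact_mod_cast congrArg (Nat.cast : ℕ → ℚ) h1
    have h3 : (p' : ℚ) = (p : ℚ) := by linarith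
    have h4 : p' = p := by exact_mod_cast h3
    exact ⟨h4, by omega⟩
  have huniqF : ∀ p' q' : ℕ, d = p' + q' + 1 → -lam = (q' : ℚ) - (p' : ℚ) →
      p' = q ∧ q' = p := by
    intro p' q' hd' hlq'
    have h1 : p' + q' = p + q := by omega
    have h2 : (p' : ℚ) + q' = (p : ℚ) + q := by exact_mod_cast congrArg (Nat.cast : ℕ → ℚ) h1
    have h3 : (p' : ℚ) = (q : ℚ) := by linarith
    have h4 : p' = q := by exact_mod_cast h3
    exact ⟨h4, by omega⟩
  -- componentwise facts for every i
  have hcompE1 : ∀ i, (e ^ (p + 1)) ((x i : V)) = 0 := by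
    intro i
    by_cases hi : x i = 0
    · rw [hi]; simp
    · obtain ⟨p', q', hd', hlq', h1, h2, h3⟩ := hkeyE i hi
      obtain ⟨hp', hq'⟩ := huniq p' q' hd' hlq'
      rw [← hp']
      exact h2
  have hcompF1 : ∀ i, (f ^ (q + 1)) ((x i : V)) = 0 := by
    intro i
    by_cases hi : x i = 0
    · rw [hi]; simp
    · obtain ⟨p', q', hd', hlq', h1, h2, h3⟩ := hkeyF i hi
      obtain ⟨hp', hq'⟩ := huniqF p' q' hd' hlq'
      rw [← hp']
      exact h2
  have hcompDivE : ∀ i, ∀ j ≤ p, (f ^ j * e ^ j) ((x i : V)) =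
      ((j.factorial ^ 2 * (q + j).choose j * p.choose j : ℕ) : ℚ) • (x i : V) := by
    intro i j hj
    by_cases hi : x i = 0
    · rw [hi]; simp
    · obtain ⟨p', q', hd', hlq', h1, h2, h3⟩ := hkeyE i hi
      obtain ⟨hp', hq'⟩ := huniq p' q' hd' hlq'
      rw [← hp', ← hq']
      exact h3 j (by omega)
  have hcompDivF : ∀ i, ∀ j ≤ q, (e ^ j * f ^ j) ((x i : V)) =
      ((j.factorial ^ 2 * (p + j).choose j * q.choose j : ℕ) : ℚ) • (x i : V) := by
    intro i j hj
    by_cases hi : x i = 0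
    · rw [hi]; simp
    · obtain ⟨p', q', hd', hlq', h1, h2, h3⟩ := hkeyF i hi
      obtain ⟨hp', hq'⟩ := huniqF p' q' hd' hlq'
      rw [← hp', ← hq']
      exact h3 j (by omega)
  have hfq : (f ^ q) ((x i₀ : V)) ≠ 0 := by
    obtain ⟨p', q', hd', hlq', h1, h2, h3⟩ := hkeyF i₀ hi₀
    obtain ⟨hp', hq'⟩ := huniqF p' q' hd' hlq'
    rw [← hp']
    exact h1
  -- stability of powers and products
  have hstabEp : ∀ n : ℕ, ∀ i, ∀ z ∈ W i, (e ^ n) z ∈ W i :=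
    fun n i z hz => stab_pow e (hstabE i) n z hz
  have hstabFp : ∀ n : ℕ, ∀ i, ∀ z ∈ W i, (f ^ n) z ∈ W i :=
    fun n i z hz => stab_pow f (hstabF i) n z hz
  have hstabFE : ∀ j : ℕ, ∀ i, ∀ z ∈ W i, (f ^ j * e ^ j) z ∈ W i := by
    intro j i z hz
    rw [Module.End.mul_apply]
    exact hstabFp j i _ (hstabEp j i z hz)
  have hstabEF : ∀ j : ℕ, ∀ i, ∀ z ∈ W i, (e ^ j * f ^ j) z ∈ W i := by
    intro j i z hz
    rw [Module.End.mul_apply]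
    exact hstabEp j i _ (hstabFp j i z hz)
  -- global facts
  have hE1 : (e ^ (p + 1)) v = 0 := hzeroT _ (hstabEp (p + 1)) hcompE1
  have hE2 : (e ^ p) v ≠ 0 := hneT _ (hstabEp p) i₀ hep
  have hF1 : (f ^ (q + 1)) v = 0 := hzeroT _ (hstabFp (q + 1)) hcompF1
  have hF2 : (f ^ q) v ≠ 0 := hneT _ (hstabFp q) i₀ hfq
  have hPe : hPlus e v = p := hPlus_eq e v p hE2 hE1
  have hPf : hPlus f v = q := hPlus_eq f v q hF2 hF1
  refine ⟨⟨(q : ℤ) - (p : ℤ), by push_cast; exact hlq⟩, ?_, ?_, ?_, ?_, ?_⟩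
  · rw [hPe, hPf]; omega
  · rw [hPe, hd]; push_cast; linarith [hlq]
  · rw [hPf, hd]; push_cast; linarith [hlq]
  · intro j hj
    rw [hPe] at hj
    rw [hPe, hPf]
    exact hsmulT _ (hstabFE j) _ (fun i => hcompDivE i j hj)
  · intro j hj
    rw [hPf] at hj
    rw [hPe, hPf]
    exact hsmulT _ (hstabEF j) _ (fun i => hcompDivF i j hj)
end

section
/- For every r ≥ 0, the subspace V^{≤r} is stable under e and under f, and every nonzero h-eigenvector v ∈ V^{≤r} satisfies d(v) ≤ r (so that, as an sl₂-module, V^{≤r} is a sum of simple modules of dimension ≤ r). -/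
/-- `V^{≤ r}`: the span of the basis vectors `B i` with `d(B i) ≤ r`, where
`d(v) = h_+(v) + h_-(v) + 1`. -/
noncomputable def Vle {V : Type*} [AddCommGroup V] [Module ℚ V]
    (e f : Module.End ℚ V) {ι : Type*} (B : Module.Basis ι ℚ V) (r : ℕ) :
    Submodule ℚ V :=
  Submodule.span ℚ {x | ∃ i : ι, hPlus e (B i) + hPlus f (B i) + 1 ≤ r ∧ x = B i}

namespace Stmt8Aux

variable {V : Type*} [AddCommGroup V] [Module ℚ V] {ι : Type*}

lemma pow_apply_zero_of_le {e : Module.End ℚ V} {v : V} {N m : ℕ}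
    (h : (e ^ N) v = 0) (hm : N ≤ m) : (e ^ m) v = 0 := by
  obtain ⟨k, rfl⟩ := Nat.exists_eq_add_of_le hm
  rw [add_comm, pow_add, Module.End.mul_apply, h, map_zero]

lemma bddAbove_of_nil {e : Module.End ℚ V} {v : V} (h : ∃ N, (e ^ N) v = 0) :
    BddAbove {i : ℕ | (e ^ i) v ≠ 0} := by
  obtain ⟨N, hN⟩ := h
  refine ⟨N, fun k hk => ?_⟩
  by_contra hc
  exact hk (pow_apply_zero_of_le hN (le_of_not_ge hc))

lemma hPlus_le {e : Module.End ℚ V} {v : V} {n : ℕ}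
    (h : ∀ k, (e ^ k) v ≠ 0 → k ≤ n) : hPlus e v ≤ n := by
  unfold hPlus
  rcases Set.eq_empty_or_nonempty {i : ℕ | (e ^ i) v ≠ 0} with hS | hS
  · simp [hS]
  · exact csSup_le hS h

lemma le_hPlus {e : Module.End ℚ V} {v : V} {k : ℕ}
    (hnil : ∃ N, (e ^ N) v = 0) (h : (e ^ k) v ≠ 0) : k ≤ hPlus e v :=
  le_csSup (bddAbove_of_nil hnil) h

lemma pow_hPlus_ne_zero {e : Module.End ℚ V} {v : V}
    (hnil : ∃ N, (e ^ N) v = 0) (hv : v ≠ 0) : (e ^ hPlus e v) v ≠ 0 :=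
  Nat.sSup_mem ⟨0, by simpa using hv⟩ (bddAbove_of_nil hnil)

lemma pow_hPlus_succ_eq_zero {e : Module.End ℚ V} {v : V}
    (hnil : ∃ N, (e ^ N) v = 0) : (e ^ (hPlus e v + 1)) v = 0 := by
  by_contra hc
  exact absurd (le_hPlus hnil hc) (by omega)

lemma L1 (e f : Module.End ℚ V)
    (hrel2 : (e * f - f * e) * f - f * (e * f - f * e) = (-2 : ℚ) • f) :
    ∀ (m : ℕ) (x : V) (μ : ℚ), (e * f - f * e) x = μ • x →
      e ((f ^ (m+1)) x) = (f ^ (m+1)) (e x) + (((m:ℚ) + 1) * (μ - m)) • (f ^ m) x := by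
  have expand : ∀ x : V, (e * f - f * e) (f x) = f ((e * f - f * e) x) + (-2 : ℚ) • f x := by
    intro x
    have h2 := LinearMap.congr_fun hrel2 x
    simp only [LinearMap.sub_apply, Module.End.mul_apply, LinearMap.smul_apply, map_sub] at h2 ⊢
    rw [← h2]; abel
  intro m
  induction m with
  | zero =>
    intro x μ hx
    have h0 : e (f x) - f (e x) = μ • x := by
      simpa [LinearMap.sub_apply, Module.End.mul_apply] using hx
    have : e (f x) = f (e x) + μ • x := by rw [← h0]; abel
    simpa using this
  | succ n ih =>
    intro x μ hx
    have hfx : (e * f - f * e) (f x) = (μ - 2) • f x := by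
      rw [expand x, hx, map_smul]; module
    have hef : e (f x) = f (e x) + μ • x := by
      have h0 : e (f x) - f (e x) = μ • x := by
        simpa [LinearMap.sub_apply, Module.End.mul_apply] using hx
      rw [← h0]; abel
    have key := ih (f x) (μ - 2) hfx
    have p1 : (f ^ (n+2)) x = (f ^ (n+1)) (f x) := by
      rw [pow_succ, Module.End.mul_apply]
    have p2 : (f ^ (n+1)) x = (f ^ n) (f x) := by
      rw [pow_succ, Module.End.mul_apply]
    have p3 : (f ^ (n+2)) (e x) = (f ^ (n+1)) (f (e x)) := by
      rw [pow_succ, Module.End.mul_apply]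
    rw [p1, key, hef, map_add, map_smul, ← p3, ← p2]
    push_cast
    match_scalars <;> ring

lemma weight_shift (e f : Module.End ℚ V)
    (hrel1 : (e * f - f * e) * e - e * (e * f - f * e) = (2 : ℚ) • e)
    (x : V) (μ : ℚ) (hx : (e * f - f * e) x = μ • x) :
    (e * f - f * e) (e x) = (μ + 2) • e x := by
  have expand : (e * f - f * e) (e x) = e ((e * f - f * e) x) + (2 : ℚ) • e x := by
    have h1 := LinearMap.congr_fun hrel1 x
    simp only [LinearMap.sub_apply, Module.End.mul_apply, LinearMap.smul_apply, map_sub] at h1 ⊢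
    rw [← h1]; abel
  rw [expand, hx, map_smul]; module

lemma weight_pow (e f : Module.End ℚ V)
    (hrel1 : (e * f - f * e) * e - e * (e * f - f * e) = (2 : ℚ) • e)
    (x : V) (μ : ℚ) (hx : (e * f - f * e) x = μ • x) :
    ∀ j : ℕ, (e * f - f * e) ((e ^ j) x) = (μ + 2 * j) • (e ^ j) x := by
  intro j
  induction j with
  | zero => simpa using hx
  | succ n ih =>
    have e1 : (e ^ (n+1)) x = e ((e ^ n) x) := by rw [pow_succ', Module.End.mul_apply]
    rw [e1, weight_shift e f hrel1 _ _ ih]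
    push_cast
    match_scalars <;> ring

lemma C1 (e f : Module.End ℚ V)
    (hrel2 : (e * f - f * e) * f - f * (e * f - f * e) = (-2 : ℚ) • f)
    (x : V) (μ : ℚ) (hx : (e * f - f * e) x = μ • x) (m : ℕ)
    (hm : (f ^ (m+1)) x = 0) : (f ^ (m+2)) (e x) = 0 := by
  have key := L1 e f hrel2 (m+1) x μ hx
  have z1 : (f ^ (m+2)) x = 0 := pow_apply_zero_of_le hm (by omega)
  rw [z1, hm, map_zero, smul_zero, add_zero] at key
  exact key.symm

lemma hPlus_apply_le (e f : Module.End ℚ V)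
    (hrel2 : (e * f - f * e) * f - f * (e * f - f * e) = (-2 : ℚ) • f)
    (x : V) (μ : ℚ) (hx : (e * f - f * e) x = μ • x)
    (hnil : ∃ N, (f ^ N) x = 0) : hPlus f (e x) ≤ hPlus f x + 1 := by
  apply hPlus_le
  intro k hk
  by_contra hck
  push_neg at hck
  apply hk
  have hz : (f ^ (hPlus f x + 2)) (e x) = 0 :=
    C1 e f hrel2 x μ hx _ (pow_hPlus_succ_eq_zero hnil)
  exact pow_apply_zero_of_le hz (by omega)

lemma highest_weight (e f : Module.End ℚ V)
    (hrel2 : (e * f - f * e) * f - f * (e * f - f * e) = (-2 : ℚ) • f)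
    (x : V) (μ : ℚ) (hx : (e * f - f * e) x = μ • x) (hex : e x = 0) (k : ℕ)
    (hk0 : (f ^ k) x ≠ 0) (hk1 : (f ^ (k+1)) x = 0) : μ = k := by
  have key := L1 e f hrel2 k x μ hx
  rw [hk1, hex, map_zero, map_zero, zero_add] at key
  rcases smul_eq_zero.1 key.symm with h | h
  · rcases mul_eq_zero.1 h with h' | h'
    · exact absurd h' (by positivity)
    · linarith [sub_eq_zero.1 h']
  · exact absurd h hk0

lemma key_weight_le (e f : Module.End ℚ V)
    (hrel1 : (e * f - f * e) * e - e * (e * f - f * e) = (2 : ℚ) • e)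
    (hrel2 : (e * f - f * e) * f - f * (e * f - f * e) = (-2 : ℚ) • f)
    (hnilE : ∀ v : V, ∃ N, (e ^ N) v = 0) (hnilF : ∀ v : V, ∃ N, (f ^ N) v = 0)
    (x : V) (hx0 : x ≠ 0) (μ : ℚ) (hx : (e * f - f * e) x = μ • x) :
    μ + hPlus e x ≤ (hPlus f x : ℚ) := by
  set a := hPlus e x with ha
  set b := hPlus f x with hb
  set u := (e ^ a) x with hu
  have hu0 : u ≠ 0 := pow_hPlus_ne_zero (hnilE x) hx0
  have heu : e u = 0 := by
    have : e u = (e ^ (a + 1)) x := by rw [hu, pow_succ', Module.End.mul_apply]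
    rw [this]
    exact pow_hPlus_succ_eq_zero (hnilE x)
  have hwu : (e * f - f * e) u = (μ + 2 * a) • u := weight_pow e f hrel1 x μ hx a
  have h1 : μ + 2 * a = hPlus f u :=
    highest_weight e f hrel2 u _ hwu heu (hPlus f u)
      (pow_hPlus_ne_zero (hnilF u) hu0) (pow_hPlus_succ_eq_zero (hnilF u))
  have h2 : ∀ j : ℕ, hPlus f ((e ^ j) x) ≤ b + j := by
    intro j
    induction j with
    | zero => simpa [hb] using le_refl b
    | succ n ih =>
      have e1 : (e ^ (n+1)) x = e ((e ^ n) x) := by rw [pow_succ', Module.End.mul_apply]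
      rw [e1]
      have := hPlus_apply_le e f hrel2 _ _ (weight_pow e f hrel1 x μ hx n) (hnilF _)
      omega
  have h3 : hPlus f u ≤ b + a := h2 a
  have h4 : (hPlus f u : ℚ) ≤ ((b : ℚ) + a) := by exact_mod_cast h3
  linarith [h1, h4]

lemma key_weight (e f : Module.End ℚ V)
    (hrel1 : (e * f - f * e) * e - e * (e * f - f * e) = (2 : ℚ) • e)
    (hrel2 : (e * f - f * e) * f - f * (e * f - f * e) = (-2 : ℚ) • f)
    (hnilE : ∀ v : V, ∃ N, (e ^ N) v = 0) (hnilF : ∀ v : V, ∃ N, (f ^ N) v = 0)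
    (x : V) (hx0 : x ≠ 0) (μ : ℚ) (hx : (e * f - f * e) x = μ • x) :
    (hPlus e x : ℚ) + μ = hPlus f x := by
  have hle := key_weight_le e f hrel1 hrel2 hnilE hnilF x hx0 μ hx
  have hrel1' : (f * e - e * f) * f - f * (f * e - e * f) = (2 : ℚ) • f := by
    have h : (f * e - e * f) * f - f * (f * e - e * f)
        = -((e * f - f * e) * f - f * (e * f - f * e)) := by noncomm_ring
    rw [h, hrel2]; module
  have hrel2' : (f * e - e * f) * e - e * (f * e - e * f) = (-2 : ℚ) • e := by
    have h : (f * e - e * f) * e - e * (f * e - e * f)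
        = -((e * f - f * e) * e - e * (e * f - f * e)) := by noncomm_ring
    rw [h, hrel1]; module
  have hx' : (f * e - e * f) x = (-μ) • x := by
    have h : (f * e - e * f) x = -((e * f - f * e) x) := by
      simp only [LinearMap.sub_apply, Module.End.mul_apply]; abel
    rw [h, hx]; module
  have hge := key_weight_le f e hrel1' hrel2' hnilF hnilE x hx0 (-μ) hx'
  linarith

lemma locNilpotent (e f : Module.End ℚ V)
    (hrel : (e * f - f * e) * e - e * (e * f - f * e) = (2 : ℚ) • e)
    (hlocfin : ∀ v : V, ∃ W : Submodule ℚ V, FiniteDimensional ℚ W ∧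
      (∀ x ∈ W, e x ∈ W) ∧ (∀ x ∈ W, f x ∈ W) ∧ v ∈ W) :
    ∀ v : V, ∃ N : ℕ, (e ^ N) v = 0 := by
  intro v
  obtain ⟨W, hfin, hE, hF, hv⟩ := hlocfin v
  set eW : Module.End ℚ W := e.restrict hE with heW
  set fW : Module.End ℚ W := f.restrict hF with hfW
  set hW : Module.End ℚ W := eW * fW - fW * eW with hhW
  have hrelW : hW * eW - eW * hW = (2 : ℚ) • eW := by
    ext x
    have h0 := LinearMap.congr_fun hrel (x : V)
    simp only [LinearMap.sub_apply, Module.End.mul_apply, LinearMap.smul_apply,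
      map_sub] at h0
    simp only [hhW, heW, hfW, LinearMap.sub_apply, Module.End.mul_apply,
      LinearMap.smul_apply, map_sub, AddSubgroupClass.coe_sub, SetLike.val_smul,
      LinearMap.restrict_coe_apply]
    exact h0
  have hrelW' : hW * eW = eW * hW + (2 : ℚ) • eW := by rw [← hrelW]; abel
  have key : ∀ n : ℕ, hW * eW ^ n = eW ^ n * hW + ((2 * n : ℚ)) • eW ^ n := by
    intro n
    induction n with
    | zero => simp
    | succ n ih =>
      calc hW * eW ^ (n+1) = (hW * eW ^ n) * eW := by rw [pow_succ, mul_assoc]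
        _ = (eW ^ n * hW + (2 * n : ℚ) • eW ^ n) * eW := by rw [ih]
        _ = eW ^ n * (hW * eW) + (2 * n : ℚ) • eW ^ (n+1) := by
            rw [add_mul, mul_assoc, smul_mul_assoc, ← pow_succ]
        _ = eW ^ n * (eW * hW) + (2 : ℚ) • eW ^ (n+1) + (2 * n : ℚ) • eW ^ (n+1) := by
            rw [hrelW', mul_add, mul_smul_comm, ← pow_succ]
        _ = eW ^ (n+1) * hW + ((2 * ((n : ℚ) + 1))) • eW ^ (n+1) := by
            rw [← mul_assoc, ← pow_succ]
            match_scalars <;> ring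
        _ = eW ^ (n+1) * hW + ((2 * ((n+1 : ℕ) : ℚ))) • eW ^ (n+1) := by push_cast; ring_nf
  have hnilW : ∃ N : ℕ, eW ^ N = 0 := by
    by_contra hc
    push_neg at hc
    set n₀ := Module.finrank ℚ (Module.End ℚ W) with hn₀
    set ad : Module.End ℚ (Module.End ℚ W) :=
      LinearMap.mulLeft ℚ hW - LinearMap.mulRight ℚ hW with had
    have heigen : ∀ k : Fin (n₀ + 1),
        ad.HasEigenvector ((2 * ((k : ℕ) + 1) : ℚ)) (eW ^ ((k : ℕ) + 1)) := by
      intro k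
      refine ⟨?_, hc _⟩
      rw [Module.End.mem_eigenspace_iff]
      simp only [had, LinearMap.sub_apply, LinearMap.mulLeft_apply,
        LinearMap.mulRight_apply]
      rw [key ((k : ℕ) + 1)]
      push_cast
      abel
    have hinj : Function.Injective (fun k : Fin (n₀ + 1) => ((2 * ((k : ℕ) + 1) : ℚ))) := by
      intro a b hab
      simp only at hab
      have : ((a : ℕ) : ℚ) = ((b : ℕ) : ℚ) := by linarith
      exact Fin.ext (by exact_mod_cast this)
    have hli := ad.eigenvectors_linearIndependent'
      (fun k : Fin (n₀ + 1) => ((2 * ((k : ℕ) + 1) : ℚ)))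
      hinj (fun k => eW ^ ((k : ℕ) + 1)) heigen
    have hcard := hli.fintype_card_le_finrank
    simp only [Fintype.card_fin] at hcard
    omega
  obtain ⟨N, hN⟩ := hnilW
  refine ⟨N, ?_⟩
  have h1 : (eW ^ N) ⟨v, hv⟩ = 0 := by rw [hN]; rfl
  rw [heW, Module.End.pow_restrict] at h1
  have h2 := congrArg (Subtype.val) h1
  simpa [LinearMap.restrict_coe_apply] using h2

lemma repr_sum (B : Module.Basis ι ℚ V) (v : V) :
    ∑ j ∈ (B.repr v).support, B.repr v j • B j = v := by
  conv_rhs => rw [← B.linearCombination_repr v]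
  rw [Finsupp.linearCombination_apply, Finsupp.sum]

lemma repr_basis_nonneg (B : Module.Basis ι ℚ V) (j i : ι) : 0 ≤ B.repr (B j) i := by
  classical
  rw [B.repr_self, Finsupp.single_apply]
  split <;> norm_num

lemma pow_repr_nonneg (B : Module.Basis ι ℚ V) (g : Module.End ℚ V)
    (hpos : ∀ v : V, (∀ i, 0 ≤ B.repr v i) → ∀ i, 0 ≤ B.repr (g v) i)
    (w : V) (hw : ∀ i, 0 ≤ B.repr w i) (k : ℕ) : ∀ i, 0 ≤ B.repr ((g ^ k) w) i := by
  induction k with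
  | zero => simpa using hw
  | succ k ih =>
    intro i
    have : (g ^ (k+1)) w = g ((g ^ k) w) := by rw [pow_succ', Module.End.mul_apply]
    rw [this]
    exact hpos _ ih i

lemma pos_lemma (B : Module.Basis ι ℚ V) (g : Module.End ℚ V)
    (hpos : ∀ v : V, (∀ i, 0 ≤ B.repr v i) → ∀ i, 0 ≤ B.repr (g v) i)
    (w : V) (hw : ∀ i, 0 ≤ B.repr w i) (k : ℕ) (j : ι) (hj : B.repr w j ≠ 0)
    (hzero : (g ^ k) w = 0) : (g ^ k) (B j) = 0 := by
  have hsum : (g ^ k) w = ∑ j' ∈ (B.repr w).support, B.repr w j' • (g ^ k) (B j') := by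
    conv_lhs => rw [← repr_sum B w]
    rw [map_sum]
    simp [map_smul]
  have hcoord : ∀ i, ∑ j' ∈ (B.repr w).support, B.repr w j' * B.repr ((g ^ k) (B j')) i = 0 := by
    intro i
    have h0 : B.repr ((g ^ k) w) i = 0 := by rw [hzero]; simp
    rw [hsum, map_sum] at h0
    simpa [Finset.sum_apply', map_smul, Finsupp.smul_apply, smul_eq_mul] using h0
  have hterm : ∀ i, B.repr w j * B.repr ((g ^ k) (B j)) i = 0 := by
    intro i
    have hjmem : j ∈ (B.repr w).support := Finsupp.mem_support_iff.2 hj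
    have hnn : ∀ j' ∈ (B.repr w).support, 0 ≤ B.repr w j' * B.repr ((g ^ k) (B j')) i :=
      fun j' _ => mul_nonneg (hw j') (pow_repr_nonneg B g hpos (B j') (repr_basis_nonneg B j') k i)
    exact (Finset.sum_eq_zero_iff_of_nonneg hnn).1 (hcoord i) j hjmem
  have hco : ∀ i, B.repr ((g ^ k) (B j)) i = 0 := by
    intro i
    rcases mul_eq_zero.1 (hterm i) with h | h
    · exact absurd h hj
    · exact h
  have : B.repr ((g ^ k) (B j)) = 0 := Finsupp.ext fun i => hco i
  simpa using (LinearEquiv.map_eq_zero_iff B.repr).1 this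

/-- One-sided stability: `e` maps the span of the small-`d` basis vectors into itself. -/
lemma stab_aux (e f : Module.End ℚ V)
    (hrel2 : (e * f - f * e) * f - f * (e * f - f * e) = (-2 : ℚ) • f)
    (B : Module.Basis ι ℚ V)
    (heig : ∀ i : ι, ∃ c : ℚ, (e * f - f * e) (B i) = c • B i)
    (hposE : ∀ v : V, (∀ i, 0 ≤ B.repr v i) → ∀ i, 0 ≤ B.repr (e v) i)
    (hposF : ∀ v : V, (∀ i, 0 ≤ B.repr v i) → ∀ i, 0 ≤ B.repr (f v) i)
    (hnilE : ∀ v : V, ∃ N, (e ^ N) v = 0) (hnilF : ∀ v : V, ∃ N, (f ^ N) v = 0)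
    (r : ℕ) :
    ∀ v ∈ Submodule.span ℚ
      {x | ∃ i : ι, hPlus e (B i) + hPlus f (B i) + 1 ≤ r ∧ x = B i},
      e v ∈ Submodule.span ℚ
        {x | ∃ i : ι, hPlus e (B i) + hPlus f (B i) + 1 ≤ r ∧ x = B i} := by
  set S := {x | ∃ i : ι, hPlus e (B i) + hPlus f (B i) + 1 ≤ r ∧ x = B i} with hS
  have hle : Submodule.span ℚ S ≤ Submodule.comap e (Submodule.span ℚ S) := by
    rw [Submodule.span_le]
    rintro x ⟨i, hi, rfl⟩
    simp only [SetLike.mem_coe, Submodule.mem_comap]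
    by_cases hw0 : e (B i) = 0
    · rw [hw0]; exact Submodule.zero_mem _
    · obtain ⟨c, hc⟩ := heig i
      have hwpos : ∀ j, 0 ≤ B.repr (e (B i)) j := hposE (B i) (repr_basis_nonneg B i)
      have hmem : ∀ j ∈ (B.repr (e (B i))).support, B j ∈ S := by
        intro j hj
        have hj' : B.repr (e (B i)) j ≠ 0 := Finsupp.mem_support_iff.1 hj
        have h1 : hPlus e (B j) ≤ hPlus e (e (B i)) := by
          apply hPlus_le
          intro k hk
          exact le_hPlus (hnilE _) fun hzz =>
            hk (pos_lemma B e hposE _ hwpos k j hj' hzz)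
        have h2 : hPlus f (B j) ≤ hPlus f (e (B i)) := by
          apply hPlus_le
          intro k hk
          exact le_hPlus (hnilF _) fun hzz =>
            hk (pos_lemma B f hposF _ hwpos k j hj' hzz)
        have h3 : hPlus e (e (B i)) + 1 ≤ hPlus e (B i) := by
          apply le_hPlus (hnilE (B i))
          have heq : (e ^ (hPlus e (e (B i)) + 1)) (B i)
              = (e ^ (hPlus e (e (B i)))) (e (B i)) := by
            rw [pow_succ, Module.End.mul_apply]
          rw [heq]
          exact pow_hPlus_ne_zero (hnilE _) hw0
        have h4 : hPlus f (e (B i)) ≤ hPlus f (B i) + 1 :=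
          hPlus_apply_le e f hrel2 (B i) c hc (hnilF (B i))
        exact ⟨j, by omega, rfl⟩
      have hrepr := repr_sum B (e (B i))
      rw [← hrepr]
      exact Submodule.sum_mem _ fun j hj =>
        Submodule.smul_mem _ _ (Submodule.subset_span (hmem j hj))
  intro v hv
  exact hle hv

end Stmt8Aux

/-- In the positive-basis setting, for every `r ≥ 0` the subspace
`V^{≤ r}` is stable under `e` and `f`, and every nonzero `h`-eigenvector in `V^{≤ r}`
satisfies `d(v) ≤ r`. -/
theorem stmt8 (V : Type*) [AddCommGroup V] [Module ℚ V]
    (e f : Module.End ℚ V)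
    (hrel1 : (e * f - f * e) * e - e * (e * f - f * e) = (2 : ℚ) • e)
    (hrel2 : (e * f - f * e) * f - f * (e * f - f * e) = (-2 : ℚ) • f)
    (hlocfin : ∀ v : V, ∃ W : Submodule ℚ V, FiniteDimensional ℚ W ∧
      (∀ x ∈ W, e x ∈ W) ∧ (∀ x ∈ W, f x ∈ W) ∧ v ∈ W)
    (ι : Type*) (B : Module.Basis ι ℚ V)
    (heig : ∀ i : ι, ∃ c : ℚ, (e * f - f * e) (B i) = c • B i)
    (hposE : ∀ v : V, (∀ i, 0 ≤ B.repr v i) → ∀ i, 0 ≤ B.repr (e v) i)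
    (hposF : ∀ v : V, (∀ i, 0 ≤ B.repr v i) → ∀ i, 0 ≤ B.repr (f v) i) :
    ∀ r : ℕ,
      (∀ v ∈ Vle e f B r, e v ∈ Vle e f B r) ∧
      (∀ v ∈ Vle e f B r, f v ∈ Vle e f B r) ∧
      (∀ v ∈ Vle e f B r, v ≠ 0 → (∃ c : ℚ, (e * f - f * e) v = c • v) →
        hPlus e v + hPlus f v + 1 ≤ r) := by
  classical
  intro r
  open Stmt8Aux in
  -- swapped relations
  have hrel1' : (f * e - e * f) * f - f * (f * e - e * f) = (2 : ℚ) • f := by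
    have h : (f * e - e * f) * f - f * (f * e - e * f)
        = -((e * f - f * e) * f - f * (e * f - f * e)) := by noncomm_ring
    rw [h, hrel2]; module
  have hrel2' : (f * e - e * f) * e - e * (f * e - e * f) = (-2 : ℚ) • e := by
    have h : (f * e - e * f) * e - e * (f * e - e * f)
        = -((e * f - f * e) * e - e * (e * f - f * e)) := by noncomm_ring
    rw [h, hrel1]; module
  have heig' : ∀ i : ι, ∃ c : ℚ, (f * e - e * f) (B i) = c • B i := by
    intro i
    obtain ⟨c, hc⟩ := heig i
    refine ⟨-c, ?_⟩
    have h : (f * e - e * f) (B i) = -((e * f - f * e) (B i)) := by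
      simp only [LinearMap.sub_apply, Module.End.mul_apply]; abel
    rw [h, hc]; module
  have hnilE : ∀ v : V, ∃ N, (e ^ N) v = 0 := Stmt8Aux.locNilpotent e f hrel1 hlocfin
  have hnilF : ∀ v : V, ∃ N, (f ^ N) v = 0 := by
    apply Stmt8Aux.locNilpotent f e hrel1'
    intro v
    obtain ⟨W, h1, h2, h3, h4⟩ := hlocfin v
    exact ⟨W, h1, h3, h2, h4⟩
  -- the defining set of `Vle e f B r`, and its symmetric version
  have hsetswap : {x | ∃ i : ι, hPlus f (B i) + hPlus e (B i) + 1 ≤ r ∧ x = B i}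
      = {x | ∃ i : ι, hPlus e (B i) + hPlus f (B i) + 1 ≤ r ∧ x = B i} := by
    ext y
    constructor
    · rintro ⟨i, hi, rfl⟩; exact ⟨i, by omega, rfl⟩
    · rintro ⟨i, hi, rfl⟩; exact ⟨i, by omega, rfl⟩
  refine ⟨?_, ?_, ?_⟩
  · intro v hv
    exact Stmt8Aux.stab_aux e f hrel2 B heig hposE hposF hnilE hnilF r v hv
  · intro v hv
    have := Stmt8Aux.stab_aux f e hrel2' B heig' hposF hposE hnilF hnilE r v
    rw [hsetswap] at this
    exact this hv
  · rintro v hv hv0 ⟨c, hc⟩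
    have hset : {x | ∃ i : ι, hPlus e (B i) + hPlus f (B i) + 1 ≤ r ∧ x = B i}
        = B '' {i | hPlus e (B i) + hPlus f (B i) + 1 ≤ r} := by
      ext y
      constructor
      · rintro ⟨i, hi, rfl⟩; exact ⟨i, hi, rfl⟩
      · rintro ⟨i, hi, rfl⟩; exact ⟨i, hi, rfl⟩
    rw [Vle, hset, Module.Basis.mem_span_image] at hv
    have hsupp_ne : (B.repr v).support.Nonempty := by
      rw [Finsupp.support_nonempty_iff]
      intro h0
      exact hv0 ((LinearEquiv.map_eq_zero_iff B.repr).1 h0)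
    have hwj : ∀ j ∈ (B.repr v).support, (e * f - f * e) (B j) = c • B j := by
      intro j hj
      obtain ⟨cj, hcj⟩ := heig j
      have hjne : B.repr v j ≠ 0 := Finsupp.mem_support_iff.1 hj
      suffices hcc : cj = c by rw [hcj, hcc]
      have h1 : B.repr ((e * f - f * e) v) j = c * B.repr v j := by
        rw [hc, map_smul]; simp
      have h2 : B.repr ((e * f - f * e) v) j = cj * B.repr v j := by
        conv_lhs => rw [← Stmt8Aux.repr_sum B v]
        rw [map_sum, map_sum, Finset.sum_apply']
        rw [Finset.sum_eq_single j]
        · rw [map_smul, map_smul, hcj]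
          simp [Module.Basis.repr_self, Finsupp.smul_apply, smul_eq_mul, Finsupp.single_apply]
          ring
        · intro j' _ hne
          obtain ⟨cj', hcj'⟩ := heig j'
          rw [map_smul, map_smul, hcj']
          simp [Module.Basis.repr_self, Finsupp.smul_apply, smul_eq_mul,
            Finsupp.single_apply, hne]
        · intro h; exact absurd hj h
      exact mul_right_cancel₀ hjne (h2.symm.trans h1)
    obtain ⟨j0, hj0mem, hj0max⟩ :=
      Finset.exists_max_image (B.repr v).support (fun j => hPlus e (B j)) hsupp_ne
    have hEv : hPlus e v ≤ hPlus e (B j0) := by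
      apply Stmt8Aux.hPlus_le
      intro k hk
      by_contra hck
      push_neg at hck
      apply hk
      conv_lhs => rw [← Stmt8Aux.repr_sum B v]
      rw [map_sum]
      apply Finset.sum_eq_zero
      intro j hj
      rw [map_smul]
      have hz : (e ^ k) (B j) = 0 :=
        Stmt8Aux.pow_apply_zero_of_le
          (Stmt8Aux.pow_hPlus_succ_eq_zero (hnilE (B j)))
          (by have := hj0max j hj; omega)
      rw [hz, smul_zero]
    have kv := Stmt8Aux.key_weight e f hrel1 hrel2 hnilE hnilF v hv0 c hc
    have kj0 := Stmt8Aux.key_weight e f hrel1 hrel2 hnilE hnilF (B j0)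
      (B.ne_zero j0) c (hwj j0 hj0mem)
    have hFv : hPlus f v ≤ hPlus f (B j0) := by
      have hq : (hPlus f v : ℚ) ≤ (hPlus f (B j0) : ℚ) := by
        have hcast : (hPlus e v : ℚ) ≤ hPlus e (B j0) := by exact_mod_cast hEv
        linarith [kv, kj0]
      exact_mod_cast hq
    have hr : hPlus e (B j0) + hPlus f (B j0) + 1 ≤ r := hv hj0mem
    omega
end

section
/- For each sign ε ∈ {+, −}, the following assertions are equivalent: (i) for every r ≥ 0, V^{≤r} equals the sum of all finite-dimensional subspaces W of V that are stable under e and f, simple (no stable subspace other than 0 and W), and of dimension ≤ r; (ii) the family {e_ε^i b : b ∈ ℒ_ε, 0 ≤ i ≤ h_ε(b)} is a basis of V; (iii) the family {e_ε^i b : b ∈ ℒ_ε, 0 ≤ i ≤ h_ε(b)} spans V. -/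
/-- (i): for every `r`, `V^{≤ r}` is the sum of all the finite-dimensional subspaces of
`V` stable under `e` and `f`, simple, and of dimension `≤ r`. -/
def PropSumSimples {V : Type*} [AddCommGroup V] [Module ℚ V]
    (e f : Module.End ℚ V) {ι : Type*} (B : Module.Basis ι ℚ V) : Prop :=
  ∀ r : ℕ, Vle e f B r = sSup {W : Submodule ℚ V |
    (∀ x ∈ W, e x ∈ W) ∧ (∀ x ∈ W, f x ∈ W) ∧ FiniteDimensional ℚ W ∧
    Module.finrank ℚ W ≤ r ∧
    (∀ U : Submodule ℚ V, U ≤ W → (∀ x ∈ U, e x ∈ U) → (∀ x ∈ U, f x ∈ U) →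
      U = ⊥ ∨ U = W)}

namespace S10

variable {V : Type*} [AddCommGroup V] [Module ℚ V]

/-- eigenvalue shift under powers of `E`. -/
lemma H_pow_E (E H : Module.End ℚ V) (hHE : H * E - E * H = (2:ℚ) • E)
    {v : V} {c : ℚ} (hv : H v = c • v) (k : ℕ) :
    H ((E ^ k) v) = (c + 2 * k) • (E ^ k) v := by
  induction k with
  | zero => simpa using hv
  | succ k ih =>
    have hHE' : H * E = (2:ℚ) • E + E * H := by
      rw [← hHE]; abel
    have h1 : H (E ((E ^ k) v)) = ((2:ℚ) • E + E * H) ((E ^ k) v) := by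
      rw [← Module.End.mul_apply, hHE']
    simp only [pow_succ', Module.End.mul_apply]
    rw [h1]
    simp only [LinearMap.add_apply, LinearMap.smul_apply, Module.End.mul_apply, ih,
      map_smul]
    rw [← add_smul]
    push_cast
    ring_nf

lemma pow_mem_stable {W : Submodule ℚ V} {E : Module.End ℚ V}
    (hWE : ∀ x ∈ W, E x ∈ W) {v : V} (hv : v ∈ W) (k : ℕ) : (E ^ k) v ∈ W := by
  induction k with
  | zero => simpa using hv
  | succ k ih => rw [pow_succ']; exact hWE _ ih

/-- In a finite-dimensional stable subspace, powers of `E` applied to an eigenvector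
eventually vanish. -/
lemma exists_pow_eq_zero (E H : Module.End ℚ V) (hHE : H * E - E * H = (2:ℚ) • E)
    {W : Submodule ℚ V} (hWfin : FiniteDimensional ℚ W)
    (hWE : ∀ x ∈ W, E x ∈ W) {v : V} (hvW : v ∈ W) {c : ℚ} (hv : H v = c • v) :
    ∃ N, (E ^ N) v = 0 := by
  by_contra hcon
  push_neg at hcon
  have hLI : LinearIndependent ℚ (fun k : ℕ => (E ^ k) v) := by
    apply H.eigenvectors_linearIndependent' (fun k : ℕ => c + 2 * k)
    · intro a b hab
      field_simp at hab
      push_cast at hab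
      exact_mod_cast (by linarith : (a:ℚ) = b)
    · intro k
      exact ⟨(Module.End.mem_eigenspace_iff).2 (H_pow_E E H hHE hv k), hcon k⟩
  have hLI2 : LinearIndependent ℚ (fun k : ℕ => (⟨(E ^ k) v, pow_mem_stable hWE hvW k⟩ : W)) := by
    apply LinearIndependent.of_comp W.subtype
    exact hLI
  haveI := hWfin
  exact Module.Finite.not_linearIndependent_of_infinite _ hLI2


section hPlusBasics

variable {V : Type*} [AddCommGroup V] [Module ℚ V] {E : Module.End ℚ V} {v : V}

lemma pow_eq_zero_of_le {N k : ℕ} (h : (E ^ N) v = 0) (hk : N ≤ k) : (E ^ k) v = 0 := by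
  rw [← Nat.sub_add_cancel hk, pow_add, Module.End.mul_apply, h, map_zero]

lemma bddAbove_setP (hz : ∃ N, (E ^ N) v = 0) : BddAbove {i : ℕ | (E ^ i) v ≠ 0} := by
  obtain ⟨N, hN⟩ := hz
  refine ⟨N, fun k hk => ?_⟩
  by_contra hlt
  exact hk (pow_eq_zero_of_le hN (le_of_not_ge hlt))

lemma hPlus_pow_ne_zero (hz : ∃ N, (E ^ N) v = 0) (hv : v ≠ 0) :
    (E ^ hPlus E v) v ≠ 0 := by
  have h0 : (0 : ℕ) ∈ {i : ℕ | (E ^ i) v ≠ 0} := by simpa using hv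
  exact Nat.sSup_mem ⟨0, h0⟩ (bddAbove_setP hz)

lemma le_hPlus (hz : ∃ N, (E ^ N) v = 0) {k : ℕ} (hk : (E ^ k) v ≠ 0) :
    k ≤ hPlus E v :=
  le_csSup (bddAbove_setP hz) hk

lemma hPlus_le (hv : v ≠ 0) {K : ℕ} (h : (E ^ (K + 1)) v = 0) : hPlus E v ≤ K := by
  apply csSup_le ⟨0, by simpa using hv⟩
  intro k hk
  by_contra hlt
  exact hk (pow_eq_zero_of_le h (by omega))

lemma pow_hPlus_succ (hz : ∃ N, (E ^ N) v = 0) :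
    (E ^ (hPlus E v + 1)) v = 0 := by
  by_contra hne
  exact absurd (le_hPlus hz hne) (by omega)

lemma pow_ne_zero_of_le_hPlus (hz : ∃ N, (E ^ N) v = 0) (hv : v ≠ 0) {k : ℕ}
    (hk : k ≤ hPlus E v) : (E ^ k) v ≠ 0 := by
  intro h
  exact hPlus_pow_ne_zero hz hv (pow_eq_zero_of_le h hk)

end hPlusBasics

section CommLemmas

variable {V : Type*} [AddCommGroup V] [Module ℚ V]

lemma E_F_apply (E F H : Module.End ℚ V) (hH : E * F - F * E = H) (v : V) :
    E (F v) = F (E v) + H v := by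
  have := congrArg (fun (T : Module.End ℚ V) => T v) hH
  simp only [LinearMap.sub_apply, Module.End.mul_apply] at this
  linear_combination (norm := abel) this

/-- `E^{k+1} (F v) = F (E^{k+1} v) + (k+1)(c+k) • E^k v` for an `H`-eigenvector `v`. -/
lemma pow_E_F (E F H : Module.End ℚ V) (hH : E * F - F * E = H)
    (hHE : H * E - E * H = (2:ℚ) • E) {v : V} {c : ℚ} (hv : H v = c • v) (k : ℕ) :
    (E ^ (k + 1)) (F v) = F ((E ^ (k + 1)) v) + (((k:ℚ) + 1) * (c + k)) • (E ^ k) v := by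
  induction k with
  | zero =>
    simpa [E_F_apply E F H hH v, hv] using by push_cast; rw [one_mul, add_zero]
  | succ k ih =>
    have h1 : (E ^ (k + 1 + 1)) (F v) = E ((E ^ (k + 1)) (F v)) := by
      rw [pow_succ', Module.End.mul_apply]
    rw [h1, ih, map_add, map_smul]
    have h2 : E (F ((E ^ (k+1)) v)) = F (E ((E ^ (k+1)) v)) + H ((E ^ (k+1)) v) :=
      E_F_apply E F H hH _
    rw [h2, H_pow_E E H hHE hv (k+1)]
    simp only [pow_succ', Module.End.mul_apply]
    rw [add_assoc, ← add_smul]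
    congr 2
    push_cast
    ring

lemma lowest_weight (E F H : Module.End ℚ V) (hH : E * F - F * E = H)
    (hHE : H * E - E * H = (2:ℚ) • E) {v : V} {c : ℚ} (hv : H v = c • v)
    (hv0 : v ≠ 0) (hFv : F v = 0) (hz : ∃ N, (E ^ N) v = 0) :
    c = -(hPlus E v : ℚ) := by
  set n := hPlus E v with hn
  have h1 : (E ^ (n + 1)) (F v) = 0 := by rw [hFv, map_zero]
  rw [pow_E_F E F H hH hHE hv n, pow_hPlus_succ hz, map_zero, zero_add] at h1
  rcases smul_eq_zero.1 h1 with h | h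
  · have hne : ((n:ℚ) + 1) ≠ 0 := by positivity
    have h' : c + (n:ℚ) = 0 := by
      rcases mul_eq_zero.1 h with h' | h'
      · exact absurd h' hne
      · exact h'
    linarith
  · exact absurd h (hPlus_pow_ne_zero hz hv0)

end CommLemmas

section Lowest

variable {V : Type*} [AddCommGroup V] [Module ℚ V]
  (E F H : Module.End ℚ V)

lemma F_pow_E_lowest (hH : E * F - F * E = H) (hHE : H * E - E * H = (2:ℚ) • E)
    {v : V} {n : ℕ} (hv : H v = (-(n:ℚ)) • v) (hFv : F v = 0) (i : ℕ) :
    F ((E ^ (i + 1)) v) = (((i:ℚ) + 1) * ((n:ℚ) - i)) • (E ^ i) v := by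
  have h := pow_E_F E F H hH hHE hv i
  rw [hFv, map_zero] at h
  have h' : F ((E ^ (i+1)) v) = -(((((i:ℚ)) + 1) * (-(n:ℚ) + i)) • (E ^ i) v) :=
    eq_neg_of_add_eq_zero_left h.symm
  rw [h', ← neg_smul]
  congr 1
  ring

lemma Fpow_Epow_pos (hH : E * F - F * E = H) (hHE : H * E - E * H = (2:ℚ) • E)
    {v : V} {n : ℕ} (hv : H v = (-(n:ℚ)) • v) (hFv : F v = 0) :
    ∀ j i, j ≤ i → i ≤ n → ∃ q : ℚ, 0 < q ∧ (F ^ j) ((E ^ i) v) = q • (E ^ (i - j)) v := by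
  intro j
  induction j with
  | zero => exact fun i _ _ => ⟨1, one_pos, by simp⟩
  | succ j ih =>
    intro i hji hin
    cases i with
    | zero => omega
    | succ i' =>
      have h1 : (F ^ (j + 1)) ((E ^ (i' + 1)) v) = (F ^ j) (F ((E ^ (i' + 1)) v)) := by
        rw [pow_succ, Module.End.mul_apply]
      obtain ⟨q, hq, hq2⟩ := ih i' (by omega) (by omega)
      have hpos : 0 < ((i':ℚ) + 1) * ((n:ℚ) - i') := by
        have : (i':ℚ) < (n:ℚ) := by exact_mod_cast (by omega : i' < n)
        have h2 : (0:ℚ) < (i':ℚ) + 1 := by positivity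
        nlinarith
      have hidx : i' + 1 - (j + 1) = i' - j := by omega
      refine ⟨((i':ℚ) + 1) * ((n:ℚ) - i') * q, by positivity, ?_⟩
      rw [hidx, h1, F_pow_E_lowest E F H hH hHE hv hFv i', map_smul, hq2, smul_smul]

lemma Fpow_Epow_zero (hH : E * F - F * E = H) (hHE : H * E - E * H = (2:ℚ) • E)
    {v : V} {n : ℕ} (hv : H v = (-(n:ℚ)) • v) (hFv : F v = 0) :
    ∀ j i, i < j → i ≤ n → (F ^ j) ((E ^ i) v) = 0 := by
  intro j i hij hin
  obtain ⟨q, _, hq2⟩ := Fpow_Epow_pos E F H hH hHE hv hFv i i le_rfl hin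
  have hstep : (F ^ (i + 1)) ((E ^ i) v) = 0 := by
    rw [pow_succ', Module.End.mul_apply, hq2]
    simp [Nat.sub_self, hFv]
  have hj : F ^ j = F ^ (j - (i+1)) * F ^ (i+1) := by
    rw [← pow_add]; congr 1; omega
  rw [hj, Module.End.mul_apply, hstep, map_zero]

end Lowest

section BasisLemmas

variable {V : Type*} [AddCommGroup V] [Module ℚ V]
  {ι : Type*} (E H : Module.End ℚ V) (B : Module.Basis ι ℚ V) (c : ι → ℚ)

lemma repr_H (hcB : ∀ i, H (B i) = c i • B i) (v : V) (j : ι) :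
    B.repr (H v) j = c j * B.repr v j := by
  have hmap : (B.coord j).comp H = c j • B.coord j := by
    apply B.ext
    intro k
    simp only [LinearMap.comp_apply, LinearMap.smul_apply, hcB k, map_smul,
      Module.Basis.coord_apply, Module.Basis.repr_self, smul_eq_mul]
    rcases eq_or_ne k j with rfl | hkj
    · simp
    · simp [Finsupp.single_eq_of_ne' hkj]
  have h := congrArg (fun φ : V →ₗ[ℚ] ℚ => φ v) hmap
  simpa [Module.Basis.coord_apply] using h

lemma weight_support (hcB : ∀ i, H (B i) = c i • B i) {v : V} {m : ℚ} {j : ι}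
    (hv : H v = m • v) (hj : B.repr v j ≠ 0) : c j = m := by
  have h1 : c j * B.repr v j = m * B.repr v j := by
    rw [← repr_H H B c hcB v j, hv, map_smul]
    simp
  exact mul_right_cancel₀ hj h1

lemma repr_basis_nonneg (i j : ι) : 0 ≤ B.repr (B i) j := by
  classical
  simp only [Module.Basis.repr_self, Finsupp.single_apply]
  split <;> norm_num

lemma repr_pow_nonneg (hposE : ∀ v : V, (∀ i, 0 ≤ B.repr v i) → ∀ i, 0 ≤ B.repr (E v) i)
    {v : V} (hv : ∀ j, 0 ≤ B.repr v j) (k : ℕ) : ∀ j, 0 ≤ B.repr ((E ^ k) v) j := by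
  induction k with
  | zero => simpa using hv
  | succ k ih =>
    intro j
    rw [pow_succ', Module.End.mul_apply]
    exact hposE _ ih j

lemma no_cancel (hposE : ∀ v : V, (∀ i, 0 ≤ B.repr v i) → ∀ i, 0 ≤ B.repr (E v) i)
    {v : V} (hv : ∀ j, 0 ≤ B.repr v j) {j0 : ι} (hj0 : B.repr v j0 ≠ 0) {k : ℕ}
    (hk : (E ^ k) v = 0) : (E ^ k) (B j0) = 0 := by
  classical
  have hv0 : (E ^ k) v = ∑ j ∈ (B.repr v).support, (B.repr v) j • (E ^ k) (B j) := by
    conv_lhs => rw [← B.linearCombination_repr v]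
    rw [Finsupp.linearCombination_apply, Finsupp.sum, map_sum]
    simp only [map_smul]
  have hrepr : ∀ j', B.repr ((E ^ k) (B j0)) j' = 0 := by
    intro j'
    have hzero : ∑ j ∈ (B.repr v).support, (B.repr v) j * (B.repr ((E ^ k) (B j)) j') = 0 := by
      have h2 := congrArg (fun w => B.repr w j') (hv0.symm.trans hk)
      simpa [map_sum, map_smul] using h2
    have hterm : ∀ j ∈ (B.repr v).support,
        0 ≤ (B.repr v) j * (B.repr ((E ^ k) (B j)) j') :=
      fun j _ => mul_nonneg (hv j) (repr_pow_nonneg E B hposE (repr_basis_nonneg B j) k j')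
    have h3 := (Finset.sum_eq_zero_iff_of_nonneg hterm).1 hzero j0
      (Finsupp.mem_support_iff.2 hj0)
    rcases mul_eq_zero.1 h3 with h | h
    · exact absurd h hj0
    · exact h
  have : B.repr ((E ^ k) (B j0)) = 0 := Finsupp.ext hrepr
  exact B.repr.map_eq_zero_iff.1 this

end BasisLemmas

section EigComp

variable {V : Type*} [AddCommGroup V] [Module ℚ V] (H : Module.End ℚ V)

/-- If a finite sum of `H`-eigenvectors of pairwise distinct eigenvalues lies in an
`H`-stable submodule, each summand does. -/
lemma eigcomp (W : Submodule ℚ V) (hW : ∀ x ∈ W, H x ∈ W) (t : Finset ℚ) :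
    ∀ u : ℚ → V, (∀ m ∈ t, H (u m) = m • u m) → (∑ m ∈ t, u m) ∈ W →
      ∀ m ∈ t, u m ∈ W := by
  classical
  induction t using Finset.induction_on with
  | empty => intro u _ _ m hm; exact absurd hm (Finset.notMem_empty m)
  | @insert a t ha ih =>
    intro u hu hsum
    rw [Finset.sum_insert ha] at hsum
    set x := u a + ∑ m ∈ t, u m with hx
    have hx2 : H x - a • x ∈ W := W.sub_mem (hW x hsum) (W.smul_mem a hsum)
    have hx3 : H x - a • x = ∑ m ∈ t, (m - a) • u m := by
      rw [hx, map_add, map_sum, smul_add, Finset.smul_sum]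
      rw [hu a (Finset.mem_insert_self a t)]
      rw [show ∀ y z w : V, y + z - (y + w) = z - w from fun y z w => by abel]
      rw [← Finset.sum_sub_distrib]
      apply Finset.sum_congr rfl
      intro m hm
      rw [hu m (Finset.mem_insert_of_mem hm), sub_smul]
    have hall : ∀ m ∈ t, (m - a) • u m ∈ W := by
      apply ih (fun m => (m - a) • u m)
      · intro m hm
        rw [map_smul, hu m (Finset.mem_insert_of_mem hm), smul_comm]
      · rw [← hx3]; exact hx2
    have humem : ∀ m ∈ t, u m ∈ W := by
      intro m hm
      have hma : m - a ≠ 0 := sub_ne_zero.2 (by rintro rfl; exact ha hm)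
      have := W.smul_mem (m - a)⁻¹ (hall m hm)
      rwa [smul_smul, inv_mul_cancel₀ hma, one_smul] at this
    intro m hm
    rcases Finset.mem_insert.1 hm with rfl | hm'
    · have : u m = x - ∑ m' ∈ t, u m' := by rw [hx]; abel
      rw [this]
      exact W.sub_mem hsum (Submodule.sum_mem W humem)
    · exact humem m hm'

end EigComp

section Mirror

variable {V : Type*} [AddCommGroup V] [Module ℚ V] (E F H : Module.End ℚ V)

lemma mirror_hH (hH : E * F - F * E = H) : F * E - E * F = -H := by
  rw [← hH]; abel

lemma mirror_hHE (hHF : H * F - F * H = (-2:ℚ) • F) :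
    (-H) * F - F * (-H) = (2:ℚ) • F := by
  have h2 : F * H - H * F = (2:ℚ) • F := by
    rw [← neg_sub, hHF, neg_smul]
    norm_num
  rw [neg_mul, mul_neg, sub_neg_eq_add, ← h2]
  abel

lemma mirror_hHF (hHE : H * E - E * H = (2:ℚ) • E) :
    (-H) * E - E * (-H) = (-2:ℚ) • E := by
  have h2 : E * H - H * E = (-2:ℚ) • E := by
    rw [← neg_sub, hHE, neg_smul]
  rw [neg_mul, mul_neg, sub_neg_eq_add, ← h2]
  abel

end Mirror

section Main

variable {V : Type*} [AddCommGroup V] [Module ℚ V] {ι : Type*}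

/-- The index type of the family `{E^i b : b ∈ L_+, i ≤ h_+(b)}`. -/
abbrev Idx (E F : Module.End ℚ V) (B : Module.Basis ι ℚ V) : Type _ :=
  {p : ι × ℕ // F (B p.1) = 0 ∧ p.2 ≤ hPlus E (B p.1)}

/-- The family itself. -/
noncomputable abbrev fam (E F : Module.End ℚ V) (B : Module.Basis ι ℚ V) : Idx E F B → V :=
  fun x => (E ^ x.1.2) (B x.1.1)

variable (E F H : Module.End ℚ V) (B : Module.Basis ι ℚ V) (c : ι → ℚ)

/-- eigenvectors have bounded `E`-strings. -/
lemma eig_bddE (hHE : H * E - E * H = (2:ℚ) • E)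
    (hlocfin : ∀ v : V, ∃ W : Submodule ℚ V, FiniteDimensional ℚ W ∧
      (∀ x ∈ W, E x ∈ W) ∧ (∀ x ∈ W, F x ∈ W) ∧ v ∈ W)
    {v : V} {m : ℚ} (hv : H v = m • v) : ∃ N, (E ^ N) v = 0 := by
  obtain ⟨W, hWfin, hWE, _, hvW⟩ := hlocfin v
  exact exists_pow_eq_zero E H hHE hWfin hWE hvW hv

/-- the weight of `b ∈ L_+` is `-h_+(b)`. -/
lemma cL (hH : E * F - F * E = H) (hHE : H * E - E * H = (2:ℚ) • E)
    (hlocfin : ∀ v : V, ∃ W : Submodule ℚ V, FiniteDimensional ℚ W ∧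
      (∀ x ∈ W, E x ∈ W) ∧ (∀ x ∈ W, F x ∈ W) ∧ v ∈ W)
    (hcB : ∀ i, H (B i) = c i • B i) {j : ι} (hFj : F (B j) = 0) :
    c j = -(hPlus E (B j) : ℚ) :=
  lowest_weight E F H hH hHE (hcB j) (B.ne_zero j) hFj
    (eig_bddE E F H hHE hlocfin (hcB j))

lemma hcB_lowest (hH : E * F - F * E = H) (hHE : H * E - E * H = (2:ℚ) • E)
    (hlocfin : ∀ v : V, ∃ W : Submodule ℚ V, FiniteDimensional ℚ W ∧
      (∀ x ∈ W, E x ∈ W) ∧ (∀ x ∈ W, F x ∈ W) ∧ v ∈ W)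
    (hcB : ∀ i, H (B i) = c i • B i) {j : ι} (hFj : F (B j) = 0) :
    H (B j) = (-(hPlus E (B j) : ℚ)) • B j := by
  rw [← cL E F H B c hH hHE hlocfin hcB hFj]
  exact hcB j

lemma fam_core (hH : E * F - F * E = H) (hHE : H * E - E * H = (2:ℚ) • E)
    (hlocfin : ∀ v : V, ∃ W : Submodule ℚ V, FiniteDimensional ℚ W ∧
      (∀ x ∈ W, E x ∈ W) ∧ (∀ x ∈ W, F x ∈ W) ∧ v ∈ W)
    (hcB : ∀ i, H (B i) = c i • B i) :
    ∀ K : ℕ, ∀ s : Finset (Idx E F B), ∀ g : Idx E F B → ℚ,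
      (∀ x ∈ s, x.1.2 ≤ K) → ∑ x ∈ s, g x • fam E F B x = 0 → ∀ x ∈ s, g x = 0 := by
  classical
  intro K
  induction K using Nat.strong_induction_on with
  | _ K ih =>
  intro s g hbd hsum x hx
  -- choose the positive scalars for the top layer
  have key : ∀ y : Idx E F B, ∃ q : ℚ,
      y.1.2 = K → (0 < q ∧ (F ^ K) (fam E F B y) = q • B y.1.1) := by
    intro y
    by_cases hy : y.1.2 = K
    · obtain ⟨q, hq1, hq2⟩ := Fpow_Epow_pos E F H hH hHE
        (hcB_lowest E F H B c hH hHE hlocfin hcB y.2.1) y.2.1 K y.1.2 (le_of_eq hy.symm)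
        y.2.2
      refine ⟨q, fun _ => ⟨hq1, ?_⟩⟩
      rw [show fam E F B y = (E ^ y.1.2) (B y.1.1) from rfl, hq2, hy, Nat.sub_self,
        pow_zero, Module.End.one_apply]
    · exact ⟨1, fun h => absurd h hy⟩
  choose q hq using key
  -- apply F^K to the sum
  have h1 : ∑ y ∈ s, g y • (F ^ K) (fam E F B y) = 0 := by
    have h0 := congrArg (fun w => (F ^ K) w) hsum
    simpa [map_sum, map_smul] using h0
  have hzero_lt : ∀ y : Idx E F B, y ∈ s → y.1.2 ≠ K → (F ^ K) (fam E F B y) = 0 := by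
    intro y hy hne
    exact Fpow_Epow_zero E F H hH hHE
      (hcB_lowest E F H B c hH hHE hlocfin hcB y.2.1) y.2.1 K y.1.2
      (lt_of_le_of_ne (hbd y hy) hne) y.2.2
  have h2 : ∑ y ∈ s.filter (fun y => y.1.2 = K), (g y * q y) • B y.1.1 = 0 := by
    rw [← Finset.sum_filter_add_sum_filter_not s (fun y => y.1.2 = K)] at h1
    have hrest : ∑ y ∈ s.filter (fun y => ¬ y.1.2 = K), g y • (F ^ K) (fam E F B y) = 0 :=
      Finset.sum_eq_zero fun y hy => by
        rw [hzero_lt y (Finset.mem_of_mem_filter y hy) (Finset.mem_filter.1 hy).2, smul_zero]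
    rw [hrest, add_zero] at h1
    have heq : ∑ y ∈ s.filter (fun y => y.1.2 = K), (g y * q y) • B y.1.1
        = ∑ y ∈ s.filter (fun y => y.1.2 = K), g y • (F ^ K) (fam E F B y) :=
      Finset.sum_congr rfl fun y hy => by
        rw [(hq y (Finset.mem_filter.1 hy).2).2, smul_smul]
    rw [heq]
    exact h1
  -- top layer coefficients vanish
  have hgK : ∀ y ∈ s, y.1.2 = K → g y = 0 := by
    intro y hy hyK
    have hyin : y ∈ s.filter (fun y => y.1.2 = K) := Finset.mem_filter.2 ⟨hy, hyK⟩
    have h3 := congrArg (fun w => (B.repr w) y.1.1) h2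
    simp only [map_sum, map_smul, Finset.sum_apply', Finsupp.smul_apply, Module.Basis.repr_self,
      map_zero, Finsupp.coe_zero, Pi.zero_apply, smul_eq_mul] at h3
    rw [Finset.sum_eq_single_of_mem y hyin] at h3
    · rw [Finsupp.single_eq_same, mul_one] at h3
      rcases mul_eq_zero.1 h3 with h | h
      · exact h
      · exact absurd h (ne_of_gt (hq y hyK).1)
    · intro z hz hzy
      have hzK := (Finset.mem_filter.1 hz).2
      rcases eq_or_ne z.1.1 y.1.1 with hjj | hjj
      · exfalso
        apply hzy
        apply Subtype.ext
        exact Prod.ext hjj (hzK.trans hyK.symm)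
      · rw [Finsupp.single_eq_of_ne' hjj, mul_zero]
  -- the remaining layers by strong induction
  by_cases hxK : x.1.2 = K
  · exact hgK x hx hxK
  · have hKpos : 0 < K := by
      have := hbd x hx
      omega
    have hsum' : ∑ y ∈ s.filter (fun y => ¬ y.1.2 = K), g y • fam E F B y = 0 := by
      rw [← Finset.sum_filter_add_sum_filter_not s (fun y => y.1.2 = K)] at hsum
      have htop : ∑ y ∈ s.filter (fun y => y.1.2 = K), g y • fam E F B y = 0 :=
        Finset.sum_eq_zero fun y hy => by
          rw [hgK y (Finset.mem_of_mem_filter y hy) (Finset.mem_filter.1 hy).2, zero_smul]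
      rw [htop, zero_add] at hsum
      exact hsum
    refine ih (K - 1) (by omega) (s.filter (fun y => ¬ y.1.2 = K)) g ?_ hsum' x
      (Finset.mem_filter.2 ⟨hx, hxK⟩)
    intro y hy
    have h4 := hbd y (Finset.mem_of_mem_filter y hy)
    have h5 := (Finset.mem_filter.1 hy).2
    omega

/-- The family is always linearly independent. -/
lemma fam_li (hH : E * F - F * E = H) (hHE : H * E - E * H = (2:ℚ) • E)
    (hlocfin : ∀ v : V, ∃ W : Submodule ℚ V, FiniteDimensional ℚ W ∧
      (∀ x ∈ W, E x ∈ W) ∧ (∀ x ∈ W, F x ∈ W) ∧ v ∈ W)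
    (hcB : ∀ i, H (B i) = c i • B i) :
    LinearIndependent ℚ (fam E F B) := by
  rw [linearIndependent_iff']
  intro s g hsum x hx
  exact fam_core E F H B c hH hHE hlocfin hcB (s.sup (fun y => y.1.2)) s g
    (fun y hy => Finset.le_sup (f := fun y : Idx E F B => y.1.2) hy) hsum x hx

end Main

section SimplePkg

variable {V : Type*} [AddCommGroup V] [Module ℚ V]

/-- the simple submodule generated by a lowest weight vector `v` with `h_+(v) = n`. -/
noncomputable def Uv (E : Module.End ℚ V) (v : V) (n : ℕ) : Submodule ℚ V :=
  Submodule.span ℚ (Set.range fun i : Fin (n + 1) => (E ^ (i : ℕ)) v)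

variable (E F H : Module.End ℚ V) {v : V} {n : ℕ}

lemma mem_Uv_gen {i : ℕ} (hi : i ≤ n) : (E ^ i) v ∈ Uv E v n :=
  Submodule.subset_span ⟨⟨i, by omega⟩, rfl⟩

lemma Uv_finite : FiniteDimensional ℚ (Uv E v n) :=
  FiniteDimensional.span_of_finite ℚ (Set.finite_range _)

lemma Uv_stableE (hEtop : (E ^ (n + 1)) v = 0) : ∀ x ∈ Uv E v n, E x ∈ Uv E v n := by
  intro x hx
  induction hx using Submodule.span_induction with
  | mem x hx =>
    obtain ⟨i, rfl⟩ := hx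
    have h1 : E ((E ^ (i : ℕ)) v) = (E ^ ((i : ℕ) + 1)) v := by
      rw [pow_succ', Module.End.mul_apply]
    rw [h1]
    rcases lt_or_eq_of_le (Nat.lt_succ_iff.1 i.2) with h | h
    · exact mem_Uv_gen E (by omega)
    · rw [h, hEtop]; exact Submodule.zero_mem _
  | zero => rw [map_zero]; exact Submodule.zero_mem _
  | add x y _ _ ihx ihy => rw [map_add]; exact Submodule.add_mem _ ihx ihy
  | smul a x _ ihx => rw [map_smul]; exact Submodule.smul_mem _ a ihx

lemma Uv_stableF (hH : E * F - F * E = H) (hHE : H * E - E * H = (2:ℚ) • E)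
    (hv : H v = (-(n:ℚ)) • v) (hFv : F v = 0) :
    ∀ x ∈ Uv E v n, F x ∈ Uv E v n := by
  intro x hx
  induction hx using Submodule.span_induction with
  | mem x hx =>
    obtain ⟨i, rfl⟩ := hx
    show F ((E ^ (i : ℕ)) v) ∈ Uv E v n
    rcases Nat.eq_zero_or_pos (i : ℕ) with h | h
    · rw [h, pow_zero, Module.End.one_apply, hFv]; exact Submodule.zero_mem _
    · obtain ⟨i', hi'⟩ := Nat.exists_eq_succ_of_ne_zero (Nat.pos_iff_ne_zero.1 h)
      have hile : (i : ℕ) ≤ n := Nat.lt_succ_iff.1 i.2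
      rw [hi', F_pow_E_lowest E F H hH hHE hv hFv]
      exact Submodule.smul_mem _ _ (mem_Uv_gen E (by omega))
  | zero => rw [map_zero]; exact Submodule.zero_mem _
  | add x y _ _ ihx ihy => rw [map_add]; exact Submodule.add_mem _ ihx ihy
  | smul a x _ ihx => rw [map_smul]; exact Submodule.smul_mem _ a ihx

lemma Uv_li (hHE : H * E - E * H = (2:ℚ) • E) (hv : H v = (-(n:ℚ)) • v)
    (hnz : ∀ i ≤ n, (E ^ i) v ≠ 0) :
    LinearIndependent ℚ (fun i : Fin (n + 1) => (E ^ (i : ℕ)) v) := by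
  apply H.eigenvectors_linearIndependent' (fun i : Fin (n + 1) => -(n:ℚ) + 2 * (i : ℕ))
  · intro a b hab
    simp only at hab
    have : ((a : ℕ) : ℚ) = ((b : ℕ) : ℚ) := by linarith
    exact Fin.ext (by exact_mod_cast this)
  · intro i
    constructor
    · exact (Module.End.mem_eigenspace_iff).2 (H_pow_E E H hHE hv (i : ℕ))
    · exact hnz _ (Nat.lt_succ_iff.1 i.2)

lemma Uv_finrank (hHE : H * E - E * H = (2:ℚ) • E) (hv : H v = (-(n:ℚ)) • v)
    (hnz : ∀ i ≤ n, (E ^ i) v ≠ 0) :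
    Module.finrank ℚ (Uv E v n) = n + 1 := by
  rw [Uv, finrank_span_eq_card (Uv_li E H hHE hv hnz), Fintype.card_fin]

lemma Uv_simple (hH : E * F - F * E = H) (hHE : H * E - E * H = (2:ℚ) • E)
    (hv : H v = (-(n:ℚ)) • v) (hFv : F v = 0) (hEtop : (E ^ (n + 1)) v = 0)
    (hnz : ∀ i ≤ n, (E ^ i) v ≠ 0) :
    ∀ U : Submodule ℚ V, U ≤ Uv E v n → (∀ x ∈ U, E x ∈ U) → (∀ x ∈ U, F x ∈ U) →
      U = ⊥ ∨ U = Uv E v n := by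
  classical
  intro U hU hUE hUF
  by_cases hbot : U = ⊥
  · exact Or.inl hbot
  right
  obtain ⟨u, huU, hune⟩ := Submodule.exists_mem_ne_zero_of_ne_bot hbot
  obtain ⟨a, ha⟩ := (Submodule.mem_span_range_iff_exists_fun ℚ).1 (hU huU)
  set s : Finset (Fin (n + 1)) := Finset.univ.filter (fun i => a i ≠ 0) with hs
  have hsne : s.Nonempty := by
    by_contra hse
    apply hune
    rw [← ha]
    apply Finset.sum_eq_zero
    intro i _
    have : a i = 0 := by
      by_contra hai
      exact hse ⟨i, Finset.mem_filter.2 ⟨Finset.mem_univ i, hai⟩⟩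
    rw [this, zero_smul]
  set K := s.max' hsne with hK
  have hKs : K ∈ s := s.max'_mem hsne
  have haK : a K ≠ 0 := (Finset.mem_filter.1 hKs).2
  obtain ⟨q, hqpos, hq⟩ := Fpow_Epow_pos E F H hH hHE hv hFv (K : ℕ) (K : ℕ) le_rfl
    (Nat.lt_succ_iff.1 K.2)
  have hq' : (F ^ (K : ℕ)) ((E ^ (K : ℕ)) v) = q • v := by
    rw [hq, Nat.sub_self, pow_zero, Module.End.one_apply]
  have hFKu : (F ^ (K : ℕ)) u = (a K * q) • v := by
    rw [← ha, map_sum]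
    rw [Finset.sum_eq_single_of_mem K (Finset.mem_univ K)]
    · rw [map_smul, hq', smul_smul]
    · intro i _ hiK
      rw [map_smul]
      rcases lt_or_gt_of_ne (fun h : (i : ℕ) = (K : ℕ) => hiK (Fin.ext h)) with h | h
      · rw [Fpow_Epow_zero E F H hH hHE hv hFv (K : ℕ) (i : ℕ) h
          (Nat.lt_succ_iff.1 i.2), smul_zero]
      · have : a i = 0 := by
          by_contra hai
          have his : i ∈ s := Finset.mem_filter.2 ⟨Finset.mem_univ i, hai⟩
          have := s.le_max' i his
          rw [← hK] at this
          exact absurd h (not_lt.2 (by exact_mod_cast this))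
        rw [this, zero_smul]
  have hvU : v ∈ U := by
    have h1 : (F ^ (K : ℕ)) u ∈ U := pow_mem_stable hUF huU _
    rw [hFKu] at h1
    have h2 := U.smul_mem (a K * q)⁻¹ h1
    rwa [smul_smul, inv_mul_cancel₀ (mul_ne_zero haK (ne_of_gt hqpos)), one_smul] at h2
  apply le_antisymm hU
  rw [Uv, Submodule.span_le]
  rintro x ⟨i, rfl⟩
  exact pow_mem_stable hUE hvU _

end SimplePkg

section Expand

variable {V : Type*} [AddCommGroup V] [Module ℚ V] {ι : Type*}
variable (E F H : Module.End ℚ V) (B : Module.Basis ι ℚ V) (c : ι → ℚ)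

/-- If `x0` occurs in an expansion of `v` in the family, then `F^{i_0} v ≠ 0`. -/
lemma expand_hF (hH : E * F - F * E = H) (hHE : H * E - E * H = (2:ℚ) • E)
    (hlocfin : ∀ v : V, ∃ W : Submodule ℚ V, FiniteDimensional ℚ W ∧
      (∀ x ∈ W, E x ∈ W) ∧ (∀ x ∈ W, F x ∈ W) ∧ v ∈ W)
    (hcB : ∀ i, H (B i) = c i • B i)
    {l : Idx E F B →₀ ℚ} {x0 : Idx E F B} (hx0 : l x0 ≠ 0) :
    (F ^ (x0.1.2)) (l.sum fun x a => a • fam E F B x) ≠ 0 := by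
  classical
  intro hzero
  set i0 := x0.1.2 with hi0
  have hLI := fam_li E F H B c hH hHE hlocfin hcB
  -- the scalars and targets for indices with i ≥ i0
  have key : ∀ x : Idx E F B, ∃ q : ℚ, i0 ≤ x.1.2 →
      (0 < q ∧ (F ^ i0) (fam E F B x) = q • fam E F B
        ⟨(x.1.1, x.1.2 - i0), ⟨x.2.1, le_trans (Nat.sub_le _ _) x.2.2⟩⟩) := by
    intro x
    by_cases hx : i0 ≤ x.1.2
    · obtain ⟨q, hq1, hq2⟩ := Fpow_Epow_pos E F H hH hHE
        (hcB_lowest E F H B c hH hHE hlocfin hcB x.2.1) x.2.1 i0 x.1.2 hx x.2.2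
      exact ⟨q, fun _ => ⟨hq1, hq2⟩⟩
    · exact ⟨1, fun h => absurd h hx⟩
  choose q hq using key
  set ymap : Idx E F B → Idx E F B := fun x =>
    ⟨(x.1.1, x.1.2 - i0), ⟨x.2.1, le_trans (Nat.sub_le _ _) x.2.2⟩⟩ with hymap
  set t := l.support.filter (fun x => i0 ≤ x.1.2) with ht
  set l' : Idx E F B →₀ ℚ := ∑ x ∈ t, Finsupp.single (ymap x) (l x * q x) with hl'
  have hcomb : Finsupp.linearCombination ℚ (fam E F B) l' = 0 := by
    rw [hl', map_sum]
    have h1 : ∀ x ∈ t, Finsupp.linearCombination ℚ (fam E F B)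
        (Finsupp.single (ymap x) (l x * q x)) = l x • (F ^ i0) (fam E F B x) := by
      intro x hx
      rw [Finsupp.linearCombination_single, (hq x (Finset.mem_filter.1 hx).2).2, smul_smul]
    rw [Finset.sum_congr rfl h1]
    have h2 : ∑ x ∈ t, l x • (F ^ i0) (fam E F B x)
        = ∑ x ∈ l.support, l x • (F ^ i0) (fam E F B x) := by
      apply Finset.sum_subset (Finset.filter_subset _ _)
      intro x hx hxt
      have hxlt : x.1.2 < i0 := by
        by_contra hge
        exact hxt (Finset.mem_filter.2 ⟨hx, le_of_not_gt hge⟩)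
      rw [Fpow_Epow_zero E F H hH hHE
        (hcB_lowest E F H B c hH hHE hlocfin hcB x.2.1) x.2.1 i0 x.1.2 hxlt x.2.2, smul_zero]
    rw [h2]
    have h3 : ∑ x ∈ l.support, l x • (F ^ i0) (fam E F B x)
        = (F ^ i0) (l.sum fun x a => a • fam E F B x) := by
      rw [Finsupp.sum, map_sum]
      exact Finset.sum_congr rfl fun x _ => (map_smul _ _ _).symm
    rw [h3, hzero]
  have hl'0 : l' = 0 := linearIndependent_iff.1 hLI l' hcomb
  have hx0t : x0 ∈ t := Finset.mem_filter.2 ⟨Finsupp.mem_support_iff.2 hx0, le_rfl⟩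
  have heval : l' (ymap x0) = l x0 * q x0 := by
    rw [hl', Finset.sum_apply']
    rw [Finset.sum_eq_single_of_mem x0 hx0t]
    · rw [Finsupp.single_eq_same]
    · intro z hz hzx
      have hzt := (Finset.mem_filter.1 hz).2
      apply Finsupp.single_eq_of_ne'
      intro heq
      apply hzx
      rw [hymap] at heq
      simp only [Subtype.mk_eq_mk, Prod.mk.injEq] at heq
      have hx0ge : i0 ≤ x0.1.2 := le_rfl
      apply Subtype.ext
      apply Prod.ext heq.1
      omega
  rw [hl'0] at heval
  simp only [Finsupp.coe_zero, Pi.zero_apply] at heval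
  exact hx0 (by
    rcases mul_eq_zero.1 heval.symm with h | h
    · exact h
    · exact absurd h (ne_of_gt ((hq x0 le_rfl).1)))

/-- If `x0 = (b₀, i₀)` occurs in an expansion of `v` in the family, then
`E^{n₀ - i₀} v ≠ 0`. -/
lemma expand_hE (hH : E * F - F * E = H) (hHE : H * E - E * H = (2:ℚ) • E)
    (hlocfin : ∀ v : V, ∃ W : Submodule ℚ V, FiniteDimensional ℚ W ∧
      (∀ x ∈ W, E x ∈ W) ∧ (∀ x ∈ W, F x ∈ W) ∧ v ∈ W)
    (hcB : ∀ i, H (B i) = c i • B i)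
    {l : Idx E F B →₀ ℚ} {x0 : Idx E F B} (hx0 : l x0 ≠ 0) :
    (E ^ (hPlus E (B x0.1.1) - x0.1.2)) (l.sum fun x a => a • fam E F B x) ≠ 0 := by
  classical
  intro hzero
  set KK := hPlus E (B x0.1.1) - x0.1.2 with hKK
  have hLI := fam_li E F H B c hH hHE hlocfin hcB
  set t := l.support.filter (fun x => x.1.2 + KK ≤ hPlus E (B x.1.1)) with ht
  set ymap : Idx E F B → Idx E F B := fun x =>
    if hx : x.1.2 + KK ≤ hPlus E (B x.1.1) then ⟨(x.1.1, x.1.2 + KK), ⟨x.2.1, hx⟩⟩ else x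
    with hymap
  set l' : Idx E F B →₀ ℚ := ∑ x ∈ t, Finsupp.single (ymap x) (l x) with hl'
  have hEpow : ∀ x : Idx E F B, (E ^ KK) (fam E F B x) = (E ^ (x.1.2 + KK)) (B x.1.1) := by
    intro x
    rw [show fam E F B x = (E ^ x.1.2) (B x.1.1) from rfl, ← Module.End.mul_apply, ← pow_add]
    rw [Nat.add_comm]
  have hcomb : Finsupp.linearCombination ℚ (fam E F B) l' = 0 := by
    rw [hl', map_sum]
    have h1 : ∀ x ∈ t, Finsupp.linearCombination ℚ (fam E F B)
        (Finsupp.single (ymap x) (l x)) = l x • (E ^ KK) (fam E F B x) := by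
      intro x hx
      have hxle := (Finset.mem_filter.1 hx).2
      rw [Finsupp.linearCombination_single, hymap]
      simp only [hxle, dif_pos]
      rw [hEpow x]
    rw [Finset.sum_congr rfl h1]
    have h2 : ∑ x ∈ t, l x • (E ^ KK) (fam E F B x)
        = ∑ x ∈ l.support, l x • (E ^ KK) (fam E F B x) := by
      apply Finset.sum_subset (Finset.filter_subset _ _)
      intro x hx hxt
      have hxgt : hPlus E (B x.1.1) < x.1.2 + KK := by
        by_contra hge
        exact hxt (Finset.mem_filter.2 ⟨hx, le_of_not_gt hge⟩)
      have hbdd : ∃ N, (E ^ N) (B x.1.1) = 0 :=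
        eig_bddE E F H hHE hlocfin (hcB x.1.1)
      rw [hEpow x, pow_eq_zero_of_le (pow_hPlus_succ hbdd) (by omega), smul_zero]
    rw [h2]
    have h3 : ∑ x ∈ l.support, l x • (E ^ KK) (fam E F B x)
        = (E ^ KK) (l.sum fun x a => a • fam E F B x) := by
      rw [Finsupp.sum, map_sum]
      exact Finset.sum_congr rfl fun x _ => (map_smul _ _ _).symm
    rw [h3, hzero]
  have hl'0 : l' = 0 := linearIndependent_iff.1 hLI l' hcomb
  have hx0t : x0 ∈ t := by
    refine Finset.mem_filter.2 ⟨Finsupp.mem_support_iff.2 hx0, ?_⟩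
    rw [hKK]
    omega
  have hx0le : x0.1.2 + KK ≤ hPlus E (B x0.1.1) := (Finset.mem_filter.1 hx0t).2
  have heval : l' (ymap x0) = l x0 := by
    rw [hl', Finset.sum_apply']
    rw [Finset.sum_eq_single_of_mem x0 hx0t]
    · rw [Finsupp.single_eq_same]
    · intro z hz hzx
      have hzt := (Finset.mem_filter.1 hz).2
      apply Finsupp.single_eq_of_ne'
      intro heq
      apply hzx
      rw [hymap] at heq
      simp only [hzt, hx0le, dif_pos, Subtype.mk_eq_mk, Prod.mk.injEq] at heq
      apply Subtype.ext
      apply Prod.ext heq.1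
      omega
  rw [hl'0] at heval
  simp only [Finsupp.coe_zero, Pi.zero_apply] at heval
  exact hx0 heval.symm

end Expand

section VleLemmas

variable {V : Type*} [AddCommGroup V] [Module ℚ V] {ι : Type*}
variable (E F H : Module.End ℚ V) (B : Module.Basis ι ℚ V) (c : ι → ℚ)

lemma Vle_comm (r : ℕ) : Vle E F B r = Vle F E B r := by
  unfold Vle
  congr 1
  ext x
  constructor <;> rintro ⟨i, hi, rfl⟩ <;> exact ⟨i, by omega, rfl⟩

lemma mem_Vle_gen {r : ℕ} {j : ι} (h : hPlus E (B j) + hPlus F (B j) + 1 ≤ r) :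
    B j ∈ Vle E F B r :=
  Submodule.subset_span ⟨j, h, rfl⟩

lemma hPlus_map_E {v : V} (hz : ∃ N, (E ^ N) v = 0) (hEv : E v ≠ 0) :
    hPlus E (E v) + 1 ≤ hPlus E v := by
  have hzEv : ∃ N, (E ^ N) (E v) = 0 := by
    obtain ⟨N, hN⟩ := hz
    refine ⟨N, ?_⟩
    have : (E ^ N) (E v) = (E ^ (N + 1)) v := by
      rw [pow_succ, Module.End.mul_apply]
    rw [this]
    exact pow_eq_zero_of_le hN (by omega)
  have h1 : (E ^ (hPlus E (E v))) (E v) ≠ 0 := hPlus_pow_ne_zero hzEv hEv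
  have h2 : (E ^ (hPlus E (E v) + 1)) v ≠ 0 := by
    rw [pow_succ, Module.End.mul_apply]
    exact h1
  exact le_hPlus hz h2

lemma F_string_of_E (hH : E * F - F * E = H) (hHF : H * F - F * H = (-2:ℚ) • F)
    {v : V} {m : ℚ} (hv : H v = m • v) (hzF : ∃ N, (F ^ N) v = 0) :
    (F ^ (hPlus F v + 2)) (E v) = 0 := by
  have hv' : (-H) v = (-m) • v := by
    rw [LinearMap.neg_apply, hv, neg_smul]
  have key := pow_E_F F E (-H) (mirror_hH E F H hH) (mirror_hHE F H hHF) hv'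
    (hPlus F v + 1)
  have h1 : (F ^ (hPlus F v + 1 + 1)) v = 0 :=
    pow_eq_zero_of_le (pow_hPlus_succ hzF) (by omega)
  have h2 : (F ^ (hPlus F v + 1)) v = 0 := pow_hPlus_succ hzF
  rw [h1, h2, map_zero, smul_zero, add_zero] at key
  rw [show hPlus F v + 2 = hPlus F v + 1 + 1 from rfl]
  exact key

lemma hPlus_F_E_le (hH : E * F - F * E = H) (hHF : H * F - F * H = (-2:ℚ) • F)
    {v : V} {m : ℚ} (hv : H v = m • v) (hzF : ∃ N, (F ^ N) v = 0) {k : ℕ}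
    (hk : (F ^ k) (E v) ≠ 0) : k ≤ hPlus F v + 1 := by
  by_contra hgt
  exact hk (pow_eq_zero_of_le (F_string_of_E E F H hH hHF hv hzF) (by omega))

/-- Positivity: `V^{≤ r}` is stable under `E`. -/
lemma Vle_stableE (hH : E * F - F * E = H) (hHE : H * E - E * H = (2:ℚ) • E)
    (hHF : H * F - F * H = (-2:ℚ) • F)
    (hlocfin : ∀ v : V, ∃ W : Submodule ℚ V, FiniteDimensional ℚ W ∧
      (∀ x ∈ W, E x ∈ W) ∧ (∀ x ∈ W, F x ∈ W) ∧ v ∈ W)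
    (hcB : ∀ i, H (B i) = c i • B i)
    (hposE : ∀ v : V, (∀ i, 0 ≤ B.repr v i) → ∀ i, 0 ≤ B.repr (E v) i)
    (hposF : ∀ v : V, (∀ i, 0 ≤ B.repr v i) → ∀ i, 0 ≤ B.repr (F v) i)
    (r : ℕ) : ∀ x ∈ Vle E F B r, E x ∈ Vle E F B r := by
  classical
  intro x hx
  induction hx using Submodule.span_induction with
  | mem x hxmem =>
    obtain ⟨j, hd, rfl⟩ := hxmem
    by_cases hEj : E (B j) = 0
    · rw [hEj]; exact Submodule.zero_mem _
    set w := E (B j) with hw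
    have hzEj : ∃ N, (E ^ N) (B j) = 0 := eig_bddE E F H hHE hlocfin (hcB j)
    have hzFj : ∃ N, (F ^ N) (B j) = 0 := by
      obtain ⟨W, hWfin, hWE, hWF, hvW⟩ := hlocfin (B j)
      have hv' : (-H) (B j) = (-(c j)) • B j := by
        rw [LinearMap.neg_apply, hcB j, neg_smul]
      exact exists_pow_eq_zero F (-H) (mirror_hHE F H hHF) hWfin hWF hvW hv'
    have hzEw : ∃ N, (E ^ N) w = 0 := by
      obtain ⟨N, hN⟩ := hzEj
      refine ⟨N, ?_⟩
      have : (E ^ N) w = (E ^ (N + 1)) (B j) := by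
        rw [hw, pow_succ, Module.End.mul_apply]
      rw [this]
      exact pow_eq_zero_of_le hN (by omega)
    have hwpos : ∀ i, 0 ≤ B.repr w i := hposE (B j) (repr_basis_nonneg B j)
    have hbound : ∀ j', B.repr w j' ≠ 0 →
        hPlus E (B j') + hPlus F (B j') + 1 ≤ r := by
      intro j' hj'
      have hE' : (E ^ (hPlus E w + 1)) (B j') = 0 :=
        no_cancel E B hposE hwpos hj' (pow_hPlus_succ hzEw)
      have hF' : (F ^ (hPlus F (B j) + 1 + 1)) (B j') = 0 :=
        no_cancel F B hposF hwpos hj' (F_string_of_E E F H hH hHF (hcB j) hzFj)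
      have h1 : hPlus E (B j') ≤ hPlus E w := hPlus_le (B.ne_zero j') hE'
      have h2 : hPlus F (B j') ≤ hPlus F (B j) + 1 := hPlus_le (B.ne_zero j') hF'
      have h3 : hPlus E w + 1 ≤ hPlus E (B j) := hPlus_map_E E hzEj hEj
      omega
    have hrepr : w = ∑ j' ∈ (B.repr w).support, B.repr w j' • B j' := by
      conv_lhs => rw [← B.linearCombination_repr w]
      rw [Finsupp.linearCombination_apply, Finsupp.sum]
    show w ∈ Vle E F B r
    rw [hrepr]
    apply Submodule.sum_mem
    intro j' hj'
    exact Submodule.smul_mem _ _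
      (mem_Vle_gen E F B (hbound j' (Finsupp.mem_support_iff.1 hj')))
  | zero => rw [map_zero]; exact Submodule.zero_mem _
  | add x y _ _ ihx ihy => rw [map_add]; exact Submodule.add_mem _ ihx ihy
  | smul a x _ ihx => rw [map_smul]; exact Submodule.smul_mem _ a ihx

end VleLemmas

section MainDirections

variable {V : Type*} [AddCommGroup V] [Module ℚ V] {ι : Type*}
variable (E F H : Module.End ℚ V) (B : Module.Basis ι ℚ V) (c : ι → ℚ)

lemma hPlus_eq_zero {G : Module.End ℚ V} {v : V} (h : G v = 0) : hPlus G v = 0 := by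
  refine Nat.le_zero.1 (csSup_le' fun k hk => ?_)
  by_contra hk1
  exact hk (pow_eq_zero_of_le (by rw [pow_one]; exact h) (by omega))

/-- The set (i) whose `sSup` is taken. -/
def SimpleSet (E F : Module.End ℚ V) (r : ℕ) : Set (Submodule ℚ V) :=
  {W : Submodule ℚ V |
    (∀ x ∈ W, E x ∈ W) ∧ (∀ x ∈ W, F x ∈ W) ∧ FiniteDimensional ℚ W ∧
    Module.finrank ℚ W ≤ r ∧
    (∀ U : Submodule ℚ V, U ≤ W → (∀ x ∈ U, E x ∈ U) → (∀ x ∈ U, F x ∈ U) →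
      U = ⊥ ∨ U = W)}

lemma span_to_prop (hH : E * F - F * E = H) (hHE : H * E - E * H = (2:ℚ) • E)
    (hHF : H * F - F * H = (-2:ℚ) • F)
    (hlocfin : ∀ v : V, ∃ W : Submodule ℚ V, FiniteDimensional ℚ W ∧
      (∀ x ∈ W, E x ∈ W) ∧ (∀ x ∈ W, F x ∈ W) ∧ v ∈ W)
    (hcB : ∀ i, H (B i) = c i • B i)
    (hposE : ∀ v : V, (∀ i, 0 ≤ B.repr v i) → ∀ i, 0 ≤ B.repr (E v) i)
    (hposF : ∀ v : V, (∀ i, 0 ≤ B.repr v i) → ∀ i, 0 ≤ B.repr (F v) i)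
    (hspan : Submodule.span ℚ (Set.range (fam E F B)) = ⊤) :
    ∀ r : ℕ, Vle E F B r = sSup (SimpleSet E F r) := by
  classical
  intro r
  apply le_antisymm
  · -- Vle ≤ sSup
    rw [Vle, Submodule.span_le]
    rintro x ⟨j, hd, rfl⟩
    have hzE : ∃ N, (E ^ N) (B j) = 0 := eig_bddE E F H hHE hlocfin (hcB j)
    have hzF : ∃ N, (F ^ N) (B j) = 0 := by
      obtain ⟨W, hWfin, hWE, hWF, hvW⟩ := hlocfin (B j)
      have hv' : (-H) (B j) = (-(c j)) • B j := by
        rw [LinearMap.neg_apply, hcB j, neg_smul]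
      exact exists_pow_eq_zero F (-H) (mirror_hHE F H hHF) hWfin hWF hvW hv'
    obtain ⟨l, hl⟩ := (Finsupp.mem_span_range_iff_exists_finsupp).1
      (by rw [hspan]; exact Submodule.mem_top : B j ∈ Submodule.span ℚ (Set.range (fam E F B)))
    have hsupp : ∀ x ∈ l.support, hPlus E (B x.1.1) + 1 ≤ r := by
      intro x hx
      have hlx : l x ≠ 0 := Finsupp.mem_support_iff.1 hx
      have h1 : (F ^ (x.1.2)) (B j) ≠ 0 := by
        rw [← hl]
        exact expand_hF E F H B c hH hHE hlocfin hcB hlx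
      have h2 : (E ^ (hPlus E (B x.1.1) - x.1.2)) (B j) ≠ 0 := by
        rw [← hl]
        exact expand_hE E F H B c hH hHE hlocfin hcB hlx
      have h3 : x.1.2 ≤ hPlus F (B j) := le_hPlus hzF h1
      have h4 : hPlus E (B x.1.1) - x.1.2 ≤ hPlus E (B j) := le_hPlus hzE h2
      have h5 : x.1.2 ≤ hPlus E (B x.1.1) := x.2.2
      omega
    rw [← hl]
    show (l.sum fun x a => a • fam E F B x) ∈ (sSup (SimpleSet E F r) : Submodule ℚ V)
    rw [Finsupp.sum]
    apply Submodule.sum_mem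
    intro x hx
    apply Submodule.smul_mem
    -- fam x lies in the simple module Uv
    set b := B x.1.1 with hb
    set n := hPlus E b with hn
    have hzEb : ∃ N, (E ^ N) b = 0 := eig_bddE E F H hHE hlocfin (hcB x.1.1)
    have hlow : H b = (-(n:ℚ)) • b := hcB_lowest E F H B c hH hHE hlocfin hcB x.2.1
    have hnz : ∀ i ≤ n, (E ^ i) b ≠ 0 :=
      fun i hi => pow_ne_zero_of_le_hPlus hzEb (B.ne_zero x.1.1) hi
    have hUmem : Uv E b n ∈ SimpleSet E F r := by
      refine ⟨Uv_stableE E (pow_hPlus_succ hzEb), Uv_stableF E F H hH hHE hlow x.2.1,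
        Uv_finite E, ?_, Uv_simple E F H hH hHE hlow x.2.1 (pow_hPlus_succ hzEb) hnz⟩
      rw [Uv_finrank E H hHE hlow hnz]
      exact le_trans (by omega : n + 1 ≤ hPlus E b + 1) (hsupp x hx)
    exact le_sSup hUmem (mem_Uv_gen E x.2.2)
  · -- sSup ≤ Vle
    apply sSup_le
    rintro W ⟨hWE, hWF, hWfin, hWrk, hWsimple⟩
    by_cases hbot : W = ⊥
    · rw [hbot]; exact bot_le
    have hWH : ∀ x ∈ W, H x ∈ W := by
      intro x hx
      have : H x = E (F x) - F (E x) := by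
        have := congrArg (fun T : Module.End ℚ V => T x) hH
        simpa using this.symm
      rw [this]
      exact W.sub_mem (hWE _ (hWF _ hx)) (hWF _ (hWE _ hx))
    -- find a nonzero eigenvector in W
    obtain ⟨w0, hw0W, hw0ne⟩ := Submodule.exists_mem_ne_zero_of_ne_bot hbot
    set t := (B.repr w0).support.image c with htdef
    set u : ℚ → V := fun m => ∑ j ∈ (B.repr w0).support.filter (fun j => c j = m),
      B.repr w0 j • B j with hudef
    have husum : ∑ m ∈ t, u m = w0 := by
      rw [hudef, htdef, Finset.sum_fiberwise_of_maps_to (fun j hj => Finset.mem_image_of_mem c hj)]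
      conv_rhs => rw [← B.linearCombination_repr w0]
      rw [Finsupp.linearCombination_apply, Finsupp.sum]
    have hueig : ∀ m ∈ t, H (u m) = m • u m := by
      intro m hm
      rw [hudef, map_sum, Finset.smul_sum]
      apply Finset.sum_congr rfl
      intro j hj
      rw [map_smul, hcB j, (Finset.mem_filter.1 hj).2, smul_comm]
    have huW : ∀ m ∈ t, u m ∈ W := by
      apply eigcomp H W hWH t u hueig
      rw [husum]; exact hw0W
    obtain ⟨m, hmt, hmne⟩ : ∃ m ∈ t, u m ≠ 0 := by
      by_contra hcon
      push_neg at hcon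
      exact hw0ne (by rw [← husum, Finset.sum_eq_zero hcon])
    set v1 := u m with hv1
    have hv1eig : H v1 = m • v1 := hueig m hmt
    have hv1W : v1 ∈ W := huW m hmt
    -- lower it to a lowest weight vector
    have hv1negeig : (-H) v1 = (-m) • v1 := by rw [LinearMap.neg_apply, hv1eig, neg_smul]
    have hzFv1 : ∃ N, (F ^ N) v1 = 0 :=
      exists_pow_eq_zero F (-H) (mirror_hHE F H hHF) hWfin hWF hv1W hv1negeig
    set a := hPlus F v1 with ha
    set w' := (F ^ a) v1 with hw'
    have hw'ne : w' ≠ 0 := hPlus_pow_ne_zero hzFv1 hmne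
    have hw'W : w' ∈ W := pow_mem_stable hWF hv1W a
    have hFw' : F w' = 0 := by
      rw [hw', ← Module.End.mul_apply, ← pow_succ']
      exact pow_hPlus_succ hzFv1
    have hw'eig : H w' = (m - 2 * a) • w' := by
      have := H_pow_E F (-H) (mirror_hHE F H hHF) hv1negeig a
      rw [LinearMap.neg_apply, neg_eq_iff_eq_neg] at this
      rw [hw', this, ← neg_smul]
      congr 1
      ring
    have hzEw' : ∃ N, (E ^ N) w' = 0 := eig_bddE E F H hHE hlocfin hw'eig
    set n := hPlus E w' with hn
    have hcw' : m - 2 * a = -(n : ℚ) :=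
      lowest_weight E F H hH hHE hw'eig hw'ne hFw' hzEw'
    have hw'low : H w' = (-(n:ℚ)) • w' := by rw [hw'eig, hcw']
    have hnz : ∀ i ≤ n, (E ^ i) w' ≠ 0 :=
      fun i hi => pow_ne_zero_of_le_hPlus hzEw' hw'ne hi
    -- the simple module generated by w' is all of W
    have hUle : Uv E w' n ≤ W := by
      rw [Uv, Submodule.span_le]
      rintro x ⟨i, rfl⟩
      exact pow_mem_stable hWE hw'W _
    have hUW : Uv E w' n = W := by
      rcases hWsimple (Uv E w' n) hUle (Uv_stableE E (pow_hPlus_succ hzEw'))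
        (Uv_stableF E F H hH hHE hw'low hFw') with h | h
      · exfalso
        have : w' ∈ Uv E w' n := by
          have := mem_Uv_gen (v := w') (n := n) E (Nat.zero_le n)
          rwa [pow_zero, Module.End.one_apply] at this
        rw [h] at this
        exact hw'ne (Submodule.mem_bot ℚ |>.1 this)
      · exact h
    -- n + 1 ≤ r
    have hcard : n + 1 ≤ r := by
      haveI := hWfin
      have hli := Uv_li E H hHE hw'low hnz
      have hliW : LinearIndependent ℚ (fun i : Fin (n + 1) =>
          (⟨(E ^ (i : ℕ)) w', pow_mem_stable hWE hw'W _⟩ : W)) :=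
        LinearIndependent.of_comp W.subtype hli
      have := hliW.fintype_card_le_finrank
      rw [Fintype.card_fin] at this
      omega
    -- w' lies in Vle r
    have hw'Vle : w' ∈ Vle E F B r := by
      obtain ⟨l, hl⟩ := (Finsupp.mem_span_range_iff_exists_finsupp).1
        (by rw [hspan]; exact Submodule.mem_top :
          w' ∈ Submodule.span ℚ (Set.range (fam E F B)))
      rw [← hl, Finsupp.sum]
      apply Submodule.sum_mem
      intro x hx
      have hlx : l x ≠ 0 := Finsupp.mem_support_iff.1 hx
      have hx0 : x.1.2 = 0 := by
        by_contra hx0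
        have h1 : (F ^ (x.1.2)) w' ≠ 0 := by
          rw [← hl]
          exact expand_hF E F H B c hH hHE hlocfin hcB hlx
        apply h1
        exact pow_eq_zero_of_le (by rw [pow_one]; exact hFw') (by omega)
      have h2 : (E ^ (hPlus E (B x.1.1) - x.1.2)) w' ≠ 0 := by
        rw [← hl]
        exact expand_hE E F H B c hH hHE hlocfin hcB hlx
      have h4 : hPlus E (B x.1.1) - x.1.2 ≤ n := le_hPlus hzEw' h2
      have h5 : hPlus F (B x.1.1) = 0 := hPlus_eq_zero x.2.1
      apply Submodule.smul_mem
      have hfamx : fam E F B x = B x.1.1 := by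
        rw [show fam E F B x = (E ^ x.1.2) (B x.1.1) from rfl, hx0, pow_zero,
          Module.End.one_apply]
      rw [hfamx]
      exact mem_Vle_gen E F B (by omega)
    -- conclude by stability of Vle
    rw [← hUW, Uv, Submodule.span_le]
    rintro x ⟨i, rfl⟩
    exact pow_mem_stable
      (Vle_stableE E F H B c hH hHE hHF hlocfin hcB hposE hposF r) hw'Vle _

end MainDirections

section Converse

variable {V : Type*} [AddCommGroup V] [Module ℚ V] {ι : Type*}
variable (E F H : Module.End ℚ V) (B : Module.Basis ι ℚ V) (c : ι → ℚ)

/-- Any nonzero finite-dimensional stable submodule contains a lowest weight vector. -/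
lemma exists_lowest (hH : E * F - F * E = H) (hHF : H * F - F * H = (-2:ℚ) • F)
    (hcB : ∀ i, H (B i) = c i • B i) {W : Submodule ℚ V}
    (hWfin : FiniteDimensional ℚ W) (hWE : ∀ x ∈ W, E x ∈ W)
    (hWF : ∀ x ∈ W, F x ∈ W) (hbot : W ≠ ⊥) :
    ∃ w' : V, w' ∈ W ∧ w' ≠ 0 ∧ F w' = 0 ∧ ∃ m : ℚ, H w' = m • w' := by
  classical
  have hWH : ∀ x ∈ W, H x ∈ W := by
    intro x hx
    have hHx : H x = E (F x) - F (E x) := by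
      have := congrArg (fun T : Module.End ℚ V => T x) hH
      simpa using this.symm
    rw [hHx]
    exact W.sub_mem (hWE _ (hWF _ hx)) (hWF _ (hWE _ hx))
  obtain ⟨w0, hw0W, hw0ne⟩ := Submodule.exists_mem_ne_zero_of_ne_bot hbot
  set t := (B.repr w0).support.image c with htdef
  set u : ℚ → V := fun m => ∑ j ∈ (B.repr w0).support.filter (fun j => c j = m),
    B.repr w0 j • B j with hudef
  have husum : ∑ m ∈ t, u m = w0 := by
    rw [hudef, htdef, Finset.sum_fiberwise_of_maps_to (fun j hj => Finset.mem_image_of_mem c hj)]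
    conv_rhs => rw [← B.linearCombination_repr w0]
    rw [Finsupp.linearCombination_apply, Finsupp.sum]
  have hueig : ∀ m ∈ t, H (u m) = m • u m := by
    intro m hm
    rw [hudef, map_sum, Finset.smul_sum]
    apply Finset.sum_congr rfl
    intro j hj
    rw [map_smul, hcB j, (Finset.mem_filter.1 hj).2, smul_comm]
  have huW : ∀ m ∈ t, u m ∈ W := by
    apply eigcomp H W hWH t u hueig
    rw [husum]; exact hw0W
  obtain ⟨m, hmt, hmne⟩ : ∃ m ∈ t, u m ≠ 0 := by
    by_contra hcon
    push_neg at hcon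
    exact hw0ne (by rw [← husum, Finset.sum_eq_zero hcon])
  have hv1eig : H (u m) = m • u m := hueig m hmt
  have hv1W : u m ∈ W := huW m hmt
  have hv1negeig : (-H) (u m) = (-m) • u m := by
    rw [LinearMap.neg_apply, hv1eig, neg_smul]
  have hzFv1 : ∃ N, (F ^ N) (u m) = 0 :=
    exists_pow_eq_zero F (-H) (mirror_hHE F H hHF) hWfin hWF hv1W hv1negeig
  set a := hPlus F (u m) with ha
  refine ⟨(F ^ a) (u m), pow_mem_stable hWF hv1W a, hPlus_pow_ne_zero hzFv1 hmne, ?_, ?_⟩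
  · rw [← Module.End.mul_apply, ← pow_succ']
    exact pow_hPlus_succ hzFv1
  · refine ⟨m - 2 * a, ?_⟩
    have hkey := H_pow_E F (-H) (mirror_hHE F H hHF) hv1negeig a
    rw [LinearMap.neg_apply, neg_eq_iff_eq_neg] at hkey
    rw [hkey, ← neg_smul]
    congr 1
    ring

lemma hPlus_E_Fpow_le (hH : E * F - F * E = H) (hHE : H * E - E * H = (2:ℚ) • E)
    (hHF : H * F - F * H = (-2:ℚ) • F)
    (hlocfin : ∀ v : V, ∃ W : Submodule ℚ V, FiniteDimensional ℚ W ∧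
      (∀ x ∈ W, E x ∈ W) ∧ (∀ x ∈ W, F x ∈ W) ∧ v ∈ W) :
    ∀ a : ℕ, ∀ v : V, ∀ m : ℚ, H v = m • v →
      ∀ k : ℕ, (E ^ k) ((F ^ a) v) ≠ 0 → k ≤ hPlus E v + a := by
  intro a
  induction a with
  | zero =>
    intro v m hv k hk
    simp only [pow_zero, Module.End.one_apply] at hk
    have hzE : ∃ N, (E ^ N) v = 0 := eig_bddE E F H hHE hlocfin hv
    exact le_trans (le_hPlus hzE hk) (by omega)
  | succ a ih =>
    intro v m hv k hk
    set v' := (F ^ a) v with hv'def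
    have hv'eig : H v' = (m - 2 * a) • v' := by
      have hvneg : (-H) v = (-m) • v := by rw [LinearMap.neg_apply, hv, neg_smul]
      have hkey := H_pow_E F (-H) (mirror_hHE F H hHF) hvneg a
      rw [LinearMap.neg_apply, neg_eq_iff_eq_neg] at hkey
      rw [hv'def, hkey, ← neg_smul]
      congr 1
      ring
    have hsplit : (F ^ (a + 1)) v = F v' := by
      rw [hv'def, ← Module.End.mul_apply, ← pow_succ']
    rw [hsplit] at hk
    have hv'ne : v' ≠ 0 := by
      intro h
      rw [h, map_zero, map_zero] at hk
      exact hk rfl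
    -- k ≤ hPlus E v' + 1 by the single-step bound (mirrored)
    have hzEv' : ∃ N, (E ^ N) v' = 0 := eig_bddE E F H hHE hlocfin hv'eig
    have hv'neg : (-H) v' = (-(m - 2*a)) • v' := by
      rw [LinearMap.neg_apply, hv'eig, neg_smul]
    have hstep : k ≤ hPlus E v' + 1 := by
      apply hPlus_F_E_le F E (-H) (mirror_hH E F H hH) (mirror_hHF E H hHE) hv'neg hzEv' hk
    -- hPlus E v' ≤ hPlus E v + a by induction
    have hbd : hPlus E v' ≤ hPlus E v + a := by
      apply csSup_le ⟨0, by simpa using hv'ne⟩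
      intro k' hk'
      exact ih v m hv k' hk'
    omega

lemma Vle_eq_span_image (r : ℕ) :
    Vle E F B r = Submodule.span ℚ (B '' {i | hPlus E (B i) + hPlus F (B i) + 1 ≤ r}) := by
  unfold Vle
  congr 1
  ext x
  constructor
  · rintro ⟨i, hi, rfl⟩; exact ⟨i, hi, rfl⟩
  · rintro ⟨i, hi, rfl⟩; exact ⟨i, hi, rfl⟩

lemma span_fam_stableE (hHE : H * E - E * H = (2:ℚ) • E)
    (hlocfin : ∀ v : V, ∃ W : Submodule ℚ V, FiniteDimensional ℚ W ∧
      (∀ x ∈ W, E x ∈ W) ∧ (∀ x ∈ W, F x ∈ W) ∧ v ∈ W)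
    (hcB : ∀ i, H (B i) = c i • B i) :
    ∀ x ∈ Submodule.span ℚ (Set.range (fam E F B)),
      E x ∈ Submodule.span ℚ (Set.range (fam E F B)) := by
  intro x hx
  induction hx using Submodule.span_induction with
  | mem x hxmem =>
    obtain ⟨y, rfl⟩ := hxmem
    have hEy : E (fam E F B y) = (E ^ (y.1.2 + 1)) (B y.1.1) := by
      rw [show fam E F B y = (E ^ y.1.2) (B y.1.1) from rfl, pow_succ', Module.End.mul_apply]
    by_cases hle : y.1.2 + 1 ≤ hPlus E (B y.1.1)
    · rw [hEy]
      exact Submodule.subset_span ⟨⟨(y.1.1, y.1.2 + 1), ⟨y.2.1, hle⟩⟩, rfl⟩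
    · have hzE : ∃ N, (E ^ N) (B y.1.1) = 0 := eig_bddE E F H hHE hlocfin (hcB y.1.1)
      rw [hEy, pow_eq_zero_of_le (pow_hPlus_succ hzE) (by omega)]
      exact Submodule.zero_mem _
  | zero => rw [map_zero]; exact Submodule.zero_mem _
  | add x y _ _ ihx ihy => rw [map_add]; exact Submodule.add_mem _ ihx ihy
  | smul a x _ ihx => rw [map_smul]; exact Submodule.smul_mem _ a ihx

end Converse

section PropToSpan

variable {V : Type*} [AddCommGroup V] [Module ℚ V] {ι : Type*}
variable (E F H : Module.End ℚ V) (B : Module.Basis ι ℚ V) (c : ι → ℚ)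

lemma prop_to_span (hH : E * F - F * E = H) (hHE : H * E - E * H = (2:ℚ) • E)
    (hHF : H * F - F * H = (-2:ℚ) • F)
    (hlocfin : ∀ v : V, ∃ W : Submodule ℚ V, FiniteDimensional ℚ W ∧
      (∀ x ∈ W, E x ∈ W) ∧ (∀ x ∈ W, F x ∈ W) ∧ v ∈ W)
    (hcB : ∀ i, H (B i) = c i • B i)
    (hprop : ∀ r : ℕ, Vle E F B r = sSup (SimpleSet E F r)) :
    Submodule.span ℚ (Set.range (fam E F B)) = ⊤ := by
  classical
  -- it suffices that each simple stable submodule lies in the span of the family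
  have hsimple_le : ∀ r : ℕ, ∀ W ∈ SimpleSet E F r,
      W ≤ Submodule.span ℚ (Set.range (fam E F B)) := by
    rintro r W ⟨hWE, hWF, hWfin, hWrk, hWsimple⟩
    by_cases hbot : W = ⊥
    · rw [hbot]; exact bot_le
    obtain ⟨w', hw'W, hw'ne, hFw', m, hw'eig⟩ :=
      exists_lowest E F H B c hH hHF hcB hWfin hWE hWF hbot
    have hzEw' : ∃ N, (E ^ N) w' = 0 := eig_bddE E F H hHE hlocfin hw'eig
    set n := hPlus E w' with hn
    have hcw' : m = -(n : ℚ) := lowest_weight E F H hH hHE hw'eig hw'ne hFw' hzEw'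
    have hw'low : H w' = (-(n:ℚ)) • w' := by rw [hw'eig, hcw']
    have hnz : ∀ i ≤ n, (E ^ i) w' ≠ 0 :=
      fun i hi => pow_ne_zero_of_le_hPlus hzEw' hw'ne hi
    -- W is the simple module generated by w'
    have hUle : Uv E w' n ≤ W := by
      rw [Uv, Submodule.span_le]
      rintro x ⟨i, rfl⟩
      exact pow_mem_stable hWE hw'W _
    have hUW : Uv E w' n = W := by
      rcases hWsimple (Uv E w' n) hUle (Uv_stableE E (pow_hPlus_succ hzEw'))
        (Uv_stableF E F H hH hHE hw'low hFw') with h | h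
      · exfalso
        have hmem : w' ∈ Uv E w' n := by
          have := mem_Uv_gen (v := w') (n := n) E (Nat.zero_le n)
          rwa [pow_zero, Module.End.one_apply] at this
        rw [h] at hmem
        exact hw'ne (Submodule.mem_bot ℚ |>.1 hmem)
      · exact h
    -- W belongs to the (n+1)-simple set, hence lies in V^{≤ n+1}
    have hWmem : W ∈ SimpleSet E F (n + 1) := by
      refine ⟨hWE, hWF, hWfin, ?_, hWsimple⟩
      rw [← hUW, Uv_finrank E H hHE hw'low hnz]
    have hWle : W ≤ Vle E F B (n + 1) := by
      rw [hprop (n + 1)]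
      exact le_sSup hWmem
    -- hence w' is supported on basis vectors b' with d(b') ≤ n+1, which are lowest
    have hw'mem : w' ∈ Vle E F B (n + 1) := hWle hw'W
    rw [Vle_eq_span_image E F B (n + 1)] at hw'mem
    have hsupp := (B.mem_span_image).1 hw'mem
    have hkey : ∀ j' ∈ (B.repr w').support,
        F (B j') = 0 ∧ hPlus E (B j') ≤ n := by
      intro j' hj'
      have hj'ne : B.repr w' j' ≠ 0 := Finsupp.mem_support_iff.1 hj'
      have hd : hPlus E (B j') + hPlus F (B j') + 1 ≤ n + 1 := hsupp hj'
      have hcj' : c j' = -(n:ℚ) := weight_support H B c hcB hw'low hj'ne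
      have hzFj' : ∃ N, (F ^ N) (B j') = 0 := by
        obtain ⟨W', hWfin', hWE', hWF', hvW'⟩ := hlocfin (B j')
        have hv' : (-H) (B j') = (-(c j')) • B j' := by
          rw [LinearMap.neg_apply, hcB j', neg_smul]
        exact exists_pow_eq_zero F (-H) (mirror_hHE F H hHF) hWfin' hWF' hvW' hv'
      have hFj' : F (B j') = 0 := by
        by_contra hFne
        set a' := hPlus F (B j') with ha'
        have ha'pos : 1 ≤ a' := le_hPlus hzFj' (by rwa [pow_one])
        set u := (F ^ a') (B j') with hu
        have hune : u ≠ 0 := hPlus_pow_ne_zero hzFj' (B.ne_zero j')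
        have hFu : F u = 0 := by
          rw [hu, ← Module.End.mul_apply, ← pow_succ']
          exact pow_hPlus_succ hzFj'
        have hueig : H u = (c j' - 2 * a') • u := by
          have hvneg : (-H) (B j') = (-(c j')) • B j' := by
            rw [LinearMap.neg_apply, hcB j', neg_smul]
          have hkey2 := H_pow_E F (-H) (mirror_hHE F H hHF) hvneg a'
          rw [LinearMap.neg_apply, neg_eq_iff_eq_neg] at hkey2
          rw [hu, hkey2, ← neg_smul]
          congr 1
          ring
        have hzEu : ∃ N, (E ^ N) u = 0 := eig_bddE E F H hHE hlocfin hueig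
        have hcu : c j' - 2 * a' = -(hPlus E u : ℚ) :=
          lowest_weight E F H hH hHE hueig hune hFu hzEu
        -- hPlus E u = n + 2 a'
        have hEu : (hPlus E u : ℚ) = (n : ℚ) + 2 * a' := by
          rw [← neg_inj, ← hcu, hcj']
          ring
        have hEu' : hPlus E u = n + 2 * a' := by exact_mod_cast hEu
        -- but hPlus E u ≤ hPlus E (B j') + a'
        have hbd : hPlus E u ≤ hPlus E (B j') + a' := by
          have h1 : (E ^ (hPlus E u)) u ≠ 0 := hPlus_pow_ne_zero hzEu hune
          rw [hu] at h1
          exact hPlus_E_Fpow_le E F H hH hHE hHF hlocfin a' (B j') (c j') (hcB j') _ h1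
        omega
      refine ⟨hFj', ?_⟩
      have : hPlus F (B j') = 0 := hPlus_eq_zero hFj'
      omega
    -- w' lies in the span of the family
    have hw'span : w' ∈ Submodule.span ℚ (Set.range (fam E F B)) := by
      have hrepr : w' = ∑ j' ∈ (B.repr w').support, B.repr w' j' • B j' := by
        conv_lhs => rw [← B.linearCombination_repr w']
        rw [Finsupp.linearCombination_apply, Finsupp.sum]
      rw [hrepr]
      apply Submodule.sum_mem
      intro j' hj'
      apply Submodule.smul_mem
      refine Submodule.subset_span ⟨⟨(j', 0), ⟨(hkey j' hj').1, Nat.zero_le _⟩⟩, ?_⟩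
      simp [fam]
    -- hence so does W, by stability
    rw [← hUW, Uv, Submodule.span_le]
    rintro x ⟨i, rfl⟩
    exact pow_mem_stable (span_fam_stableE E F H B c hHE hlocfin hcB) hw'span _
  rw [eq_top_iff, ← B.span_eq, Submodule.span_le]
  rintro x ⟨j, rfl⟩
  set r := hPlus E (B j) + hPlus F (B j) + 1 with hr
  have hmem : B j ∈ Vle E F B r := mem_Vle_gen E F B le_rfl
  rw [hprop r] at hmem
  -- sSup of the simple set is contained in the span of the family
  have : sSup (SimpleSet E F r) ≤ Submodule.span ℚ (Set.range (fam E F B)) :=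
    sSup_le (fun W hW => hsimple_le r W hW)
  exact this hmem

end PropToSpan

section Comm

variable {V : Type*} [AddCommGroup V] [Module ℚ V]

lemma SimpleSet_comm (E F : Module.End ℚ V) (r : ℕ) : SimpleSet E F r = SimpleSet F E r := by
  ext W
  constructor <;> rintro ⟨h1, h2, h3, h4, h5⟩ <;>
    exact ⟨h2, h1, h3, h4, fun U hU hUa hUb => h5 U hU hUb hUa⟩

end Comm

end S10

open S10

/-- In the positive-basis setting, for each sign `ε` the three
assertions (i), (ii), (iii) are equivalent, where (ii) says that the family
`{e_ε^i b : b ∈ ℒ_ε, 0 ≤ i ≤ h_ε(b)}` is a basis of `V`, and (iii) that it spans `V`. -/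
theorem stmt10 (V : Type*) [AddCommGroup V] [Module ℚ V]
    (e f : Module.End ℚ V)
    (hrel1 : (e * f - f * e) * e - e * (e * f - f * e) = (2 : ℚ) • e)
    (hrel2 : (e * f - f * e) * f - f * (e * f - f * e) = (-2 : ℚ) • f)
    (hlocfin : ∀ v : V, ∃ W : Submodule ℚ V, FiniteDimensional ℚ W ∧
      (∀ x ∈ W, e x ∈ W) ∧ (∀ x ∈ W, f x ∈ W) ∧ v ∈ W)
    (ι : Type*) (B : Module.Basis ι ℚ V)
    (heig : ∀ i : ι, ∃ c : ℚ, (e * f - f * e) (B i) = c • B i)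
    (hposE : ∀ v : V, (∀ i, 0 ≤ B.repr v i) → ∀ i, 0 ≤ B.repr (e v) i)
    (hposF : ∀ v : V, (∀ i, 0 ≤ B.repr v i) → ∀ i, 0 ≤ B.repr (f v) i) :
    (PropSumSimples e f B ↔
      (LinearIndependent ℚ
          (fun x : {p : ι × ℕ // f (B p.1) = 0 ∧ p.2 ≤ hPlus e (B p.1)} =>
            (e ^ x.1.2) (B x.1.1)) ∧
        Submodule.span ℚ (Set.range
          (fun x : {p : ι × ℕ // f (B p.1) = 0 ∧ p.2 ≤ hPlus e (B p.1)} =>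
            (e ^ x.1.2) (B x.1.1))) = ⊤)) ∧
    ((LinearIndependent ℚ
          (fun x : {p : ι × ℕ // f (B p.1) = 0 ∧ p.2 ≤ hPlus e (B p.1)} =>
            (e ^ x.1.2) (B x.1.1)) ∧
        Submodule.span ℚ (Set.range
          (fun x : {p : ι × ℕ // f (B p.1) = 0 ∧ p.2 ≤ hPlus e (B p.1)} =>
            (e ^ x.1.2) (B x.1.1))) = ⊤) ↔
      Submodule.span ℚ (Set.range
        (fun x : {p : ι × ℕ // f (B p.1) = 0 ∧ p.2 ≤ hPlus e (B p.1)} =>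
          (e ^ x.1.2) (B x.1.1))) = ⊤) ∧
    (PropSumSimples e f B ↔
      (LinearIndependent ℚ
          (fun x : {p : ι × ℕ // e (B p.1) = 0 ∧ p.2 ≤ hPlus f (B p.1)} =>
            (f ^ x.1.2) (B x.1.1)) ∧
        Submodule.span ℚ (Set.range
          (fun x : {p : ι × ℕ // e (B p.1) = 0 ∧ p.2 ≤ hPlus f (B p.1)} =>
            (f ^ x.1.2) (B x.1.1))) = ⊤)) ∧
    ((LinearIndependent ℚ
          (fun x : {p : ι × ℕ // e (B p.1) = 0 ∧ p.2 ≤ hPlus f (B p.1)} =>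
            (f ^ x.1.2) (B x.1.1)) ∧
        Submodule.span ℚ (Set.range
          (fun x : {p : ι × ℕ // e (B p.1) = 0 ∧ p.2 ≤ hPlus f (B p.1)} =>
            (f ^ x.1.2) (B x.1.1))) = ⊤) ↔
      Submodule.span ℚ (Set.range
        (fun x : {p : ι × ℕ // e (B p.1) = 0 ∧ p.2 ≤ hPlus f (B p.1)} =>
          (f ^ x.1.2) (B x.1.1))) = ⊤) := by
  classical
  choose c hcB using heig
  set h : Module.End ℚ V := e * f - f * e with hhdef
  have hH : e * f - f * e = h := rfl
  have hHE : h * e - e * h = (2:ℚ) • e := hrel1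
  have hHF : h * f - f * h = (-2:ℚ) • f := hrel2
  have hcB' : ∀ i, h (B i) = c i • B i := hcB
  -- the plus family
  have hLIp : LinearIndependent ℚ (fam e f B) :=
    fam_li e f h B c hH hHE hlocfin hcB'
  -- the minus data
  have hlocfin' : ∀ v : V, ∃ W : Submodule ℚ V, FiniteDimensional ℚ W ∧
      (∀ x ∈ W, f x ∈ W) ∧ (∀ x ∈ W, e x ∈ W) ∧ v ∈ W := by
    intro v
    obtain ⟨W, h1, h2, h3, h4⟩ := hlocfin v
    exact ⟨W, h1, h3, h2, h4⟩
  have hH2 : f * e - e * f = -h := mirror_hH e f h hH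
  have hHE2 : (-h) * f - f * (-h) = (2:ℚ) • f := mirror_hHE f h hHF
  have hHF2 : (-h) * e - e * (-h) = (-2:ℚ) • e := mirror_hHF e h hHE
  have hcB2 : ∀ i, (-h) (B i) = (-(c i)) • B i := fun i => by
    rw [LinearMap.neg_apply, hcB' i, neg_smul]
  have hLIm : LinearIndependent ℚ (fam f e B) :=
    fam_li f e (-h) B (fun i => -(c i)) hH2 hHE2 hlocfin' hcB2
  -- bridges for PropSumSimples
  have hprop_plus : PropSumSimples e f B ↔
      (∀ r : ℕ, Vle e f B r = sSup (SimpleSet e f r)) := Iff.rfl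
  have hprop_minus : PropSumSimples e f B ↔
      (∀ r : ℕ, Vle f e B r = sSup (SimpleSet f e r)) := by
    rw [hprop_plus]
    constructor
    · intro hp r
      rw [Vle_comm f e B r, SimpleSet_comm f e r]
      exact hp r
    · intro hp r
      rw [Vle_comm e f B r, SimpleSet_comm e f r]
      exact hp r
  refine ⟨?_, ?_, ?_, ?_⟩
  · constructor
    · intro hp
      exact ⟨hLIp, prop_to_span e f h B c hH hHE hHF hlocfin hcB' (hprop_plus.1 hp)⟩
    · intro hs
      exact hprop_plus.2
        (span_to_prop e f h B c hH hHE hHF hlocfin hcB' hposE hposF hs.2)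
  · exact ⟨And.right, fun hs => ⟨hLIp, hs⟩⟩
  · constructor
    · intro hp
      exact ⟨hLIm, prop_to_span f e (-h) B (fun i => -(c i)) hH2 hHE2 hHF2 hlocfin'
        hcB2 (hprop_minus.1 hp)⟩
    · intro hs
      exact hprop_minus.2
        (span_to_prop f e (-h) B (fun i => -(c i)) hH2 hHE2 hHF2 hlocfin' hcB2
          hposF hposE hs.2)
  · exact ⟨And.right, fun hs => ⟨hLIm, hs⟩⟩
end

section
/- For every 𝔤-module M, the following equality of linear endomorphisms of V ⊗ V ⊗ M holds: T_M ∘ (1_V ⊗ X_M) = X_{V⊗M} ∘ T_M − 1_{V⊗V⊗M}, where 1_V ⊗ X_M acts as the identity on the first tensor factor and as X_M on V ⊗ M, and X_{V⊗M} is the operator X applied to the 𝔤-module V ⊗ M under the identification V ⊗ (V ⊗ M) = V ⊗ V ⊗ M. -/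
open TensorProduct

attribute [local instance] LieRing.ofAssociativeRing

lemma aux_sum_single {n : ℕ} (v : Fin n → ℂ) :
    ∑ i : Fin n, Function.update (0 : Fin n → ℂ) i (v i) = v := by
  funext k
  simp [Finset.sum_apply, Function.update_apply]

lemma aux_key {n : ℕ} {M : Type*} [AddCommGroup M] [Module ℂ M]
    (v v' : Fin n → ℂ) (m : M) :
    ∑ i : Fin n, ∑ j : Fin n,
      (Matrix.single i j (1 : ℂ)).mulVec v' ⊗ₜ[ℂ]
        ((Matrix.single j i (1 : ℂ)).mulVec v ⊗ₜ[ℂ] m) =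
      v ⊗ₜ[ℂ] (v' ⊗ₜ[ℂ] m) := by
  have e1 : ∀ (c : ℂ) (i : Fin n), Function.update (0 : Fin n → ℂ) i c =
      c • Function.update (0 : Fin n → ℂ) i 1 := by
    intro c i; funext k; simp [Function.update_apply]
  simp only [Matrix.single_mulVec, one_mul]
  calc ∑ i : Fin n, ∑ j : Fin n,
        Function.update (0 : Fin n → ℂ) i (v' j) ⊗ₜ[ℂ]
          (Function.update (0 : Fin n → ℂ) j (v i) ⊗ₜ[ℂ] m)
      = ∑ i : Fin n, ∑ j : Fin n, v i • (Function.update (0 : Fin n → ℂ) i 1 ⊗ₜ[ℂ]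
          (Function.update (0 : Fin n → ℂ) j (v' j) ⊗ₜ[ℂ] m)) := by
        refine Finset.sum_congr rfl fun i _ => Finset.sum_congr rfl fun j _ => ?_
        rw [e1 (v' j) i, e1 (v i) j, e1 (v' j) j]
        simp only [← TensorProduct.smul_tmul', TensorProduct.tmul_smul, smul_smul]
    _ = ∑ i : Fin n, v i • (Function.update (0 : Fin n → ℂ) i 1 ⊗ₜ[ℂ]
          ((∑ j : Fin n, Function.update (0 : Fin n → ℂ) j (v' j)) ⊗ₜ[ℂ] m)) := by
        simp_rw [← Finset.smul_sum, ← TensorProduct.tmul_sum, ← TensorProduct.sum_tmul]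
    _ = (∑ i : Fin n, Function.update (0 : Fin n → ℂ) i (v i)) ⊗ₜ[ℂ] (v' ⊗ₜ[ℂ] m) := by
        rw [aux_sum_single v', TensorProduct.sum_tmul]
        refine Finset.sum_congr rfl fun i _ => ?_
        rw [e1 (v i) i, TensorProduct.smul_tmul']
    _ = v ⊗ₜ[ℂ] (v' ⊗ₜ[ℂ] m) := by rw [aux_sum_single v]

/-- Let `𝔤 = 𝔤𝔩_n(ℂ)` with matrix units `e_{ij}`, `V = ℂ^n` its
natural module, and `M` a `𝔤`-module.  Let `X_M : V ⊗ M → V ⊗ M` be the operator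
`v ⊗ m ↦ ∑_{i,j} e_{ij}v ⊗ e_{ji}m`, let `X_{V⊗M}` be the corresponding operator for the
`𝔤`-module `V ⊗ M` (under the identification `V ⊗ (V ⊗ M) = V ⊗ V ⊗ M`), and let
`T_M : V ⊗ V ⊗ M → V ⊗ V ⊗ M` be the flip of the two `V`-factors.  Then
`T_M ∘ (1_V ⊗ X_M) = X_{V⊗M} ∘ T_M - 1`. -/
theorem stmt12 (n : ℕ) (hn : 1 ≤ n) (M : Type*) [AddCommGroup M] [Module ℂ M]
    [LieRingModule (Matrix (Fin n) (Fin n) ℂ) M]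
    [LieModule ℂ (Matrix (Fin n) (Fin n) ℂ) M]
    (XM : TensorProduct ℂ (Fin n → ℂ) M →ₗ[ℂ] TensorProduct ℂ (Fin n → ℂ) M)
    (hXM : ∀ (v : Fin n → ℂ) (m : M), XM (v ⊗ₜ[ℂ] m) =
      ∑ i : Fin n, ∑ j : Fin n,
        (Matrix.single i j (1 : ℂ)).mulVec v ⊗ₜ[ℂ]
          ⁅Matrix.single j i (1 : ℂ), m⁆)
    (XVM : TensorProduct ℂ (Fin n → ℂ) (TensorProduct ℂ (Fin n → ℂ) M) →ₗ[ℂ]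
      TensorProduct ℂ (Fin n → ℂ) (TensorProduct ℂ (Fin n → ℂ) M))
    (hXVM : ∀ (v v' : Fin n → ℂ) (m : M), XVM (v ⊗ₜ[ℂ] (v' ⊗ₜ[ℂ] m)) =
      ∑ i : Fin n, ∑ j : Fin n,
        (Matrix.single i j (1 : ℂ)).mulVec v ⊗ₜ[ℂ]
          ((Matrix.single j i (1 : ℂ)).mulVec v' ⊗ₜ[ℂ] m +
            v' ⊗ₜ[ℂ] ⁅Matrix.single j i (1 : ℂ), m⁆))
    (TM : TensorProduct ℂ (Fin n → ℂ) (TensorProduct ℂ (Fin n → ℂ) M) →ₗ[ℂ]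
      TensorProduct ℂ (Fin n → ℂ) (TensorProduct ℂ (Fin n → ℂ) M))
    (hTM : ∀ (v v' : Fin n → ℂ) (m : M),
      TM (v ⊗ₜ[ℂ] (v' ⊗ₜ[ℂ] m)) = v' ⊗ₜ[ℂ] (v ⊗ₜ[ℂ] m)) :
    ∀ w : TensorProduct ℂ (Fin n → ℂ) (TensorProduct ℂ (Fin n → ℂ) M),
      TM (LinearMap.lTensor (Fin n → ℂ) XM w) = XVM (TM w) - w := by
  intro w
  induction w using TensorProduct.induction_on with
  | zero => simp
  | add x y hx hy =>
    simp only [map_add, hx, hy]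
    abel
  | tmul v t =>
    induction t using TensorProduct.induction_on with
    | zero => simp
    | add x y hx hy =>
      simp only [TensorProduct.tmul_add, map_add, hx, hy]
      abel
    | tmul v' m =>
      rw [LinearMap.lTensor_tmul, hXM, TensorProduct.tmul_sum, map_sum, hTM v v' m,
        hXVM]
      simp_rw [TensorProduct.tmul_sum, map_sum, hTM, TensorProduct.tmul_add]
      simp_rw [Finset.sum_add_distrib]
      rw [aux_key v v' m]
      abel
end

section
/- Two elements λ, μ ∈ ℤ^n have the same stabilizer in W_p (i.e., for every w ∈ 𝔖_n and every t ∈ L, w(λ) + t = λ if and only if w(μ) + t = μ) if and only if they are in the same orbit of the diagonal action of Y (i.e., there exists y ∈ Y with μ_i = y(λ_i) for all 1 ≤ i ≤ n). -/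
set_option linter.unusedSectionVars false

namespace Stmt15

theorem _root_.Equiv.Perm.inv_apply_self {α : Type*} (f : Equiv.Perm α) (x : α) : f⁻¹ (f x) = x :=
  f.symm_apply_apply x

theorem _root_.Equiv.Perm.apply_inv_self {α : Type*} (f : Equiv.Perm α) (x : α) : f (f⁻¹ x) = x :=
  f.apply_symm_apply x
variable (p : ℕ) [NeZero p]

/-- residue of an integer -/
abbrev res (m : ℤ) : ZMod p := (m : ZMod p)

lemma res_cast_val (a : ZMod p) : res p ((a.val : ℤ)) = a := by
  simp [res, ZMod.natCast_val]

lemma dvd_sub_val (m : ℤ) : (p:ℤ) ∣ m - ((res p m).val : ℤ) := by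
  rw [← ZMod.intCast_zmod_eq_zero_iff_dvd]; push_cast; simp [res, ZMod.natCast_val]

lemma res_add_p_mul (m k : ℤ) : res p (m + p * k) = res p m := by
  simp [res]

/-- translation part: m ↦ m + p * w (res m) -/
def tperm (w : ZMod p → ℤ) : Equiv.Perm ℤ where
  toFun m := m + p * w (res p m)
  invFun m := m - p * w (res p m)
  left_inv m := by
    have h : res p (m + p * w (res p m)) = res p m := by simp [res]
    simp [h]
  right_inv m := by
    have h : res p (m - p * w (res p m)) = res p m := by
      have : m - p * w (res p m) = m + p * (-(w (res p m))) := by ring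
      rw [this]; simp [res]
    simp [h]

lemma tperm_apply (w : ZMod p → ℤ) (m : ℤ) : tperm p w m = m + p * w (res p m) := rfl

/-- lift of a permutation of residues -/
def plift (π : Equiv.Perm (ZMod p)) : Equiv.Perm ℤ where
  toFun m := m - ((res p m).val : ℤ) + ((π (res p m)).val : ℤ)
  invFun m := m - ((res p m).val : ℤ) + ((π⁻¹ (res p m)).val : ℤ)
  left_inv m := by
    have h1 : res p (m - ((res p m).val : ℤ) + ((π (res p m)).val : ℤ)) = π (res p m) := by
      simp [res, ZMod.natCast_val]
    simp only [h1, Equiv.Perm.inv_apply_self]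
    have h2 : (m - ((res p m).val : ℤ) + ((π (res p m)).val : ℤ)) - ((π (res p m)).val : ℤ)
        + ((res p m).val : ℤ) = m := by ring
    exact h2
  right_inv m := by
    have h1 : res p (m - ((res p m).val : ℤ) + ((π⁻¹ (res p m)).val : ℤ)) = π⁻¹ (res p m) := by
      simp [res, ZMod.natCast_val]
    simp only [h1, Equiv.Perm.apply_inv_self]
    ring

lemma plift_apply (π : Equiv.Perm (ZMod p)) (m : ℤ) :
    plift p π m = m - ((res p m).val : ℤ) + ((π (res p m)).val : ℤ) := rfl

lemma res_plift (π : Equiv.Perm (ZMod p)) (m : ℤ) : res p (plift p π m) = π (res p m) := by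
  simp [plift_apply, res, ZMod.natCast_val]

lemma res_tperm (w : ZMod p → ℤ) (m : ℤ) : res p (tperm p w m) = res p m := by
  simp [tperm_apply, res]


def Comm (y : Equiv.Perm ℤ) : Prop := ∀ m : ℤ, y (m + p) = y m + p

variable {p}

lemma Comm.mul {y z : Equiv.Perm ℤ} (hy : Comm p y) (hz : Comm p z) : Comm p (y * z) := by
  intro m
  simp only [Equiv.Perm.mul_apply, hz m, hy (z m)]

lemma Comm.inv {y : Equiv.Perm ℤ} (hy : Comm p y) : Comm p y⁻¹ := by
  intro m
  have := hy (y⁻¹ m)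
  simp only [Equiv.Perm.apply_inv_self] at this
  rw [← this, Equiv.Perm.inv_apply_self]

lemma Comm.one : Comm p 1 := fun m => rfl

lemma Comm.zmul {y : Equiv.Perm ℤ} (hy : Comm p y) (m : ℤ) (k : ℤ) :
    y (m + p * k) = y m + p * k := by
  induction k using Int.induction_on with
  | zero => simp
  | succ k ih =>
      have : m + p * (k + 1) = (m + p * k) + p := by ring
      rw [this, hy, ih]; ring
  | pred k ih =>
      have h2 : (m + (p:ℤ) * (-k - 1)) + p = m + p * (-k) := by ring
      have := hy (m + (p:ℤ) * (-k - 1))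
      rw [h2, ih] at this
      have := this.symm
      omega

lemma Comm.ext {y z : Equiv.Perm ℤ} (hy : Comm p y) (hz : Comm p z)
    (h : ∀ a : ZMod p, y (a.val : ℤ) = z (a.val : ℤ)) : y = z := by
  ext m
  obtain ⟨k, hk⟩ : (p:ℤ) ∣ m - ((res p m).val : ℤ) := by
    rw [← ZMod.intCast_zmod_eq_zero_iff_dvd]; push_cast; simp [res, ZMod.natCast_val]
  have hm : m = ((res p m).val : ℤ) + p * k := by omega
  rw [hm, hy.zmul, hz.zmul, h]


lemma comm_tperm (w : ZMod p → ℤ) : Comm p (tperm p w) := by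
  intro m
  rw [tperm_apply, tperm_apply]
  have : res p (m + p) = res p m := by simp [res]
  rw [this]; ring

lemma comm_plift (π : Equiv.Perm (ZMod p)) : Comm p (plift p π) := by
  intro m
  rw [plift_apply, plift_apply]
  have : res p (m + p) = res p m := by simp [res]
  rw [this]; ring

lemma plift_mul (π ρ : Equiv.Perm (ZMod p)) :
    plift p (π * ρ) = plift p π * plift p ρ := by
  ext m
  rw [Equiv.Perm.mul_apply, plift_apply p (π * ρ) m, plift_apply p π (plift p ρ m), res_plift,
    plift_apply p ρ m]
  simp only [Equiv.Perm.mul_apply]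
  ring

lemma plift_one : plift p (1 : Equiv.Perm (ZMod p)) = 1 := by
  ext m
  rw [plift_apply]
  simp

lemma plift_inv (π : Equiv.Perm (ZMod p)) : plift p π⁻¹ = (plift p π)⁻¹ := by
  rw [eq_inv_iff_mul_eq_one, ← plift_mul, inv_mul_cancel, plift_one]

lemma tperm_add (v w : ZMod p → ℤ) : tperm p (v + w) = tperm p v * tperm p w := by
  ext m
  rw [Equiv.Perm.mul_apply, tperm_apply p (v + w) m, tperm_apply p v (tperm p w m), res_tperm,
    tperm_apply p w m]
  simp only [Pi.add_apply]
  ring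

lemma tperm_zero : tperm p (0 : ZMod p → ℤ) = 1 := by
  ext m; rw [tperm_apply]; simp

lemma tperm_neg (w : ZMod p → ℤ) : tperm p (-w) = (tperm p w)⁻¹ := by
  rw [eq_inv_iff_mul_eq_one, ← tperm_add, neg_add_cancel, tperm_zero]

lemma plift_conj_tperm (π : Equiv.Perm (ZMod p)) (w : ZMod p → ℤ) :
    plift p π * tperm p w * (plift p π)⁻¹ = tperm p (fun a => w (π⁻¹ a)) := by
  rw [← plift_inv]
  ext m
  simp only [Equiv.Perm.mul_apply]
  rw [plift_apply p π (tperm p w (plift p π⁻¹ m)), res_tperm, res_plift,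
    tperm_apply p w (plift p π⁻¹ m), res_plift, plift_apply p π⁻¹ m, tperm_apply p (fun a => w (π⁻¹ a)) m]
  simp only [Equiv.Perm.apply_inv_self]
  ring


lemma val_pred {p : ℕ} [NeZero p] {A : ZMod p} (hA : A ≠ 0) : A.val = (A - 1).val + 1 := by
  have h1 : 1 ≤ A.val := by
    rcases Nat.eq_zero_or_pos A.val with h0 | h
    · exact absurd ((ZMod.val_eq_zero A).mp h0) hA
    · exact h
  have h2 : A.val - 1 < p := by have := A.val_lt; omega
  have h3 : A - 1 = ((A.val - 1 : ℕ) : ZMod p) := by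
    have := ZMod.natCast_rightInverse A
    push_cast [h1]
    rw [this]
  rw [h3, ZMod.val_cast_of_lt h2]
  omega

lemma val_neg_one' {p : ℕ} (hp : 1 < p) : ((-1 : ZMod p)).val = p - 1 := by
  obtain ⟨q, rfl⟩ : ∃ q, p = q + 1 := ⟨p - 1, by omega⟩
  simpa using ZMod.val_neg_one q

lemma val_succ {p : ℕ} (hp : 1 < p) {A : ZMod p} (hA : A ≠ -1) : (A + 1).val = A.val + 1 := by
  have : NeZero p := ⟨by omega⟩
  have h1 : A.val ≠ p - 1 := by
    intro h
    apply hA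
    have := ZMod.natCast_rightInverse A
    rw [← this, h]
    have h2 : ((p - 1 : ℕ) : ZMod p) = ((-1 : ZMod p).val : ZMod p) := by rw [val_neg_one' hp]
    rw [h2, ZMod.natCast_rightInverse]
  have h2 : A.val + 1 < p := by have := A.val_lt; omega
  have h3 : A + 1 = ((A.val + 1 : ℕ) : ZMod p) := by
    have := ZMod.natCast_rightInverse A
    push_cast
    rw [this]
  rw [h3, ZMod.val_cast_of_lt h2]

section Main
variable {p : ℕ} [NeZero p]

lemma sigma_eq_plift (hp : 1 < p) (σ : Fin p → Equiv.Perm ℤ)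
    (hσ : ∀ (a : Fin p) (m : ℤ), σ a m =
      if (m : ZMod p) = ((a : ℕ) : ZMod p) - 1 then m + 1
      else if (m : ZMod p) = ((a : ℕ) : ZMod p) then m - 1
      else m)
    (a : Fin p) (hA : ((a : ℕ) : ZMod p) ≠ 0) :
    σ a = plift p (Equiv.swap (((a : ℕ) : ZMod p) - 1) ((a : ℕ) : ZMod p)) := by
  apply Equiv.ext; intro m
  rw [hσ, plift_apply]
  set A : ZMod p := ((a : ℕ) : ZMod p) with hAdef
  have hval : A.val = (A - 1).val + 1 := val_pred hA
  have hne : A - 1 ≠ A := by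
    intro h
    have h1 : (1 : ZMod p) = 0 := by linear_combination -h
    have h2 : (1 : ZMod p).val = 1 := by simpa using ZMod.val_cast_of_lt hp
    rw [h1] at h2
    simp at h2
  by_cases h1 : res p m = A - 1
  · simp only [res] at h1
    rw [if_pos h1]
    show m + 1 = m - ((res p m).val : ℤ) + (((Equiv.swap (A-1) A) (res p m)).val : ℤ)
    simp only [res] at *
    rw [h1, Equiv.swap_apply_left]
    have hc : (A.val : ℤ) = ((A-1).val : ℤ) + 1 := by exact_mod_cast hval
    omega
  · by_cases h2 : res p m = A
    · simp only [res] at h1 h2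
      rw [if_neg h1, if_pos h2]
      show m - 1 = m - ((res p m).val : ℤ) + (((Equiv.swap (A-1) A) (res p m)).val : ℤ)
      simp only [res]
      rw [h2, Equiv.swap_apply_right]
      have hc : (A.val : ℤ) = ((A-1).val : ℤ) + 1 := by exact_mod_cast hval
      omega
    · simp only [res] at h1 h2
      rw [if_neg h1, if_neg h2]
      show m = m - ((res p m).val : ℤ) + (((Equiv.swap (A-1) A) (res p m)).val : ℤ)
      simp only [res]
      rw [Equiv.swap_apply_of_ne_of_ne h1 h2]
      ring

end Main

section Mem
variable {p : ℕ} [NeZero p] (G : Subgroup (Equiv.Perm ℤ))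

lemma swap_adj_mem (hp : 1 < p) (σ : Fin p → Equiv.Perm ℤ)
    (hσ : ∀ (a : Fin p) (m : ℤ), σ a m =
      if (m : ZMod p) = ((a : ℕ) : ZMod p) - 1 then m + 1
      else if (m : ZMod p) = ((a : ℕ) : ZMod p) then m - 1
      else m)
    (hσG : ∀ a, σ a ∈ G) (A : ZMod p) (hA : A ≠ 0) :
    plift p (Equiv.swap (A - 1) A) ∈ G := by
  have hplt : 0 < p := by omega
  let a : Fin p := ⟨A.val, A.val_lt⟩
  have hc : ((a : ℕ) : ZMod p) = A := ZMod.natCast_rightInverse A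
  have h := hσG a
  rwa [sigma_eq_plift hp σ hσ a (by rwa [hc]), hc] at h

lemma swap_chain_mem (hp : 1 < p) (σ : Fin p → Equiv.Perm ℤ)
    (hσ : ∀ (a : Fin p) (m : ℤ), σ a m =
      if (m : ZMod p) = ((a : ℕ) : ZMod p) - 1 then m + 1
      else if (m : ZMod p) = ((a : ℕ) : ZMod p) then m - 1
      else m)
    (hσG : ∀ a, σ a ∈ G) :
    ∀ (k b : ℕ), b + k < p → plift p (Equiv.swap (b : ZMod p) ((b + k : ℕ) : ZMod p)) ∈ G := by
  intro k
  induction k with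
  | zero =>
      intro b _
      simp only [Nat.add_zero, Equiv.swap_self]
      have : (Equiv.refl (ZMod p)) = (1 : Equiv.Perm (ZMod p)) := rfl
      rw [this, plift_one]
      exact one_mem G
  | succ k IH =>
      intro b hb
      have hadj : ∀ c : ℕ, c + 1 < p →
          plift p (Equiv.swap (c : ZMod p) ((c + 1 : ℕ) : ZMod p)) ∈ G := by
        intro c hc
        have hA : (((c + 1 : ℕ) : ZMod p)) ≠ 0 := by
          intro h
          have := ZMod.val_cast_of_lt hc
          rw [h] at this
          simp at this
        have h1 : (((c + 1 : ℕ) : ZMod p)) - 1 = (c : ZMod p) := by push_cast; ring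
        have := swap_adj_mem G hp σ hσ hσG ((c + 1 : ℕ) : ZMod p) hA
        rwa [h1] at this
      rcases Nat.eq_zero_or_pos k with hk | hk
      · subst hk
        exact hadj b hb
      · -- swap b (b+k+1) = swap (b+k) (b+k+1) * swap b (b+k) * swap (b+k) (b+k+1)
        have hx : (b : ZMod p) ≠ ((b + k : ℕ) : ZMod p) := by
          intro h
          have h1 := ZMod.val_cast_of_lt (show b < p by omega)
          have h2 := ZMod.val_cast_of_lt (show b + k < p by omega)
          rw [h] at h1
          omega
        have hxz : (b : ZMod p) ≠ ((b + (k + 1) : ℕ) : ZMod p) := by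
          intro h
          have h1 := ZMod.val_cast_of_lt (show b < p by omega)
          have h2 := ZMod.val_cast_of_lt (show b + (k + 1) < p by omega)
          rw [h] at h1
          omega
        have hid := Equiv.swap_mul_swap_mul_swap hx hxz
        have hmem1 : plift p (Equiv.swap ((b + k : ℕ) : ZMod p) ((b + (k + 1) : ℕ) : ZMod p)) ∈ G := by
          have := hadj (b + k) (by omega)
          have harw : ((b + k + 1 : ℕ) : ZMod p) = ((b + (k + 1) : ℕ) : ZMod p) := by push_cast; ring
          rwa [harw] at this
        have hmem2 : plift p (Equiv.swap (b : ZMod p) ((b + k : ℕ) : ZMod p)) ∈ G := IH b (by omega)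
        have : plift p (Equiv.swap (b : ZMod p) ((b + (k + 1) : ℕ) : ZMod p)) ∈ G := by
          rw [← Equiv.swap_comm, ← hid, plift_mul, plift_mul]
          exact mul_mem (mul_mem hmem1 hmem2) hmem1
        exact this

lemma swap_any_mem (hp : 1 < p) (σ : Fin p → Equiv.Perm ℤ)
    (hσ : ∀ (a : Fin p) (m : ℤ), σ a m =
      if (m : ZMod p) = ((a : ℕ) : ZMod p) - 1 then m + 1
      else if (m : ZMod p) = ((a : ℕ) : ZMod p) then m - 1
      else m)
    (hσG : ∀ a, σ a ∈ G) (A B : ZMod p) :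
    plift p (Equiv.swap A B) ∈ G := by
  rcases eq_or_ne A B with rfl | hAB
  · simp only [Equiv.swap_self]
    have : (Equiv.refl (ZMod p)) = (1 : Equiv.Perm (ZMod p)) := rfl
    rw [this, plift_one]
    exact one_mem G
  · have hvals : A.val ≠ B.val := by
      intro h
      apply hAB
      rw [← ZMod.natCast_rightInverse A, ← ZMod.natCast_rightInverse B, h]
    have hc : ∀ (X Y : ZMod p), X.val < Y.val → plift p (Equiv.swap X Y) ∈ G := by
      intro X Y hXY
      have := swap_chain_mem G hp σ hσ hσG (Y.val - X.val) X.val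
        (by have := Y.val_lt; omega)
      have h1 : ((X.val : ℕ) : ZMod p) = X := ZMod.natCast_rightInverse X
      have h2 : ((X.val + (Y.val - X.val) : ℕ) : ZMod p) = Y := by
        have : X.val + (Y.val - X.val) = Y.val := by omega
        rw [this]
        exact ZMod.natCast_rightInverse Y
      rwa [h1, h2] at this
    rcases Nat.lt_or_ge A.val B.val with h | h
    · exact hc A B h
    · rw [Equiv.swap_comm]
      exact hc B A (by omega)

lemma plift_mem (hp : 1 < p) (σ : Fin p → Equiv.Perm ℤ)
    (hσ : ∀ (a : Fin p) (m : ℤ), σ a m =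
      if (m : ZMod p) = ((a : ℕ) : ZMod p) - 1 then m + 1
      else if (m : ZMod p) = ((a : ℕ) : ZMod p) then m - 1
      else m)
    (hσG : ∀ a, σ a ∈ G) (π : Equiv.Perm (ZMod p)) :
    plift p π ∈ G := by
  let K : Subgroup (Equiv.Perm (ZMod p)) :=
    { carrier := {ρ | plift p ρ ∈ G}
      one_mem' := by simp only [Set.mem_setOf_eq, plift_one]; exact one_mem G
      mul_mem' := by
        intro x y hx hy
        simp only [Set.mem_setOf_eq, plift_mul] at *
        exact mul_mem hx hy
      inv_mem' := by
        intro x hx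
        simp only [Set.mem_setOf_eq, ← plift_inv] at *
        rw [plift_inv]
        exact inv_mem hx }
  have hK : π ∈ K := by
    have htop : π ∈ Subgroup.closure {ρ : Equiv.Perm (ZMod p) | ρ.IsSwap} := by
      rw [Equiv.Perm.closure_isSwap]
      trivial
    refine Subgroup.closure_le K |>.mpr ?_ htop
    rintro ρ ⟨x, y, hxy, rfl⟩
    exact swap_any_mem G hp σ hσ hσG x y
  exact hK

end Mem

section Mem2
variable {p : ℕ} [NeZero p] (G : Subgroup (Equiv.Perm ℤ))

lemma cyc_tperm_eq (hp : 1 < p) (d : Equiv.Perm ℤ) (hd : ∀ m : ℤ, d m = m + 1) :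
    plift p (Equiv.addRight (1 : ZMod p)) * tperm p (Pi.single (-1 : ZMod p) (1 : ℤ)) = d := by
  apply Equiv.ext
  intro m
  rw [Equiv.Perm.mul_apply, hd, plift_apply, res_tperm, tperm_apply]
  have hadd : ∀ x : ZMod p, (Equiv.addRight (1 : ZMod p)) x = x + 1 := fun x => rfl
  rw [hadd]
  by_cases h : res p m = -1
  · rw [h]
    simp only [Pi.single_eq_same, neg_add_cancel]
    rw [val_neg_one' hp]
    have : (0 : ZMod p).val = 0 := ZMod.val_zero
    rw [this]
    push_cast
    omega
  · rw [Pi.single_eq_of_ne h]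
    rw [val_succ hp h]
    push_cast
    ring

lemma single_neg_one_mem (hp : 1 < p) (d : Equiv.Perm ℤ) (hd : ∀ m : ℤ, d m = m + 1)
    (hdG : d ∈ G) (σ : Fin p → Equiv.Perm ℤ)
    (hσ : ∀ (a : Fin p) (m : ℤ), σ a m =
      if (m : ZMod p) = ((a : ℕ) : ZMod p) - 1 then m + 1
      else if (m : ZMod p) = ((a : ℕ) : ZMod p) then m - 1
      else m)
    (hσG : ∀ a, σ a ∈ G) :
    tperm p (Pi.single (-1 : ZMod p) (1 : ℤ)) ∈ G := by
  have h := cyc_tperm_eq hp d hd (p := p)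
  have h2 : tperm p (Pi.single (-1 : ZMod p) (1 : ℤ)) =
      (plift p (Equiv.addRight (1 : ZMod p)))⁻¹ * d := by
    rw [← h]; group
  rw [h2]
  exact mul_mem (inv_mem (plift_mem G hp σ hσ hσG _)) hdG

lemma single_one_mem (hp : 1 < p) (d : Equiv.Perm ℤ) (hd : ∀ m : ℤ, d m = m + 1)
    (hdG : d ∈ G) (σ : Fin p → Equiv.Perm ℤ)
    (hσ : ∀ (a : Fin p) (m : ℤ), σ a m =
      if (m : ZMod p) = ((a : ℕ) : ZMod p) - 1 then m + 1
      else if (m : ZMod p) = ((a : ℕ) : ZMod p) then m - 1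
      else m)
    (hσG : ∀ a, σ a ∈ G) (b : ZMod p) :
    tperm p (Pi.single b (1 : ℤ)) ∈ G := by
  have hconj := plift_conj_tperm (Equiv.swap b (-1 : ZMod p)) (Pi.single (-1 : ZMod p) (1 : ℤ))
  have hfun : (fun a => (Pi.single (-1 : ZMod p) (1 : ℤ) : ZMod p → ℤ) ((Equiv.swap b (-1 : ZMod p))⁻¹ a)) =
      (Pi.single b (1 : ℤ) : ZMod p → ℤ) := by
    funext a
    rw [Equiv.swap_inv]
    by_cases hab : a = b
    · subst hab
      rw [Equiv.swap_apply_left, Pi.single_eq_same, Pi.single_eq_same]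
    · rw [Pi.single_eq_of_ne hab]
      have : Equiv.swap b (-1 : ZMod p) a ≠ -1 := by
        intro h
        apply hab
        have := congrArg (Equiv.swap b (-1 : ZMod p)) h
        rw [Equiv.swap_apply_self, Equiv.swap_apply_right] at this
        exact this
      rw [Pi.single_eq_of_ne this]
  rw [hfun] at hconj
  rw [← hconj]
  exact mul_mem (mul_mem (plift_mem G hp σ hσ hσG _)
    (single_neg_one_mem G hp d hd hdG σ hσ hσG)) (inv_mem (plift_mem G hp σ hσ hσG _))

lemma tperm_mem (hp : 1 < p) (d : Equiv.Perm ℤ) (hd : ∀ m : ℤ, d m = m + 1)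
    (hdG : d ∈ G) (σ : Fin p → Equiv.Perm ℤ)
    (hσ : ∀ (a : Fin p) (m : ℤ), σ a m =
      if (m : ZMod p) = ((a : ℕ) : ZMod p) - 1 then m + 1
      else if (m : ZMod p) = ((a : ℕ) : ZMod p) then m - 1
      else m)
    (hσG : ∀ a, σ a ∈ G) (w : ZMod p → ℤ) :
    tperm p w ∈ G := by
  let W : AddSubgroup (ZMod p → ℤ) :=
    { carrier := {v | tperm p v ∈ G}
      zero_mem' := by simp only [Set.mem_setOf_eq, tperm_zero]; exact one_mem G
      add_mem' := by
        intro x y hx hy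
        simp only [Set.mem_setOf_eq, tperm_add] at *
        exact mul_mem hx hy
      neg_mem' := by
        intro x hx
        simp only [Set.mem_setOf_eq, tperm_neg] at *
        exact inv_mem hx }
  have : w ∈ W := by
    have hw : w = ∑ b : ZMod p, Pi.single b (w b) := (Finset.univ_sum_single w).symm
    rw [hw]
    apply AddSubgroup.sum_mem
    intro b _
    have hsingle : (Pi.single b (w b) : ZMod p → ℤ) = (w b) • (Pi.single b (1 : ℤ) : ZMod p → ℤ) := by
      funext a
      by_cases hab : a = b
      · subst hab; simp
      · simp [Pi.single_eq_of_ne hab]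
    rw [hsingle]
    exact AddSubgroup.zsmul_mem W (single_one_mem G hp d hd hdG σ hσ hσG b) (w b)
  exact this

end Mem2

section Rev
variable {p : ℕ} [NeZero p]

lemma comm_of_mem (d : Equiv.Perm ℤ) (hd : ∀ m : ℤ, d m = m + 1)
    (σ : Fin p → Equiv.Perm ℤ)
    (hσ : ∀ (a : Fin p) (m : ℤ), σ a m =
      if (m : ZMod p) = ((a : ℕ) : ZMod p) - 1 then m + 1
      else if (m : ZMod p) = ((a : ℕ) : ZMod p) then m - 1
      else m)
    {y : Equiv.Perm ℤ} (hy : y ∈ Subgroup.closure ({d} ∪ Set.range σ)) :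
    Comm p y := by
  induction hy using Subgroup.closure_induction with
  | mem x hx =>
      rcases hx with hx | ⟨a, rfl⟩
      · rw [Set.mem_singleton_iff] at hx
        subst hx
        intro m
        rw [hd, hd]
        ring
      · intro m
        rw [hσ, hσ]
        have hres : ((m + (p:ℤ) : ℤ) : ZMod p) = ((m : ℤ) : ZMod p) := by push_cast; simp
        rw [hres]
        split_ifs <;> omega
  | one => exact Comm.one
  | mul x y' hx hy' ihx ihy => exact ihx.mul ihy
  | inv x hx ihx => exact ihx.inv

end Rev

end Stmt15

open Stmt15

/-- Let `W_p = 𝔖_n ⋉ L` act on `ℤ^n`, where `L` consists of the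
vectors with entries divisible by `p` summing to `0`, and let `Y` be the group of
permutations of `ℤ` generated by `d : m ↦ m + 1` and the involutions `σ_a`
(`a = 0,…,p-1`) exchanging `m ↦ m+1` for `m ≡ a-1 (mod p)` and `m ↦ m-1` for
`m ≡ a (mod p)`.  Then `λ` and `μ` have the same stabilizer in `W_p` iff they lie in
the same orbit of the diagonal action of `Y`. -/
theorem stmt15 (p n : ℕ) (hp : p.Prime) (hn : 1 ≤ n)
    (d : Equiv.Perm ℤ) (hd : ∀ m : ℤ, d m = m + 1)
    (σ : Fin p → Equiv.Perm ℤ)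
    (hσ : ∀ (a : Fin p) (m : ℤ), σ a m =
      if (m : ZMod p) = ((a : ℕ) : ZMod p) - 1 then m + 1
      else if (m : ZMod p) = ((a : ℕ) : ZMod p) then m - 1
      else m)
    (lam mu : Fin n → ℤ) :
    (∀ (w : Equiv.Perm (Fin n)) (t : Fin n → ℤ),
        (∀ i, (p : ℤ) ∣ t i) → (∑ i, t i = 0) →
        ((∀ i, lam (w⁻¹ i) + t i = lam i) ↔ (∀ i, mu (w⁻¹ i) + t i = mu i))) ↔
      ∃ y ∈ Subgroup.closure ({d} ∪ Set.range σ), ∀ i, mu i = y (lam i) := by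
  have hp2 : 1 < p := hp.one_lt
  haveI : NeZero p := ⟨hp.pos.ne'⟩
  constructor
  · intro hst
    classical
    have hdG : d ∈ Subgroup.closure ({d} ∪ Set.range σ) :=
      Subgroup.subset_closure (Set.mem_union_left _ rfl)
    have hσG : ∀ a, σ a ∈ Subgroup.closure ({d} ∪ Set.range σ) :=
      fun a => Subgroup.subset_closure (Set.mem_union_right _ ⟨a, rfl⟩)
    -- Key fact A : equal lam-residues force equal differences
    have keyA : ∀ i j, res p (lam i) = res p (lam j) → mu j + (lam i - lam j) = mu i := by
      intro i j hij
      rcases eq_or_ne i j with rfl | hne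
      · ring
      · have hdvdt : ∀ k, (p:ℤ) ∣ lam k - lam (Equiv.swap i j k) := by
          intro k
          rcases eq_or_ne k i with rfl | hki
          · rw [Equiv.swap_apply_left, ← ZMod.intCast_zmod_eq_zero_iff_dvd]
            push_cast
            rw [sub_eq_zero]
            exact hij
          rcases eq_or_ne k j with rfl | hkj
          · rw [Equiv.swap_apply_right, ← ZMod.intCast_zmod_eq_zero_iff_dvd]
            push_cast
            rw [sub_eq_zero]
            exact hij.symm
          · rw [Equiv.swap_apply_of_ne_of_ne hki hkj, sub_self]
            exact dvd_zero _
        have hsum : ∑ k, (lam k - lam (Equiv.swap i j k)) = 0 := by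
          rw [Finset.sum_sub_distrib, Equiv.sum_comp (Equiv.swap i j) lam, sub_self]
        have hiff := hst (Equiv.swap i j) (fun k => lam k - lam (Equiv.swap i j k)) hdvdt hsum
        have hlam : ∀ k, lam ((Equiv.swap i j)⁻¹ k) + (lam k - lam (Equiv.swap i j k)) = lam k := by
          intro k
          rw [Equiv.swap_inv]
          ring
        have hmu := hiff.mp hlam i
        simp only [Equiv.swap_inv, Equiv.swap_apply_left] at hmu
        omega
    -- Key fact B : equal mu-residues force relation on lam
    have keyB : ∀ i j, res p (mu i) = res p (mu j) → lam j + (mu i - mu j) = lam i := by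
      intro i j hij
      rcases eq_or_ne i j with rfl | hne
      · ring
      · have hdvdt : ∀ k, (p:ℤ) ∣ mu k - mu (Equiv.swap i j k) := by
          intro k
          rcases eq_or_ne k i with rfl | hki
          · rw [Equiv.swap_apply_left, ← ZMod.intCast_zmod_eq_zero_iff_dvd]
            push_cast
            rw [sub_eq_zero]
            exact hij
          rcases eq_or_ne k j with rfl | hkj
          · rw [Equiv.swap_apply_right, ← ZMod.intCast_zmod_eq_zero_iff_dvd]
            push_cast
            rw [sub_eq_zero]
            exact hij.symm
          · rw [Equiv.swap_apply_of_ne_of_ne hki hkj, sub_self]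
            exact dvd_zero _
        have hsum : ∑ k, (mu k - mu (Equiv.swap i j k)) = 0 := by
          rw [Finset.sum_sub_distrib, Equiv.sum_comp (Equiv.swap i j) mu, sub_self]
        have hiff := hst (Equiv.swap i j) (fun k => mu k - mu (Equiv.swap i j k)) hdvdt hsum
        have hmu : ∀ k, mu ((Equiv.swap i j)⁻¹ k) + (mu k - mu (Equiv.swap i j k)) = mu k := by
          intro k
          rw [Equiv.swap_inv]
          ring
        have hlam := hiff.mpr hmu i
        simp only [Equiv.swap_inv, Equiv.swap_apply_left] at hlam
        omega
    have keyDiff : ∀ i j, res p (lam i) = res p (lam j) → mu i - lam i = mu j - lam j := by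
      intro i j h
      have := keyA i j h
      omega
    have keyRes : ∀ i j, res p (lam i) = res p (lam j) → res p (mu i) = res p (mu j) := by
      intro i j h
      have h1 := keyA i j h
      obtain ⟨k, hk⟩ : (p:ℤ) ∣ lam i - lam j := by
        rw [← ZMod.intCast_zmod_eq_zero_iff_dvd]
        push_cast
        rw [sub_eq_zero]
        exact h
      have h2 : mu i - mu j = (p:ℤ) * k := by omega
      have : ((mu i - mu j : ℤ) : ZMod p) = 0 := by
        rw [h2]
        push_cast
        simp
      rw [← sub_eq_zero]
      push_cast at this ⊢
      exact this
    have keyBack : ∀ i j, res p (mu i) = res p (mu j) → res p (lam i) = res p (lam j) := by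
      intro i j h
      have h1 := keyB i j h
      obtain ⟨k, hk⟩ : (p:ℤ) ∣ mu i - mu j := by
        rw [← ZMod.intCast_zmod_eq_zero_iff_dvd]
        push_cast
        rw [sub_eq_zero]
        exact h
      have h2 : lam i - lam j = (p:ℤ) * k := by omega
      have : ((lam i - lam j : ℤ) : ZMod p) = 0 := by
        rw [h2]
        push_cast
        simp
      rw [← sub_eq_zero]
      push_cast at this ⊢
      exact this
    -- construct the residue permutation
    set S : Finset (ZMod p) := Finset.image (fun i => res p (lam i)) Finset.univ with hSdef
    set T : Finset (ZMod p) := Finset.image (fun i => res p (mu i)) Finset.univ with hTdef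
    have hmemS : ∀ {a : ZMod p}, a ∈ S ↔ ∃ i, res p (lam i) = a := by
      intro a
      simp [hSdef]
    have hmemT : ∀ {b : ZMod p}, b ∈ T ↔ ∃ i, res p (mu i) = b := by
      intro b
      simp [hTdef]
    set F0 : ZMod p → ZMod p :=
      fun a => if h : ∃ i, res p (lam i) = a then res p (mu h.choose) else a with hF0def
    have hF0 : ∀ i, F0 (res p (lam i)) = res p (mu i) := by
      intro i
      have h : ∃ j, res p (lam j) = res p (lam i) := ⟨i, rfl⟩
      simp only [hF0def, dif_pos h]
      exact keyRes h.choose i h.choose_spec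
    have hF0T : ∀ a ∈ S, F0 a ∈ T := by
      intro a ha
      obtain ⟨i, rfl⟩ := hmemS.mp ha
      rw [hF0 i]
      exact hmemT.mpr ⟨i, rfl⟩
    have hF0inj : ∀ a ∈ S, ∀ b ∈ S, F0 a = F0 b → a = b := by
      intro a ha b hb hab
      obtain ⟨i, rfl⟩ := hmemS.mp ha
      obtain ⟨j, rfl⟩ := hmemS.mp hb
      rw [hF0 i, hF0 j] at hab
      exact keyBack i j hab
    have hcard : S.card = T.card := by
      apply Finset.card_bij (fun a _ => F0 a) hF0T hF0inj
      intro b hb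
      obtain ⟨i, rfl⟩ := hmemT.mp hb
      exact ⟨res p (lam i), hmemS.mpr ⟨i, rfl⟩, hF0 i⟩
    have hcard_compl : (Sᶜ).card = (Tᶜ).card := by
      rw [Finset.card_compl, Finset.card_compl, hcard]
    set e : {x // x ∈ Sᶜ} ≃ {x // x ∈ Tᶜ} := Finset.equivOfCardEq hcard_compl with hedef
    set π0 : ZMod p → ZMod p :=
      fun a => if h : a ∈ S then F0 a else (e ⟨a, Finset.mem_compl.mpr h⟩ : ZMod p) with hπ0def
    have hπ0inj : Function.Injective π0 := by
      intro a b hab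
      by_cases ha : a ∈ S <;> by_cases hb : b ∈ S
      · rw [hπ0def] at hab
        simp only [dif_pos ha, dif_pos hb] at hab
        exact hF0inj a ha b hb hab
      · exfalso
        rw [hπ0def] at hab
        simp only [dif_pos ha, dif_neg hb] at hab
        have h1 : F0 a ∈ T := hF0T a ha
        have h2 := (e ⟨b, Finset.mem_compl.mpr hb⟩).2
        rw [← hab] at h2
        exact (Finset.mem_compl.mp h2) h1
      · exfalso
        rw [hπ0def] at hab
        simp only [dif_neg ha, dif_pos hb] at hab
        have h1 : F0 b ∈ T := hF0T b hb
        have h2 := (e ⟨a, Finset.mem_compl.mpr ha⟩).2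
        rw [hab] at h2
        exact (Finset.mem_compl.mp h2) h1
      · rw [hπ0def] at hab
        simp only [dif_neg ha, dif_neg hb] at hab
        have := e.injective (Subtype.ext hab)
        exact congrArg Subtype.val this
    set π : Equiv.Perm (ZMod p) :=
      Equiv.ofBijective π0 (Finite.injective_iff_bijective.mp hπ0inj) with hπdef
    have hπ : ∀ i, π (res p (lam i)) = res p (mu i) := by
      intro i
      show π0 (res p (lam i)) = res p (mu i)
      have hs : res p (lam i) ∈ S := hmemS.mpr ⟨i, rfl⟩
      rw [hπ0def]
      simp only [dif_pos hs]
      exact hF0 i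
    -- the translation vector
    set wv : ZMod p → ℤ := fun b => if h : ∃ i, res p (mu i) = b then
        (mu h.choose - (b.val : ℤ)) / p - (lam h.choose - ((res p (lam h.choose)).val : ℤ)) / p
      else 0 with hwvdef
    have hwv : ∀ i, (p:ℤ) * wv (res p (mu i)) =
        (mu i - ((res p (mu i)).val : ℤ)) - (lam i - ((res p (lam i)).val : ℤ)) := by
      intro i
      have h : ∃ j, res p (mu j) = res p (mu i) := ⟨i, rfl⟩
      rw [hwvdef]
      simp only [dif_pos h]
      have hj : res p (mu h.choose) = res p (mu i) := h.choose_spec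
      have hdvd1 : (p:ℤ) ∣ mu h.choose - ((res p (mu i)).val : ℤ) := by
        have hx := dvd_sub_val p (mu h.choose)
        rwa [hj] at hx
      have hdvd2 : (p:ℤ) ∣ lam h.choose - ((res p (lam h.choose)).val : ℤ) :=
        dvd_sub_val p (lam h.choose)
      rw [mul_sub, Int.mul_ediv_cancel' hdvd1, Int.mul_ediv_cancel' hdvd2]
      have hlr_eq : res p (lam h.choose) = res p (lam i) := keyBack h.choose i hj
      have hdiff : mu h.choose - lam h.choose = mu i - lam i := keyDiff h.choose i hlr_eq
      rw [hlr_eq]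
      omega
    refine ⟨tperm p wv * plift p π, mul_mem (tperm_mem _ hp2 d hd hdG σ hσ hσG wv)
      (plift_mem _ hp2 σ hσ hσG π), ?_⟩
    intro i
    rw [Equiv.Perm.mul_apply, tperm_apply, res_plift, plift_apply, hπ i]
    have := hwv i
    omega
  · rintro ⟨y, hyH, hy⟩ w t hdvd hsum
    have hcy : Comm p y := comm_of_mem d hd σ hσ hyH
    have hcyi : Comm p y⁻¹ := hcy.inv
    constructor
    · intro hfix i
      obtain ⟨k, hk⟩ := hdvd i
      have hf := hfix i
      have h1 : lam (w⁻¹ i) = lam i + (p : ℤ) * (-k) := by rw [mul_neg]; omega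
      rw [hy, hy, h1, hcy.zmul, mul_neg]
      omega
    · intro hfix i
      obtain ⟨k, hk⟩ := hdvd i
      have hf := hfix i
      have h1 : mu (w⁻¹ i) = mu i + (p : ℤ) * (-k) := by rw [mul_neg]; omega
      have h2 : ∀ j, lam j = y⁻¹ (mu j) := by intro j; rw [hy j]; simp
      rw [h2, h2, h1, hcyi.zmul, mul_neg]
      omega
end
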